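/- arXiv:1509.02613 — 13 statements merged into one kernel-verified Lean document; each statement's English description precedes it below -/
import Mathlib

section
/- Let A : ℕ → ℕ be a sequence satisfying, for all n > c, the nested recurrence A(n) = Σ_{i=1}^k A(n - s_i - Σ_{j=1}^{p_i} A(n - a_{ij})), where all arguments appearing are positive, k ≥ 2, all p_i ≥ 1, s_i ≥ 0, and a_{ij} ≥ 1. If the limit L = lim_{n→∞} A(n)/n exists and is nonzero, then L = (k-1)/(p_1 + p_2 + ... + p_k). -/
/-!
Write `m_i(n) = n - s_i - Σ_j A(n - a_{ij})` for the outer arguments. Since `A(n) ~ L n`, each inner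
term is `~ L n`, and as the subtraction never truncates, `m_i(n) / n → 1 - p_i L`, a limit `≥ 0`.
Composing, `A(m_i(n)) / n → L (1 - p_i L)`: if `1 - p_i L > 0` then `m_i(n) → ∞`, and if it
is zero the linear bound `|A(m)| ≤ M m + |A(0)|` squeezes the quotient to `0`. Dividing the
recurrence by `n` gives `L = Σ_i L (1 - p_i L) = k L - L² Σ_i p_i`, and cancelling `L ≠ 0` gives
`L Σ_i p_i = k - 1`.
-/

open Filter Finset Topology

section RatioLimits

variable {f : ℕ → ℝ} {L : ℝ}

lemma exists_abs_le_mul_add_of_tendsto_div (hf : Tendsto (fun n => f n / n) atTop (𝓝 L)) :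
    ∃ M, ∀ m : ℕ, |f m| ≤ M * m + |f 0| := by
  obtain ⟨M, hM⟩ := hf.abs.bddAbove_range
  refine ⟨M, fun m => ?_⟩
  rcases Nat.eq_zero_or_pos m with rfl | hm
  · simp
  have hm' : (0 : ℝ) < m := Nat.cast_pos.mpr hm
  calc |f m| = |f m / m| * m := by rw [abs_div, Nat.abs_cast, div_mul_cancel₀ _ hm'.ne']
    _ ≤ M * m := mul_le_mul_of_nonneg_right (hM ⟨m, rfl⟩) hm'.le
    _ ≤ M * m + |f 0| := le_add_of_nonneg_right (abs_nonneg _)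

lemma tendsto_comp_div_of_tendsto_div_zero {g : ℕ → ℕ}
    (hf : Tendsto (fun n => f n / n) atTop (𝓝 L))
    (hg : Tendsto (fun n => (g n : ℝ) / n) atTop (𝓝 0)) :
    Tendsto (fun n => f (g n) / n) atTop (𝓝 0) := by
  obtain ⟨M, hM⟩ := exists_abs_le_mul_add_of_tendsto_div hf
  have hbound : Tendsto (fun n : ℕ => M * ((g n : ℝ) / n) + |f 0| / n) atTop (𝓝 0) := by
    simpa using (hg.const_mul M).add (tendsto_const_div_atTop_nhds_zero_nat |f 0|)
  refine squeeze_zero_norm (fun n => ?_) hbound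
  rw [Real.norm_eq_abs, abs_div, Nat.abs_cast, mul_div_assoc', ← add_div]
  exact div_le_div_of_nonneg_right (hM _) n.cast_nonneg

lemma tendsto_atTop_of_tendsto_div_pos {g : ℕ → ℕ} {t : ℝ}
    (hg : Tendsto (fun n => (g n : ℝ) / n) atTop (𝓝 t)) (ht : 0 < t) :
    Tendsto g atTop atTop := by
  rw [← tendsto_natCast_atTop_iff (R := ℝ)]
  refine (Tendsto.pos_mul_atTop ht hg tendsto_natCast_atTop_atTop).congr' ?_
  filter_upwards [eventually_gt_atTop 0] with n hn
  exact div_mul_cancel₀ _ (Nat.cast_ne_zero.mpr hn.ne')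

lemma tendsto_comp_div_of_tendsto_div {g : ℕ → ℕ} {t : ℝ}
    (hf : Tendsto (fun n => f n / n) atTop (𝓝 L))
    (hg : Tendsto (fun n => (g n : ℝ) / n) atTop (𝓝 t)) :
    Tendsto (fun n => f (g n) / n) atTop (𝓝 (L * t)) := by
  have ht : 0 ≤ t := ge_of_tendsto' hg fun n => by positivity
  rcases ht.eq_or_lt with rfl | ht
  · simpa using tendsto_comp_div_of_tendsto_div_zero hf hg
  have hg_top := tendsto_atTop_of_tendsto_div_pos hg ht
  refine ((hf.comp hg_top).mul hg).congr' ?_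
  filter_upwards [hg_top.eventually_gt_atTop 0] with n hn
  exact div_mul_div_cancel₀ (Nat.cast_ne_zero.mpr hn.ne')

lemma tendsto_sub_div_of_tendsto_div {e : ℕ → ℕ} {u : ℝ}
    (he : Tendsto (fun n => (e n : ℝ) / n) atTop (𝓝 u)) (hle : ∀ᶠ n in atTop, e n ≤ n) :
    Tendsto (fun n => ((n - e n : ℕ) : ℝ) / n) atTop (𝓝 (1 - u)) := by
  refine (tendsto_const_nhds.sub he).congr' ?_
  filter_upwards [hle, eventually_gt_atTop 0] with n hle hn
  rw [Nat.cast_sub hle, sub_div, div_self (Nat.cast_ne_zero.mpr hn.ne')]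

lemma tendsto_comp_sub_const_div (hf : Tendsto (fun n => f n / n) atTop (𝓝 L)) (d : ℕ) :
    Tendsto (fun n => f (n - d) / n) atTop (𝓝 L) := by
  have hd := tendsto_sub_div_of_tendsto_div (tendsto_const_div_atTop_nhds_zero_nat (d : ℝ))
    (eventually_ge_atTop d)
  simpa using tendsto_comp_div_of_tendsto_div hf hd

end RatioLimits

theorem nested_recurrence_limit_general (k c : ℕ) (hk : 2 ≤ k)
    (p s : Fin k → ℕ) (a : Fin k → ℕ → ℕ)
    (A : ℕ → ℕ)
    (hpos : ∀ n, c < n → ∀ i, (∀ j, j < p i → a i j < n) ∧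
      s i + ∑ j ∈ Finset.range (p i), A (n - a i j) < n)
    (hrec : ∀ n, c < n →
      A n = ∑ i, A (n - s i - ∑ j ∈ Finset.range (p i), A (n - a i j)))
    (L : ℝ) (hL : L ≠ 0)
    (hlim : Filter.Tendsto (fun n => (A n : ℝ) / (n : ℝ)) Filter.atTop (nhds L)) :
    L = ((k : ℝ) - 1) / ((∑ i, p i : ℕ) : ℝ) := by
  have hinner : ∀ i, Tendsto (fun n => ((s i + ∑ j ∈ range (p i), A (n - a i j) : ℕ) : ℝ) / n)
      atTop (𝓝 (p i * L)) := fun i => by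
    have hsum := tendsto_finsetSum (range (p i))
      fun j _ => tendsto_comp_sub_const_div (f := fun m => (A m : ℝ)) hlim (a i j)
    simpa [add_div, sum_div] using (tendsto_const_div_atTop_nhds_zero_nat (s i : ℝ)).add hsum
  have houter : ∀ i, Tendsto (fun n => (A (n - s i - ∑ j ∈ range (p i), A (n - a i j)) : ℝ) / n)
      atTop (𝓝 (L * (1 - p i * L))) := fun i => by
    simp only [Nat.sub_sub]
    exact tendsto_comp_div_of_tendsto_div (f := fun m => (A m : ℝ)) hlim <|
      tendsto_sub_div_of_tendsto_div (hinner i)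
      (by filter_upwards [eventually_gt_atTop c] with n hn using (hpos n hn i).2.le)
  have hfix : L = ∑ i, L * (1 - p i * L) := by
    refine tendsto_nhds_unique hlim ((tendsto_finsetSum _ fun i _ => houter i).congr' ?_)
    filter_upwards [eventually_gt_atTop c] with n hn
    rw [hrec n hn, Nat.cast_sum, sum_div]
  have hLP : L * (∑ i, p i : ℕ) = k - 1 := by
    simp only [mul_sub, mul_one, sum_sub_distrib, sum_const, card_univ, Fintype.card_fin,
      nsmul_eq_mul, ← sum_mul, ← mul_sum] at hfix
    push_cast
    exact mul_left_cancel₀ hL (by linear_combination hfix)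
  have hk' : (k : ℝ) - 1 ≠ 0 := by
    have : (2 : ℝ) ≤ k := by exact_mod_cast hk
    linarith
  rw [← hLP, mul_div_cancel_right₀ _ (right_ne_zero_of_mul (hLP ▸ hk'))]

/-- If `A` solves a nested recurrence of arity `k ≥ 2` and order `(p₁,…,p_k)`
(with all arguments positive), and `A(n)/n` tends to a nonzero limit `L`, then
`L = (k-1)/(p₁ + ⋯ + p_k)`. -/
theorem nested_recurrence_limit (k c : ℕ) (hk : 2 ≤ k)
    (p s : Fin k → ℕ) (a : Fin k → ℕ → ℕ)
    (hp : ∀ i, 1 ≤ p i) (ha : ∀ i j, j < p i → 1 ≤ a i j)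
    (A : ℕ → ℕ)
    (hpos : ∀ n, c < n → ∀ i, (∀ j, j < p i → a i j < n) ∧
      s i + ∑ j ∈ Finset.range (p i), A (n - a i j) < n)
    (hrec : ∀ n, c < n →
      A n = ∑ i, A (n - s i - ∑ j ∈ Finset.range (p i), A (n - a i j)))
    (L : ℝ) (hL : L ≠ 0)
    (hlim : Filter.Tendsto (fun n => (A n : ℝ) / (n : ℝ)) Filter.atTop (nhds L)) :
    L = ((k : ℝ) - 1) / ((∑ i, p i : ℕ) : ℝ) :=
  nested_recurrence_limit_general k c hk p s a A hpos hrec L hL hlim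
end

section
/- Let A be a slowly growing sequence of positive integers whose frequency sequence is φ(m) = α + β·r_m for all m ≥ 1, where r_m is the ruler function and α, β are integers with α + β > 0 and β ≥ 0. Then lim_{n→∞} A(n)/n = 1/(α + 2β). -/
open Filter Finset Topology

private lemma conolly_mono (A : ℕ → ℕ)
    (hslow : ∀ n, 1 ≤ n → A (n + 1) = A n ∨ A (n + 1) = A n + 1) :
    ∀ m n, 1 ≤ m → m ≤ n → A m ≤ A n := by
  intro m n h1m hmn
  induction n, hmn using Nat.le_induction with
  | base => exact le_rfl
  | succ n hmn ih =>
    rcases hslow n (le_trans h1m hmn) with h | h <;> omega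

private lemma conolly_le_id (A : ℕ → ℕ) (h1 : A 1 = 1)
    (hslow : ∀ n, 1 ≤ n → A (n + 1) = A n ∨ A (n + 1) = A n + 1) :
    ∀ n, 1 ≤ n → A n ≤ n := by
  intro n h1n
  induction n, h1n using Nat.le_induction with
  | base => omega
  | succ n h ih => rcases hslow n h with h' | h' <;> omega

private lemma conolly_sum_padic (M : ℕ) :
    ∑ m ∈ Finset.Icc 1 M, padicValNat 2 m = padicValNat 2 (Nat.factorial M) := by
  induction M with
  | zero => simp
  | succ M ih =>
    rw [Finset.sum_Icc_succ_top (by omega), ih, Nat.factorial_succ,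
      padicValNat.mul (by omega) (Nat.factorial_pos M).ne', Nat.add_comm]

private lemma conolly_nu_bounds (M : ℕ) (hM : 1 ≤ M) :
    padicValNat 2 (Nat.factorial M) ≤ M ∧
      M ≤ padicValNat 2 (Nat.factorial M) + (Nat.log 2 M + 1) := by
  have key := sub_one_mul_padicValNat_factorial (p := 2) M
  have hsle : (Nat.digits 2 M).sum ≤ Nat.log 2 M + 1 := by
    calc (Nat.digits 2 M).sum ≤ (Nat.digits 2 M).length • 1 :=
          List.sum_le_card_nsmul _ 1 (fun x hx => by
            have := Nat.digits_lt_base (by norm_num) hx; omega)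
      _ = Nat.log 2 M + 1 := by
          rw [smul_eq_mul, mul_one, Nat.digits_len 2 M (by norm_num) (by omega)]
  omega

/-- A slow sequence of positive integers whose frequency sequence is
`φ(m) = α + β·r_m` (with `α + β > 0`, `β ≥ 0`) satisfies
`A(n)/n → 1/(α + 2β)`. -/
theorem conolly_like_limit (A : ℕ → ℕ) (α β : ℤ)
    (hαβ : 0 < α + β) (hβ : 0 ≤ β)
    (h1 : A 1 = 1)
    (hslow : ∀ n, 1 ≤ n → A (n + 1) = A n ∨ A (n + 1) = A n + 1)
    (hinf : Filter.Tendsto A Filter.atTop Filter.atTop)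
    (hfreq : ∀ m, 1 ≤ m →
      (({n : ℕ | 1 ≤ n ∧ A n = m}.ncard : ℤ)) = α + β * (padicValNat 2 m + 1)) :
    Filter.Tendsto (fun n => (A n : ℝ) / (n : ℝ)) Filter.atTop
      (nhds (1 / ((α : ℝ) + 2 * (β : ℝ)))) := by
  have hA1 : ∀ n, 1 ≤ n → 1 ≤ A n := fun n hn => h1 ▸ conolly_mono A hslow 1 n le_rfl hn
  have hAle : ∀ n, 1 ≤ n → A n ≤ n := conolly_le_id A h1 hslow
  -- finiteness
  have hfin : ∀ M : ℕ, {n : ℕ | 1 ≤ n ∧ A n ≤ M}.Finite := by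
    intro M
    obtain ⟨N, hN⟩ := Filter.eventually_atTop.mp (hinf.eventually_ge_atTop (M + 1))
    refine (Set.finite_Iio N).subset ?_
    rintro n ⟨hn, hAn⟩
    simp only [Set.mem_Iio]
    by_contra h
    push_neg at h
    have := hN n h
    omega
  -- the partial sums of frequencies
  set S : ℕ → ℕ := fun M => ∑ m ∈ Finset.Icc 1 M, {n : ℕ | 1 ≤ n ∧ A n = m}.ncard with hS
  have hcard : ∀ M, {n : ℕ | 1 ≤ n ∧ A n ≤ M}.ncard = S M := by
    intro M
    induction M with
    | zero =>
      have he : {n : ℕ | 1 ≤ n ∧ A n ≤ 0} = ∅ := by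
        ext n
        simp only [Set.mem_setOf_eq, Set.mem_empty_iff_false, iff_false, not_and]
        intro hn; have := hA1 n hn; omega
      have h0 : S 0 = 0 := by
        simp only [hS]; rw [show Finset.Icc 1 0 = ∅ from Finset.Icc_eq_empty (by omega)]; simp
      rw [he, h0, Set.ncard_empty]
    | succ M ih =>
      have hsplit : {n : ℕ | 1 ≤ n ∧ A n ≤ M + 1}
          = {n : ℕ | 1 ≤ n ∧ A n ≤ M} ∪ {n : ℕ | 1 ≤ n ∧ A n = M + 1} := by
        ext n; simp only [Set.mem_setOf_eq, Set.mem_union]; omega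
      rw [hsplit, Set.ncard_union_eq
        (by rw [Set.disjoint_left]; rintro n ⟨hn, h'⟩ ⟨_, h''⟩; omega)
        (hfin M) ((hfin (M + 1)).subset (by rintro n ⟨hn, h'⟩; exact ⟨hn, by omega⟩)),
        ih]
      simp only [hS]
      rw [Finset.sum_Icc_succ_top (by omega : 1 ≤ M + 1)]
  -- the down-set structure
  have hIcc : ∀ M, {n : ℕ | 1 ≤ n ∧ A n ≤ M} = Set.Icc 1 (S M) := by
    intro M
    rcases Nat.eq_zero_or_pos M with rfl | hM
    · have h0 : S 0 = 0 := by
        simp only [hS]; rw [show Finset.Icc 1 0 = ∅ from Finset.Icc_eq_empty (by omega)]; simp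
      rw [h0]
      ext n
      simp only [Set.mem_setOf_eq, Set.mem_Icc]
      constructor
      · rintro ⟨hn, hAn⟩; have := hA1 n hn; omega
      · omega
    · have hmem1 : (1 : ℕ) ∈ {n : ℕ | 1 ≤ n ∧ A n ≤ M} := ⟨le_rfl, by omega⟩
      have hDne : ((hfin M).toFinset).Nonempty :=
        ⟨1, (hfin M).mem_toFinset.mpr hmem1⟩
      set N := ((hfin M).toFinset).max' hDne with hN
      have hNmem : 1 ≤ N ∧ A N ≤ M := by
        have := (hfin M).mem_toFinset.mp (((hfin M).toFinset).max'_mem hDne)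
        exact this
      have hset : {n : ℕ | 1 ≤ n ∧ A n ≤ M} = Set.Icc 1 N := by
        ext k
        simp only [Set.mem_setOf_eq, Set.mem_Icc]
        constructor
        · rintro ⟨h1k, hAk⟩
          exact ⟨h1k, Finset.le_max' _ k ((hfin M).mem_toFinset.mpr ⟨h1k, hAk⟩)⟩
        · rintro ⟨h1k, hkN⟩
          exact ⟨h1k, le_trans (conolly_mono A hslow k N h1k hkN) hNmem.2⟩
      have hSN : S M = N := by
        rw [← hcard M, hset, ← Finset.coe_Icc, Set.ncard_coe_finset, Nat.card_Icc]
        omega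
      rw [hset, hSN]
  -- key combinatorial bounds on n
  have hkey : ∀ n, 1 ≤ n → S (A n - 1) < n ∧ n ≤ S (A n) := by
    intro n hn
    constructor
    · by_contra h
      push_neg at h
      have hmem : n ∈ Set.Icc 1 (S (A n - 1)) := ⟨hn, h⟩
      rw [← hIcc] at hmem
      have h2 := hmem.2
      have := hA1 n hn
      omega
    · have hmem : n ∈ {k : ℕ | 1 ≤ k ∧ A k ≤ A n} := ⟨hn, le_rfl⟩
      rw [hIcc] at hmem
      exact hmem.2
  -- integral formula for S
  have hSZ : ∀ M, (S M : ℤ)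
      = α * M + β * (M + padicValNat 2 (Nat.factorial M)) := by
    intro M
    have : (S M : ℤ) = ∑ m ∈ Finset.Icc 1 M, (({n : ℕ | 1 ≤ n ∧ A n = m}.ncard : ℤ)) := by
      rw [hS]; push_cast; ring
    rw [this, Finset.sum_congr rfl (fun m hm => hfreq m (Finset.mem_Icc.mp hm).1),
      Finset.sum_add_distrib, Finset.sum_const, Nat.card_Icc, ← Finset.mul_sum]
    have e1 : ∑ m ∈ Finset.Icc 1 M, ((padicValNat 2 m : ℤ) + 1)
        = (padicValNat 2 (Nat.factorial M) : ℤ) + M := by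
      rw [Finset.sum_add_distrib, Finset.sum_const, Nat.card_Icc]
      have h2 : ∑ m ∈ Finset.Icc 1 M, ((padicValNat 2 m : ℤ))
          = ((∑ m ∈ Finset.Icc 1 M, padicValNat 2 m : ℕ) : ℤ) := by push_cast; ring
      rw [h2, conolly_sum_padic M]
      simp only [Nat.add_sub_cancel, nsmul_eq_mul, mul_one]
    rw [e1]
    simp only [Nat.add_sub_cancel, nsmul_eq_mul]
    push_cast
    ring
  set c : ℤ := α + 2 * β with hc
  have hc1 : 1 ≤ c := by omega
  -- bounds on S
  have hupper : ∀ M : ℕ, (S M : ℤ) ≤ c * M := by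
    intro M
    rcases Nat.eq_zero_or_pos M with rfl | hM
    · have h0 : S 0 = 0 := by
        simp only [hS]; rw [show Finset.Icc 1 0 = ∅ from Finset.Icc_eq_empty (by omega)]; simp
      simp [h0]
    · have hν := (conolly_nu_bounds M hM).1
      have hνZ : (padicValNat 2 (Nat.factorial M) : ℤ) ≤ M := by exact_mod_cast hν
      rw [hSZ]
      have : (β : ℤ) * ((M : ℤ) + padicValNat 2 (Nat.factorial M)) ≤ β * (2 * M) := by
        apply mul_le_mul_of_nonneg_left _ hβ
        linarith
      have hcm : c * (M : ℤ) = α * M + 2 * (β * M) := by rw [hc]; ring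
      linarith
  have hlower : ∀ M : ℕ, 1 ≤ M →
      c * M - β * ((Nat.log 2 M : ℤ) + 1) ≤ (S M : ℤ) := by
    intro M hM
    have hν := (conolly_nu_bounds M hM).2
    have hνZ : (M : ℤ) ≤ padicValNat 2 (Nat.factorial M) + ((Nat.log 2 M : ℤ) + 1) := by
      exact_mod_cast hν
    rw [hSZ]
    have : (β : ℤ) * (2 * M - ((Nat.log 2 M : ℤ) + 1))
        ≤ β * ((M : ℤ) + padicValNat 2 (Nat.factorial M)) := by
      apply mul_le_mul_of_nonneg_left _ hβ
      linarith
    have hcm : c * (M : ℤ) = α * M + 2 * (β * M) := by rw [hc]; ring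
    linarith
  -- key integer inequality
  have hkeyZ : ∀ n, 1 ≤ n → 0 ≤ c * (A n : ℤ) - n ∧
      c * (A n : ℤ) - n ≤ c + β * ((Nat.log 2 (A n) : ℤ) + 1) := by
    intro n hn
    obtain ⟨hlt, hle⟩ := hkey n hn
    have hM1 := hA1 n hn
    have hnS : (n : ℤ) ≤ S (A n) := by exact_mod_cast hle
    constructor
    · have := hupper (A n)
      linarith
    · rcases Nat.lt_or_ge 1 (A n) with h1M | h1M
      · have hlow := hlower (A n - 1) (by omega)
        have hcast : ((A n - 1 : ℕ) : ℤ) = (A n : ℤ) - 1 := by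
          push_cast [Nat.cast_sub hM1]; ring
        have hlog : Nat.log 2 (A n - 1) ≤ Nat.log 2 (A n) := Nat.log_mono_right (by omega)
        have hlogZ : (Nat.log 2 (A n - 1) : ℤ) ≤ (Nat.log 2 (A n) : ℤ) := by exact_mod_cast hlog
        have hltZ : (S (A n - 1) : ℤ) < n := by exact_mod_cast hlt
        have hmul : β * ((Nat.log 2 (A n - 1) : ℤ) + 1)
            ≤ β * ((Nat.log 2 (A n) : ℤ) + 1) :=
          mul_le_mul_of_nonneg_left (by linarith) hβ
        rw [hcast] at hlow
        linarith
      · -- A n = 1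
        have hAn1 : A n = 1 := by omega
        have hn' : (1 : ℤ) ≤ n := by exact_mod_cast hn
        have hn'' : (1 : ℤ) ≤ n := hn'
        rw [hAn1]
        simp only [Nat.log_one_right, Nat.cast_zero, Nat.cast_one]
        have hβ1 : 0 ≤ β * ((0 : ℤ) + 1) := by positivity
        linarith
  -- now the analytic part
  have hcR : (0 : ℝ) < (c : ℝ) := by exact_mod_cast hc1
  set g : ℕ → ℝ := fun n => ((c : ℝ) + (β : ℝ) * ((Nat.log 2 n : ℝ) + 1)) / ((c : ℝ) * n)
    with hg
  have h_bound : ∀ᶠ n in atTop, ‖(A n : ℝ) / n - 1 / (c : ℝ)‖ ≤ g n := by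
    filter_upwards [eventually_ge_atTop 1] with n hn
    have hAn := hA1 n hn
    have hAn' := hAle n hn
    have hnR : (0 : ℝ) < n := by exact_mod_cast Nat.lt_of_lt_of_le Nat.zero_lt_one hn
    obtain ⟨k1, k2⟩ := hkeyZ n hn
    have k1R : (0 : ℝ) ≤ (c : ℝ) * (A n : ℝ) - n := by exact_mod_cast k1
    have hlog : (Nat.log 2 (A n) : ℤ) ≤ (Nat.log 2 n : ℤ) := by
      exact_mod_cast Nat.log_mono_right hAn'
    have hmul : β * ((Nat.log 2 (A n) : ℤ) + 1) ≤ β * ((Nat.log 2 n : ℤ) + 1) :=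
      mul_le_mul_of_nonneg_left (by linarith) hβ
    have k2R : (c : ℝ) * (A n : ℝ) - n ≤ (c : ℝ) + (β : ℝ) * ((Nat.log 2 n : ℝ) + 1) := by
      have : c * (A n : ℤ) - n ≤ c + β * ((Nat.log 2 n : ℤ) + 1) := le_trans k2 (by linarith)
      exact_mod_cast this
    have e : (A n : ℝ) / n - 1 / (c : ℝ) = ((c : ℝ) * (A n : ℝ) - n) / ((c : ℝ) * n) := by
      field_simp
    rw [Real.norm_eq_abs, e, abs_div, abs_of_nonneg k1R,
      abs_of_pos (mul_pos hcR hnR)]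
    simp only [hg]
    gcongr
  have hlog0 : Tendsto (fun n : ℕ => (Nat.log 2 n : ℝ) / n) atTop (𝓝 0) := by
    have h1 : Tendsto (fun x : ℝ => Real.log x / x) atTop (𝓝 0) := by
      simpa using Real.isLittleO_log_id_atTop.tendsto_div_nhds_zero
    have h2 : Tendsto (fun n : ℕ => Real.log n / n) atTop (𝓝 0) :=
      h1.comp tendsto_natCast_atTop_atTop
    have h3 : Tendsto (fun n : ℕ => (Real.log n / n) * (1 / Real.log 2)) atTop (𝓝 0) := by
      simpa using h2.mul_const (1 / Real.log 2)
    apply squeeze_zero' (Eventually.of_forall (fun n => by positivity)) _ h3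
    filter_upwards [eventually_ge_atTop 1] with n hn
    have hnR : (0 : ℝ) < n := by exact_mod_cast Nat.lt_of_lt_of_le Nat.zero_lt_one hn
    have hb : (Nat.log 2 n : ℝ) ≤ Real.logb 2 n := Real.natLog_le_logb n 2
    rw [Real.logb] at hb
    have e : Real.log n / n * (1 / Real.log 2) = (Real.log n / Real.log 2) / n := by ring
    rw [e]
    gcongr
  have h_g : Tendsto g atTop (𝓝 0) := by
    have hT : Tendsto (fun n : ℕ =>
        (1 / (c : ℝ)) * (((c : ℝ) + β) * (1 / (n : ℝ))
          + (β : ℝ) * ((Nat.log 2 n : ℝ) / n))) atTop (𝓝 0) := by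
      have := ((tendsto_one_div_atTop_nhds_zero_nat.const_mul ((c : ℝ) + β)).add
        (hlog0.const_mul (β : ℝ))).const_mul (1 / (c : ℝ))
      simpa using this
    apply hT.congr'
    filter_upwards [eventually_ge_atTop 1] with n hn
    have hnR : (0 : ℝ) < n := by exact_mod_cast Nat.lt_of_lt_of_le Nat.zero_lt_one hn
    rw [hg]
    field_simp
    ring
  have h0 : Tendsto (fun n => (A n : ℝ) / n - 1 / (c : ℝ)) atTop (𝓝 0) :=
    squeeze_zero_norm' h_bound h_g
  have hfinal := h0.add_const (1 / (c : ℝ))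
  have heq : (fun n => (A n : ℝ) / n - 1 / (c : ℝ) + 1 / (c : ℝ))
      = fun n => (A n : ℝ) / n := by funext n; ring
  rw [heq] at hfinal
  have hce : ((α : ℝ) + 2 * (β : ℝ)) = (c : ℝ) := by
    rw [hc]; push_cast; ring
  rw [hce]
  simpa using hfinal
end

section
/- If a recursion of the form R(n) = R(n - s - Σ_{i=1}^p R(n-a_i)) + R(n - t - Σ_{i=1}^p R(n-b_i)) has a slow solution whose frequency sequence is α + β·r_m for all m ≥ 1, then α + 2β = 2p, α + β > 0, and β ≥ 0. -/
/-!
Summing the frequencies and using Legendre's formula `∑_{j ≤ M} v₂(j) = M - s₂(M)` gives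
`#{n ≥ 1 | R n ≤ M} = (α + 2β) M - β s₂(M)`. Since `β ≥ 0` (the frequency `α + β (k + 1)` of
`2 ^ k` is nonnegative) and `s₂(M) ≤ log₂ M + 1`, comparing `n` with the counts at `R n - 1` and
`R n` yields `D · R n = n + O(log n)` for `D = α + 2β`. Slowness gives `R (n - aᵢ) = R n + O(1)`,
so the recursion at `n` turns into `D · R n = 2n - 2p · R n + O(log n)`, that is
`(D - 2p) · R n = O(log n)`; as `R n ≥ n / D` grows linearly, `D = 2p`. Finally `α + β > 0`
because it is the frequency of an odd value, and odd values are attained.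
-/

open Finset Filter

theorem padicValNat_factorial_eq_sum_Icc (p : ℕ) [Fact p.Prime] (M : ℕ) :
    padicValNat p M.factorial = ∑ j ∈ Icc 1 M, padicValNat p j := by
  induction M with
  | zero => simp
  | succ M ih =>
    rw [Nat.factorial_succ, padicValNat.mul M.succ_ne_zero M.factorial_ne_zero, ih,
      sum_Icc_succ_top (by omega), add_comm]

theorem sub_one_mul_sum_Icc_padicValNat (p : ℕ) [Fact p.Prime] (M : ℕ) :
    (p - 1) * ∑ j ∈ Icc 1 M, padicValNat p j = M - (p.digits M).sum := by
  rw [← padicValNat_factorial_eq_sum_Icc, sub_one_mul_padicValNat_factorial]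

theorem digits_sum_le_mul_log_add_one {b : ℕ} (hb : 1 < b) (M : ℕ) :
    (b.digits M).sum ≤ (b - 1) * (Nat.log b M + 1) := by
  rcases Nat.eq_zero_or_pos M with rfl | hM
  · simp
  rw [← Nat.length_digits b M hb hM.ne', mul_comm, ← smul_eq_mul]
  exact List.sum_le_card_nsmul _ _ fun d hd => Nat.le_sub_one_of_lt (Nat.digits_lt_base hb hd)

theorem exists_add_mul_log_two_lt (A B : ℤ) (c : ℕ) :
    ∃ n, c < n ∧ A + B * Nat.log 2 n < n := by
  set m := A.toNat + 2 * B.toNat + c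
  have hB : B * (2 * m) ≤ B.toNat * (2 * m) :=
    mul_le_mul_of_nonneg_right (Int.self_le_toNat B) (by positivity)
  have hpow : (m : ℤ) + 1 ≤ 2 ^ m := by exact_mod_cast m.lt_two_pow_self
  refine ⟨2 ^ (2 * m), ?_, ?_⟩
  · calc c ≤ m := by omega
      _ < 2 ^ m := m.lt_two_pow_self
      _ ≤ 2 ^ (2 * m) := Nat.pow_le_pow_right (by norm_num) (by omega)
  · rw [Nat.log_pow (by norm_num), pow_mul']
    push_cast
    have hA : A ≤ A.toNat := Int.self_le_toNat A
    have hm : (A.toNat : ℤ) + 2 * B.toNat ≤ m := by omega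
    nlinarith

/-- A slow sequence, indexed from `1` (the value `R 0` plays no role). -/
structure IsSlow (R : ℕ → ℕ) : Prop where
  one_le : ∀ n, 1 ≤ n → 1 ≤ R n
  step : ∀ n, 1 ≤ n → R (n + 1) = R n ∨ R (n + 1) = R n + 1
  tendsto : Tendsto R atTop atTop

namespace IsSlow

variable {R : ℕ → ℕ} (hR : IsSlow R)
include hR

theorem monotoneOn : MonotoneOn R (Set.Ici 1) :=
  monotoneOn_of_le_add_one Set.ordConnected_Ici fun n _ hn _ => by
    rcases hR.step n hn with h | h <;> omega

theorem le_add_sub {m n : ℕ} (hm : 1 ≤ m) (hmn : m ≤ n) : R n ≤ R m + (n - m) := by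
  induction n, hmn using Nat.le_induction with
  | base => omega
  | succ n hn ih => rcases hR.step n (hm.trans hn) with h | h <;> omega

theorem exists_eq {m : ℕ} (hm : R 1 ≤ m) : ∃ n, 1 ≤ n ∧ R n = m := by
  have hex : ∃ n, m ≤ R (n + 1) := (hR.tendsto.eventually_ge_atTop m).exists_forall_of_atTop
    |>.imp fun n hn => hn (n + 1) (by omega)
  rcases hN : Nat.find hex with _ | k
  · exact ⟨1, le_rfl, le_antisymm hm (by simpa [hN] using Nat.find_spec hex)⟩
  · have hge : m ≤ R (k + 1 + 1) := hN ▸ Nat.find_spec hex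
    have hlt : ¬ m ≤ R (k + 1) := Nat.find_min hex (by omega)
    exact ⟨k + 1 + 1, by omega, by rcases hR.step (k + 1) (by omega) with h | h <;> omega⟩

theorem finite_setOf_le (M : ℕ) : {n | 1 ≤ n ∧ R n ≤ M}.Finite := by
  have h := Nat.cofinite_eq_atTop ▸ hR.tendsto.eventually_gt_atTop M
  exact (eventually_cofinite.mp h).subset fun _ hn => not_lt.mpr hn.2

theorem finite_setOf_eq (m : ℕ) : {n | 1 ≤ n ∧ R n = m}.Finite :=
  (hR.finite_setOf_le m).subset fun _ h => ⟨h.1, h.2.le⟩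

theorem ncard_setOf_le_eq_sum (M : ℕ) :
    {n | 1 ≤ n ∧ R n ≤ M}.ncard = ∑ j ∈ Icc 1 M, {n | 1 ≤ n ∧ R n = j}.ncard := by
  induction M with
  | zero =>
    have hempty : {n | 1 ≤ n ∧ R n ≤ 0} = ∅ := by
      ext n; simp only [Set.mem_ofPred_eq, Set.mem_empty_iff_false, iff_false]
      exact fun h => by have := hR.one_le n h.1; omega
    rw [hempty, Set.ncard_empty, Icc_eq_empty (by omega), sum_empty]
  | succ M ih =>
    have hsplit : {n | 1 ≤ n ∧ R n ≤ M + 1} =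
        {n | 1 ≤ n ∧ R n ≤ M} ∪ {n | 1 ≤ n ∧ R n = M + 1} := by
      ext n; simp only [Set.mem_ofPred_eq, Set.mem_union]; omega
    have hdisj : Disjoint {n | 1 ≤ n ∧ R n ≤ M} {n | 1 ≤ n ∧ R n = M + 1} :=
      Set.disjoint_left.mpr fun n h h' => by simp only [Set.mem_ofPred_eq] at h h'; omega
    rw [hsplit, Set.ncard_union_eq hdisj (hR.finite_setOf_le M) (hR.finite_setOf_eq (M + 1)),
      ih, sum_Icc_succ_top (by omega)]

theorem le_ncard_setOf_le {n : ℕ} (hn : 1 ≤ n) : n ≤ {m | 1 ≤ m ∧ R m ≤ R n}.ncard := by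
  calc n = (Icc 1 n : Set ℕ).ncard := by simp
    _ ≤ _ := Set.ncard_le_ncard (fun m hm => by
        simp only [coe_Icc, Set.mem_Icc] at hm
        exact ⟨hm.1, hR.monotoneOn hm.1 (Set.mem_Ici.mpr hn) hm.2⟩) (hR.finite_setOf_le _)

theorem ncard_setOf_le_pred_le {n : ℕ} (hn : 1 ≤ n) :
    {m | 1 ≤ m ∧ R m ≤ R n - 1}.ncard ≤ n - 1 := by
  calc {m | 1 ≤ m ∧ R m ≤ R n - 1}.ncard ≤ (Icc 1 (n - 1) : Set ℕ).ncard :=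
        Set.ncard_le_ncard (fun m ⟨hm1, hm2⟩ => by
          simp only [coe_Icc, Set.mem_Icc]
          refine ⟨hm1, ?_⟩
          by_contra! h
          have := hR.monotoneOn (Set.mem_Ici.mpr hn) (Set.mem_Ici.mpr hm1) (by omega : n ≤ m)
          have := hR.one_le n hn
          omega) (Set.toFinite _)
    _ = n - 1 := by simp

theorem sum_apply_sub_le {ι : Type*} (s : Finset ι) (d : ι → ℕ) {n : ℕ} (hd : ∀ i ∈ s, d i < n) :
    ∑ i ∈ s, R (n - d i) ≤ #s * R n := by
  rw [← smul_eq_mul, ← sum_const]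
  exact sum_le_sum fun i hi => hR.monotoneOn (Set.mem_Ici.mpr (by have := hd i hi; omega))
    (Set.mem_Ici.mpr (by have := hd i hi; omega)) (Nat.sub_le n (d i))

theorem card_mul_le_sum_apply_sub {ι : Type*} (s : Finset ι) (d : ι → ℕ) {n : ℕ}
    (hd : ∀ i ∈ s, d i < n) : #s * R n ≤ ∑ i ∈ s, R (n - d i) + ∑ i ∈ s, d i := by
  rw [← smul_eq_mul, ← sum_const, ← sum_add_distrib]
  refine sum_le_sum fun i hi => ?_
  have := hd i hi
  have := hR.le_add_sub (m := n - d i) (n := n) (by omega) (Nat.sub_le n (d i))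
  omega

end IsSlow

theorem eq_zero_of_abs_mul_le_add_mul_log {x : ℕ → ℤ} {D e K L : ℤ} {c : ℕ} (hD : 0 ≤ D)
    (hlow : ∀ n, c < n → (n : ℤ) ≤ D * x n)
    (hup : ∀ n, c < n → |e * x n| ≤ K + L * Nat.log 2 n) : e = 0 := by
  by_contra he
  obtain ⟨n, hcn, hn⟩ := exists_add_mul_log_two_lt (D * K) (D * L) c
  have hx : x n ≤ K + L * Nat.log 2 n :=
    calc x n ≤ |x n| := le_abs_self _
      _ ≤ |e| * |x n| := le_mul_of_one_le_left (abs_nonneg _) (Int.one_le_abs he)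
      _ = |e * x n| := (abs_mul _ _).symm
      _ ≤ _ := hup n hcn
  nlinarith [hlow n hcn, mul_le_mul_of_nonneg_left hx hD]

structure IsConolly (R : ℕ → ℕ) (α β : ℤ) : Prop extends IsSlow R where
  ncard_eq : ∀ m, 1 ≤ m → ({n | 1 ≤ n ∧ R n = m}.ncard : ℤ) = α + β * (padicValNat 2 m + 1)

namespace IsConolly

variable {R : ℕ → ℕ} {α β : ℤ} (hC : IsConolly R α β)
include hC

theorem beta_nonneg : 0 ≤ β := by
  by_contra! hβ
  have h := hC.ncard_eq (2 ^ α.toNat) Nat.one_le_two_pow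
  rw [padicValNat.prime_pow] at h
  nlinarith [Int.self_le_toNat α, Int.natCast_nonneg {n | 1 ≤ n ∧ R n = 2 ^ α.toNat}.ncard]

theorem alpha_add_beta_pos : 0 < α + β := by
  obtain ⟨n, hn, hRn⟩ := hC.exists_eq (m := 2 * R 1 + 1) (by omega)
  have hpos : 0 < {k | 1 ≤ k ∧ R k = 2 * R 1 + 1}.ncard :=
    (Set.ncard_pos (hC.finite_setOf_eq _)).mpr ⟨n, hn, hRn⟩
  have h := hC.ncard_eq (2 * R 1 + 1) (by omega)
  rw [padicValNat.eq_zero_of_not_dvd (by omega)] at h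
  omega

theorem apply_one : R 1 = 1 := by
  have h := hC.ncard_eq 1 le_rfl
  rw [padicValNat_one_right] at h
  obtain ⟨n, hn, hRn⟩ : {n | 1 ≤ n ∧ R n = 1}.Nonempty :=
    Set.nonempty_of_ncard_ne_zero (by have := hC.alpha_add_beta_pos; omega)
  have := hC.monotoneOn (Set.mem_Ici.mpr le_rfl) (Set.mem_Ici.mpr hn) hn
  have := hC.one_le 1 le_rfl
  omega

theorem apply_le {n : ℕ} (hn : 1 ≤ n) : R n ≤ n := by
  have := hC.le_add_sub le_rfl hn
  rw [hC.apply_one] at this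
  omega

theorem ncard_setOf_le (M : ℕ) :
    ({n | 1 ≤ n ∧ R n ≤ M}.ncard : ℤ) = (α + 2 * β) * M - β * (Nat.digits 2 M).sum := by
  have hleg : ((∑ j ∈ Icc 1 M, padicValNat 2 j : ℕ) : ℤ) = M - (Nat.digits 2 M).sum := by
    have := sub_one_mul_sum_Icc_padicValNat 2 M
    have := Nat.digit_sum_le 2 M
    omega
  rw [hC.ncard_setOf_le_eq_sum, Nat.cast_sum,
    sum_congr rfl fun j hj => hC.ncard_eq j (mem_Icc.mp hj).1, sum_add_distrib, sum_const,
    ← mul_sum, sum_add_distrib, sum_const, ← Nat.cast_sum, hleg, Nat.card_Icc]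
  simp only [nsmul_eq_mul, Nat.add_sub_cancel]
  ring

theorem mul_apply_bounds {n : ℕ} (hn : 1 ≤ n) :
    (n : ℤ) ≤ (α + 2 * β) * R n ∧
      (α + 2 * β) * R n ≤ n - 1 + (α + 2 * β) + β * (Nat.log 2 n + 1) := by
  have hβ := hC.beta_nonneg
  have hR1 := hC.one_le n hn
  constructor
  · have hcount := hC.ncard_setOf_le (R n)
    have := hC.le_ncard_setOf_le hn
    have : 0 ≤ β * (Nat.digits 2 (R n)).sum := by positivity
    omega
  · have hcount := hC.ncard_setOf_le (R n - 1)
    have hle : ({m | 1 ≤ m ∧ R m ≤ R n - 1}.ncard : ℤ) ≤ n - 1 := by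
      have := hC.ncard_setOf_le_pred_le hn
      omega
    have hdig : ((Nat.digits 2 (R n - 1)).sum : ℤ) ≤ Nat.log 2 n + 1 := by
      have := digits_sum_le_mul_log_add_one (b := 2) (by norm_num) (R n - 1)
      have := Nat.log_mono_right (b := 2) (show R n - 1 ≤ n by have := hC.apply_le hn; omega)
      omega
    have := mul_le_mul_of_nonneg_left hdig hβ
    rw [show ((R n - 1 : ℕ) : ℤ) = R n - 1 by omega] at hcount
    linarith

theorem abs_mul_apply_le_of_rec {ι : Type*} [Fintype ι] (s t : ℕ) (a b : ι → ℕ) {n : ℕ}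
    (hab : ∀ i, a i < n ∧ b i < n)
    (hsa : s + ∑ i, R (n - a i) < n) (htb : t + ∑ i, R (n - b i) < n)
    (hrec : R n = R (n - s - ∑ i, R (n - a i)) + R (n - t - ∑ i, R (n - b i))) :
    |(α + 2 * β - 2 * Fintype.card ι) * R n| ≤
      s + t + ∑ i, (a i : ℤ) + ∑ i, (b i : ℤ) + 2 * (α + 2 * β) + 2 * β * (Nat.log 2 n + 1) := by
  set Sa := ∑ i, R (n - a i)
  set Sb := ∑ i, R (n - b i)
  have hβ := hC.beta_nonneg
  have hSa := hC.sum_apply_sub_le univ a fun i _ => (hab i).1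
  have hSb := hC.sum_apply_sub_le univ b fun i _ => (hab i).2
  have hSa_ge := hC.card_mul_le_sum_apply_sub univ a fun i _ => (hab i).1
  have hSb_ge := hC.card_mul_le_sum_apply_sub univ b fun i _ => (hab i).2
  rw [card_univ] at hSa hSb hSa_ge hSb_ge
  have hlog {u : ℕ} (hu : u ≤ n) : β * (Nat.log 2 u + 1) ≤ β * (Nat.log 2 n + 1) :=
    mul_le_mul_of_nonneg_left (by have := Nat.log_mono_right (b := 2) hu; omega) hβ
  obtain ⟨hnL, hnU⟩ := hC.mul_apply_bounds (n := n) (by omega)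
  obtain ⟨huL, huU⟩ := hC.mul_apply_bounds (n := n - s - Sa) (by omega)
  obtain ⟨hvL, hvU⟩ := hC.mul_apply_bounds (n := n - t - Sb) (by omega)
  have hu := hlog (u := n - s - Sa) (by omega)
  have hv := hlog (u := n - t - Sb) (by omega)
  have hrecZ : (α + 2 * β) * R n =
      (α + 2 * β) * R (n - s - Sa) + (α + 2 * β) * R (n - t - Sb) := by
    rw [hrec]; push_cast; ring
  have hSaZ : (Fintype.card ι : ℤ) * R n ≤ Sa + ∑ i, (a i : ℤ) := by exact_mod_cast hSa_ge
  have hSbZ : (Fintype.card ι : ℤ) * R n ≤ Sb + ∑ i, (b i : ℤ) := by exact_mod_cast hSb_ge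
  have hSaZ_le : (Sa : ℤ) ≤ Fintype.card ι * R n := by exact_mod_cast hSa
  have hSbZ_le : (Sb : ℤ) ≤ Fintype.card ι * R n := by exact_mod_cast hSb
  have huZ : ((n - s - Sa : ℕ) : ℤ) = n - s - Sa := by omega
  have hvZ : ((n - t - Sb : ℕ) : ℤ) = n - t - Sb := by omega
  rw [huZ] at huL huU
  rw [hvZ] at hvL hvU
  rw [abs_le]
  constructor <;> linarith

theorem alpha_add_two_beta_eq_of_rec {ι : Type*} [Fintype ι] (s t c : ℕ) (a b : ι → ℕ)
    (hpos : ∀ n, c < n → (∀ i, a i < n ∧ b i < n) ∧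
      s + ∑ i, R (n - a i) < n ∧ t + ∑ i, R (n - b i) < n)
    (hrec : ∀ n, c < n →
      R n = R (n - s - ∑ i, R (n - a i)) + R (n - t - ∑ i, R (n - b i))) :
    α + 2 * β = 2 * Fintype.card ι := by
  have hD : 0 ≤ α + 2 * β := by linarith [hC.alpha_add_beta_pos, hC.beta_nonneg]
  rw [← sub_eq_zero]
  refine eq_zero_of_abs_mul_le_add_mul_log (x := fun n => (R n : ℤ)) (c := c)
    (K := s + t + ∑ i, (a i : ℤ) + ∑ i, (b i : ℤ) + 2 * (α + 2 * β) + 2 * β) (L := 2 * β) hD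
    (fun n hn => (hC.mul_apply_bounds (by omega)).1) fun n hn => ?_
  obtain ⟨hab, hsa, htb⟩ := hpos n hn
  linarith [hC.abs_mul_apply_le_of_rec s t a b hab hsa htb (hrec n hn)]

end IsConolly

theorem conolly_like_necessary_general (p : ℕ) (s t c : ℕ)
    (a b : Fin p → ℕ)
    (R : ℕ → ℕ) (α β : ℤ)
    (hpos : ∀ n, c < n → (∀ i, a i < n ∧ b i < n) ∧
      s + ∑ i, R (n - a i) < n ∧ t + ∑ i, R (n - b i) < n)
    (hrec : ∀ n, c < n →
      R n = R (n - s - ∑ i, R (n - a i)) + R (n - t - ∑ i, R (n - b i)))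
    (hR1 : ∀ n, 1 ≤ n → 1 ≤ R n)
    (hslow : ∀ n, 1 ≤ n → R (n + 1) = R n ∨ R (n + 1) = R n + 1)
    (hinf : Filter.Tendsto R Filter.atTop Filter.atTop)
    (hfreq : ∀ m, 1 ≤ m →
      (({n : ℕ | 1 ≤ n ∧ R n = m}.ncard : ℤ)) = α + β * (padicValNat 2 m + 1)) :
    α + 2 * β = 2 * p ∧ 0 < α + β ∧ 0 ≤ β := by
  have hC : IsConolly R α β := ⟨⟨hR1, hslow, hinf⟩, hfreq⟩
  refine ⟨?_, hC.alpha_add_beta_pos, hC.beta_nonneg⟩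
  simpa using hC.alpha_add_two_beta_eq_of_rec s t c a b hpos hrec

/-- If a 2-ary, order `p` nested recursion
`R(n) = R(n - s - Σᵢ R(n-aᵢ)) + R(n - t - Σᵢ R(n-bᵢ))` has a slow solution
whose frequency sequence is `α + β·r_m`, then `α + 2β = 2p`, `α + β > 0`, and `β ≥ 0`. -/
theorem conolly_like_necessary (p : ℕ) (hp : 1 ≤ p) (s t c : ℕ)
    (a b : Fin p → ℕ) (ha : ∀ i, 1 ≤ a i) (hb : ∀ i, 1 ≤ b i)
    (R : ℕ → ℕ) (α β : ℤ)
    (hpos : ∀ n, c < n → (∀ i, a i < n ∧ b i < n) ∧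
      s + ∑ i, R (n - a i) < n ∧ t + ∑ i, R (n - b i) < n)
    (hrec : ∀ n, c < n →
      R n = R (n - s - ∑ i, R (n - a i)) + R (n - t - ∑ i, R (n - b i)))
    (hR1 : ∀ n, 1 ≤ n → 1 ≤ R n)
    (hslow : ∀ n, 1 ≤ n → R (n + 1) = R n ∨ R (n + 1) = R n + 1)
    (hinf : Filter.Tendsto R Filter.atTop Filter.atTop)
    (hfreq : ∀ m, 1 ≤ m →
      (({n : ℕ | 1 ≤ n ∧ R n = m}.ncard : ℤ)) = α + β * (padicValNat 2 m + 1)) :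
    α + 2 * β = 2 * p ∧ 0 < α + β ∧ 0 ≤ β :=
  conolly_like_necessary_general p s t c a b R α β hpos hrec hR1 hslow hinf hfreq
end

section
/- (Fixed Order Interleaving Theorem) Suppose A and B both satisfy, for all n > r, the same nested recurrence X(n) = Σ_{i=1}^k X(n - s_i - Σ_{j=1}^{p_i} X(n - a_{ij})) (with their respective initial conditions on indices 1..r, all arguments positive). Define C by C(2n-1) = 2A(n) and C(2n) = 2B(n) for all n ≥ 1. Then for all n > 2r, C(n) = Σ_{i=1}^k C(n - 2s_i - Σ_{j=1}^{p_i} C(n - 2a_{ij})). -/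
/-- Fixed Order Interleaving Theorem: if `A` and `B` both satisfy the same nested
recurrence for `n > r`, then the interleaved sequence `C(2n-1) = 2A(n)`,
`C(2n) = 2B(n)` satisfies the "doubled" recurrence for `n > 2r`. -/
theorem fixed_order_interleaving (k r : ℕ) (p s : Fin k → ℕ) (a : Fin k → ℕ → ℕ)
    (hk : 1 ≤ k) (hp : ∀ i, 1 ≤ p i) (ha : ∀ i j, j < p i → 1 ≤ a i j)
    (A B C : ℕ → ℕ)
    (hApos : ∀ n, r < n → ∀ i, (∀ j, j < p i → a i j < n) ∧
      s i + ∑ j ∈ Finset.range (p i), A (n - a i j) < n)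
    (hBpos : ∀ n, r < n → ∀ i, (∀ j, j < p i → a i j < n) ∧
      s i + ∑ j ∈ Finset.range (p i), B (n - a i j) < n)
    (hArec : ∀ n, r < n →
      A n = ∑ i, A (n - s i - ∑ j ∈ Finset.range (p i), A (n - a i j)))
    (hBrec : ∀ n, r < n →
      B n = ∑ i, B (n - s i - ∑ j ∈ Finset.range (p i), B (n - a i j)))
    (hC : ∀ n, 1 ≤ n → C (2 * n - 1) = 2 * A n ∧ C (2 * n) = 2 * B n) :
    ∀ n, 2 * r < n →
      C n = ∑ i, C (n - 2 * s i - ∑ j ∈ Finset.range (p i), C (n - 2 * a i j)) := by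
  intro n hn
  rcases Nat.even_or_odd n with ⟨m, hm⟩ | ⟨m, hm⟩
  · -- even case: n = 2 * m with m > r
    have hm2 : n = 2 * m := by omega
    have hr : r < m := by omega
    rw [hm2, (hC m (by omega)).2, hBrec m hr, Finset.mul_sum]
    apply Finset.sum_congr rfl
    intro i _
    have hB := hBpos m hr i
    have hsum : ∑ j ∈ Finset.range (p i), C (2 * m - 2 * a i j)
        = 2 * ∑ j ∈ Finset.range (p i), B (m - a i j) := by
      rw [Finset.mul_sum]
      apply Finset.sum_congr rfl
      intro j hj
      have hj' := Finset.mem_range.mp hj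
      have haj : a i j < m := hB.1 j hj'
      have h2 : 2 * m - 2 * a i j = 2 * (m - a i j) := by omega
      rw [h2, (hC (m - a i j) (by omega)).2]
    rw [hsum]
    have hlt := hB.2
    have h3 : 2 * m - 2 * s i - 2 * ∑ j ∈ Finset.range (p i), B (m - a i j)
        = 2 * (m - s i - ∑ j ∈ Finset.range (p i), B (m - a i j)) := by omega
    rw [h3, (hC _ (by omega)).2]
  · -- odd case: n = 2 * (m+1) - 1 with m + 1 > r
    have hm2 : n = 2 * (m + 1) - 1 := by omega
    have hr : r < m + 1 := by omega
    rw [hm2, (hC (m + 1) (by omega)).1, hArec (m + 1) hr, Finset.mul_sum]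
    apply Finset.sum_congr rfl
    intro i _
    have hA := hApos (m + 1) hr i
    have hsum : ∑ j ∈ Finset.range (p i), C (2 * (m + 1) - 1 - 2 * a i j)
        = 2 * ∑ j ∈ Finset.range (p i), A (m + 1 - a i j) := by
      rw [Finset.mul_sum]
      apply Finset.sum_congr rfl
      intro j hj
      have hj' := Finset.mem_range.mp hj
      have haj : a i j < m + 1 := hA.1 j hj'
      have h2 : 2 * (m + 1) - 1 - 2 * a i j = 2 * (m + 1 - a i j) - 1 := by omega
      rw [h2, (hC (m + 1 - a i j) (by omega)).1]
    rw [hsum]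
    have hlt := hA.2
    have h3 : 2 * (m + 1) - 1 - 2 * s i - 2 * ∑ j ∈ Finset.range (p i), A (m + 1 - a i j)
        = 2 * (m + 1 - s i - ∑ j ∈ Finset.range (p i), A (m + 1 - a i j)) - 1 := by omega
    rw [h3, (hC _ (by omega)).1]
end

section
/- Define C : ℕ⁺ → ℕ by C(n) = 0 if n is odd, and C(2m) = 2B(m) where B is the slow sequence in which every positive integer that is not a power of two appears exactly twice and every power of two appears exactly three times. Then C satisfies C(n) = C(n - 2 - C(n-2)) + C(n - 6 - C(n-6)) for all sufficiently large n, and C(n)/n has no limit: its lim sup is 1/2 and its lim inf is 0. -/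
/-!
Value `k` of `B` ends at position `slowLast k = 2k + ⌊log₂ k⌋ + 1`, so `B` is the lower adjoint
of `slowLast`. Since `n ↦ n - B n` is monotone, comparing it with its values at the ends of the
block of `k = B n` places `n - 1 - B (n - 1)` in the block of `⌈k/2⌉` and `n - 3 - B (n - 3)` in
that of `⌊k/2⌋`, which gives the recurrence; uniqueness of its solution identifies `B`. Weaving
doubles arguments and values, so `C` inherits the recurrence. Finally `slowLast k = 2k + O(log k)`
gives `B m / m → 1/2`, hence `C (2m) / 2m → 1/2`, while `C n ≤ n / 2` and `C` vanishes at odd `n`.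
-/

open Filter Topology

section LimsupSubseq

variable {ι α β : Type*} [ConditionallyCompleteLinearOrder β] [TopologicalSpace β] [OrderTopology β]
  {f : Filter ι} [f.NeBot] {g : Filter α} {u : α → β} {v : ι → α} {c : β}

theorem Filter.limsup_eq_of_eventually_le_of_tendsto_comp (hv : Tendsto v f g)
    (hle : ∀ᶠ x in g, u x ≤ c) (huv : Tendsto (u ∘ v) f (𝓝 c)) : limsup u g = c := by
  have hcobdd : (map v f).IsCoboundedUnder (· ≤ ·) u :=
    huv.isBoundedUnder_ge.isCoboundedUnder_le
  refine le_antisymm (limsup_le_of_le (hcobdd.mono (map_mono hv)) hle) ?_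
  calc c = limsup (u ∘ v) f := huv.limsup_eq.symm
    _ ≤ limsup u g := hv.limsup_comp_le_limsup hcobdd ⟨c, hle⟩

theorem Filter.liminf_eq_of_eventually_ge_of_tendsto_comp (hv : Tendsto v f g)
    (hle : ∀ᶠ x in g, c ≤ u x) (huv : Tendsto (u ∘ v) f (𝓝 c)) : liminf u g = c :=
  Filter.limsup_eq_of_eventually_le_of_tendsto_comp (β := βᵒᵈ) hv hle huv

end LimsupSubseq

theorem tendsto_natLog_div_atTop (b : ℕ) :
    Tendsto (fun n : ℕ => (Nat.log b n : ℝ) / n) atTop (𝓝 0) := by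
  have hlog : Tendsto (fun n : ℕ => Real.log n / n / Real.log b) atTop (𝓝 0) := by
    simpa using ((Real.tendsto_pow_log_div_mul_add_atTop 1 0 1 one_ne_zero).comp
      tendsto_natCast_atTop_atTop).div_const (Real.log b)
  refine tendsto_of_tendsto_of_tendsto_of_le_of_le tendsto_const_nhds hlog
    (fun n => by positivity) fun n => ?_
  calc (Nat.log b n : ℝ) / n ≤ Real.logb b n / n :=
        div_le_div_of_nonneg_right (Real.natLog_le_logb n b) n.cast_nonneg
    _ = Real.log n / n / Real.log b := by rw [Real.logb, div_right_comm]

theorem natLog_two_mul {p : ℕ} (hp : p ≠ 0) : Nat.log 2 (2 * p) = Nat.log 2 p + 1 := by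
  rw [mul_comm]; exact Nat.log_mul_base one_lt_two hp

theorem natLog_two_mul_add_one (p : ℕ) : Nat.log 2 (2 * p + 1) = Nat.log 2 (2 * p) := by
  rcases Nat.eq_zero_or_pos p with rfl | hp
  · simp
  rw [Nat.log_of_one_lt_of_le one_lt_two (by omega), Nat.log_of_one_lt_of_le one_lt_two (n := 2 * p)
    (by omega), show (2 * p + 1) / 2 = 2 * p / 2 by omega]

/-- Each `j` occurs twice in `B` and each power of two once more; `Nat.log 2 (2 * k)` counts the
powers of two up to `k`. -/
def slowLast (k : ℕ) : ℕ := 2 * k + Nat.log 2 (2 * k)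

theorem slowLast_zero : slowLast 0 = 0 := rfl

theorem slowLast_one : slowLast 1 = 3 := by decide

def slow (n : ℕ) : ℕ := Nat.find (⟨n, by unfold slowLast; omega⟩ : ∃ k, n ≤ slowLast k)

theorem slowLast_two_mul {p : ℕ} (hp : p ≠ 0) : slowLast (2 * p) = slowLast p + 2 * p + 1 := by
  simp only [slowLast, natLog_two_mul (show 2 * p ≠ 0 by omega)]; ring

theorem slowLast_two_mul_add_one (p : ℕ) : slowLast (2 * p + 1) = slowLast p + 2 * p + 3 := by
  simp only [slowLast, natLog_two_mul (show 2 * p + 1 ≠ 0 by omega), natLog_two_mul_add_one]; ring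

theorem slowLast_add_two_le (k : ℕ) : slowLast k + 2 ≤ slowLast (k + 1) := by
  have : Nat.log 2 (2 * k) ≤ Nat.log 2 (2 * (k + 1)) := Nat.log_mono_right (by omega)
  simp only [slowLast]; omega

theorem slowLast_succ_le (k : ℕ) : slowLast (k + 1) ≤ slowLast k + 3 := by
  have : Nat.log 2 (k + 1) ≤ Nat.log 2 (2 * k) := by
    rcases Nat.eq_zero_or_pos k with rfl | hk
    · simp
    · exact Nat.log_mono_right (by omega)
  simp only [slowLast, natLog_two_mul (show k + 1 ≠ 0 by omega)]; omega

theorem slowLast_strictMono : StrictMono slowLast :=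
  strictMono_nat_of_lt_succ fun k => by have := slowLast_add_two_le k; omega

theorem gc_slow_slowLast : GaloisConnection slow slowLast := fun n k => by
  simp only [slow, Nat.find_le_iff]
  exact ⟨fun ⟨j, hjk, hj⟩ => hj.trans (slowLast_strictMono.monotone hjk), fun h => ⟨k, le_rfl, h⟩⟩

theorem lt_slow_iff {n k : ℕ} : k < slow n ↔ slowLast k < n := by
  simpa only [not_le] using gc_slow_slowLast.le_iff_le.not

theorem slow_eq_of_mem {n k : ℕ} (h₁ : slowLast (k - 1) < n) (h₂ : n ≤ slowLast k) :
    slow n = k := by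
  have := gc_slow_slowLast.l_le h₂
  have := lt_slow_iff.2 h₁
  omega

theorem slow_slowLast (k : ℕ) : slow (slowLast k) = k :=
  le_antisymm (gc_slow_slowLast.l_u_le k)
    (slowLast_strictMono.le_iff_le.1 (gc_slow_slowLast.le_u_l _))

theorem slow_le_self (n : ℕ) : slow n ≤ n :=
  gc_slow_slowLast.l_le (by unfold slowLast; omega)

theorem slow_succ_le (n : ℕ) : slow (n + 1) ≤ slow n + 1 := by
  have := gc_slow_slowLast.le_u_l n
  have := slowLast_add_two_le (slow n)
  exact gc_slow_slowLast.l_le (by omega)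

theorem monotone_sub_slow : Monotone fun n => n - slow n :=
  monotone_nat_of_le_succ fun n => by
    have := slow_succ_le n
    omega

theorem slow_eq_half {m q : ℕ} (hm : m ≠ 0) (h₁ : slowLast (q - 1) < m + q)
    (h₂ : m + q + 3 ≤ slowLast (q + 1)) : slow m = (q + 1) / 2 := by
  obtain ⟨p, hp | hp⟩ := Nat.even_or_odd' (q + 1)
  · have hp0 : p ≠ 0 := by omega
    rw [hp, slowLast_two_mul hp0] at h₂
    rw [show (q + 1) / 2 = p by omega]
    refine slow_eq_of_mem ?_ (by omega)
    rcases Nat.lt_or_ge p 2 with hp2 | hp2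
    · rw [show p - 1 = 0 by omega, slowLast_zero]; omega
    · have := slowLast_two_mul (p := p - 1) (by omega)
      rw [show 2 * (p - 1) = q - 1 by omega] at this
      omega
  · rw [hp, slowLast_two_mul_add_one] at h₂
    have hp0 : p ≠ 0 := by rintro rfl; rw [slowLast_zero] at h₂; omega
    have := slowLast_two_mul_add_one (p - 1)
    rw [show 2 * (p - 1) + 1 = q - 1 by omega] at this
    rw [show (q + 1) / 2 = p by omega]
    exact slow_eq_of_mem (by omega) (by omega)

theorem slow_two : slow 2 = 1 := slow_eq_of_mem (by decide) (by decide)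

theorem slow_sub_one_sub_slow {n : ℕ} (hn : 3 ≤ n) :
    slow (n - 1 - slow (n - 1)) = (slow n + 1) / 2 := by
  set k := slow n
  have hk : 0 < k := lt_slow_iff.2 (by rw [slowLast_zero]; omega)
  have hk₁ : slowLast (k - 1) < n := lt_slow_iff.1 (by omega)
  have hk₂ : n ≤ slowLast k := gc_slow_slowLast.le_u_l n
  have hgap := slowLast_add_two_le (k - 1)
  rw [Nat.sub_add_cancel hk] at hgap
  have hlast : slow (slowLast k - 1) = k := slow_eq_of_mem (by omega) (by omega)
  have hlo : slowLast (k - 1) - slow (slowLast (k - 1)) ≤ n - 1 - slow (n - 1) :=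
    monotone_sub_slow (by omega)
  have hhi : n - 1 - slow (n - 1) ≤ slowLast k - 1 - slow (slowLast k - 1) :=
    monotone_sub_slow (by omega)
  have hpos : 2 - slow 2 ≤ n - 1 - slow (n - 1) := monotone_sub_slow (by omega)
  rw [slow_slowLast] at hlo
  rw [hlast] at hhi
  rw [slow_two] at hpos
  have := slowLast_add_two_le k
  have := slow_le_self (n - 1)
  exact slow_eq_half (by omega) (by omega) (by omega)

theorem slow_sub_three_sub_slow {n : ℕ} (hn : 5 ≤ n) :
    slow (n - 3 - slow (n - 3)) = slow n / 2 := by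
  set k := slow n
  have hk : 1 < k := lt_slow_iff.2 (by rw [slowLast_one]; omega)
  have hk₁ : slowLast (k - 1) < n := lt_slow_iff.1 (by omega)
  have hk₂ : n ≤ slowLast k := gc_slow_slowLast.le_u_l n
  have hgap₁ := slowLast_add_two_le (k - 1)
  have hgap₂ := slowLast_add_two_le (k - 2)
  have hgap₃ := slowLast_succ_le (k - 1)
  rw [Nat.sub_add_cancel (by omega)] at hgap₁ hgap₃
  rw [show k - 2 + 1 = k - 1 by omega] at hgap₂
  have hlast : slow (slowLast k - 3) = k - 1 :=
    slow_eq_of_mem (by rw [show k - 1 - 1 = k - 2 by omega]; omega) (by omega)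
  have hlo : slowLast (k - 2) - slow (slowLast (k - 2)) ≤ n - 3 - slow (n - 3) :=
    monotone_sub_slow (by omega)
  have hhi : n - 3 - slow (n - 3) ≤ slowLast k - 3 - slow (slowLast k - 3) :=
    monotone_sub_slow (by omega)
  have hpos : 2 - slow 2 ≤ n - 3 - slow (n - 3) := monotone_sub_slow (by omega)
  rw [slow_slowLast] at hlo
  rw [hlast] at hhi
  rw [slow_two] at hpos
  have := slow_le_self (n - 3)
  rw [show k / 2 = (k - 1 + 1) / 2 by omega]
  exact slow_eq_half (by omega) (by rw [show k - 1 - 1 = k - 2 by omega]; omega)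
    (by rw [Nat.sub_add_cancel (by omega)]; omega)

def NestedRec (B : ℕ → ℕ) : Prop :=
  ∀ n, 4 < n → B n = B (n - 1 - B (n - 1)) + B (n - 3 - B (n - 3))

theorem nestedRec_slow : NestedRec slow := fun n hn => by
  rw [slow_sub_one_sub_slow (by omega), slow_sub_three_sub_slow hn]
  omega

theorem two_mul_add_one_le_slowLast {k : ℕ} (hk : k ≠ 0) : 2 * k + 1 ≤ slowLast k := by
  have := Nat.log_pos one_lt_two (show 2 ≤ 2 * k by omega)
  unfold slowLast; omega

theorem two_mul_slow_le {m : ℕ} (hm : 2 ≤ m) : 2 * slow m ≤ m := by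
  rcases Nat.lt_or_ge (slow m) 2 with h | h
  · omega
  · have := lt_slow_iff.1 (show slow m - 1 < slow m by omega)
    have := two_mul_add_one_le_slowLast (show slow m - 1 ≠ 0 by omega)
    omega

theorem slow_lt_self {m : ℕ} (hm : 2 ≤ m) : slow m < m := by
  have := two_mul_slow_le hm
  have : 0 < slow m := lt_slow_iff.2 (by rw [slowLast_zero]; omega)
  omega

theorem le_two_mul_slow_add_log (m : ℕ) : m ≤ 2 * slow m + Nat.log 2 m + 1 := by
  have h₁ : m ≤ slowLast (slow m) := gc_slow_slowLast.le_u_l m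
  have h₂ : Nat.log 2 (2 * slow m) ≤ Nat.log 2 (2 * m) :=
    Nat.log_mono_right (by have := slow_le_self m; omega)
  rcases Nat.eq_zero_or_pos m with rfl | hm
  · omega
  · rw [natLog_two_mul hm.ne'] at h₂
    unfold slowLast at h₁
    omega

theorem slow_div_le_half {m : ℕ} (hm : 2 ≤ m) : (slow m : ℝ) / m ≤ 1 / 2 := by
  rw [div_le_iff₀ (by positivity)]
  have : (2 * slow m : ℝ) ≤ m := by exact_mod_cast two_mul_slow_le hm
  linarith

theorem tendsto_slow_div : Tendsto (fun m => (slow m : ℝ) / m) atTop (𝓝 (1 / 2)) := by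
  have hlower : Tendsto (fun m : ℕ => 1 / 2 - ((Nat.log 2 m : ℝ) / m + 1 / m) / 2) atTop
      (𝓝 (1 / 2)) := by
    simpa using tendsto_const_nhds.sub
      (((tendsto_natLog_div_atTop 2).add tendsto_one_div_atTop_nhds_zero_nat).div_const 2)
  refine tendsto_of_tendsto_of_tendsto_of_le_of_le' hlower tendsto_const_nhds ?_ ?_
  · filter_upwards [eventually_gt_atTop 0] with m hm
    have hm' : (0 : ℝ) < m := by exact_mod_cast hm
    have : (m : ℝ) ≤ 2 * slow m + Nat.log 2 m + 1 := by exact_mod_cast le_two_mul_slow_add_log m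
    rw [le_div_iff₀ hm']
    field_simp
    linarith
  · filter_upwards [eventually_ge_atTop 2] with m hm using slow_div_le_half hm

theorem NestedRec.unique {B B' : ℕ → ℕ} (hB : NestedRec B) (hB' : NestedRec B')
    (hlt : ∀ m, 2 ≤ m → B' m < m) (hinit : ∀ n, 1 ≤ n → n ≤ 4 → B n = B' n) :
    ∀ n, 1 ≤ n → B n = B' n := by
  intro n
  induction n using Nat.strong_induction_on with
  | _ n ih =>
    intro hn
    rcases le_or_gt n 4 with h4 | h4
    · exact hinit n hn h4
    have := hlt (n - 1) (by omega)
    have := hlt (n - 3) (by omega)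
    rw [hB n h4, hB' n h4, ih (n - 1) (by omega) (by omega), ih (n - 3) (by omega) (by omega),
      ih _ (by omega) (by omega), ih _ (by omega) (by omega)]

theorem NestedRec.weave {B C : ℕ → ℕ} (hB : NestedRec B) (hlt : ∀ m, 2 ≤ m → B m < m)
    (hCodd : ∀ n, Odd n → C n = 0) (hCeven : ∀ m, 1 ≤ m → C (2 * m) = 2 * B m) {n : ℕ}
    (hn : 10 ≤ n) : C n = C (n - 2 - C (n - 2)) + C (n - 6 - C (n - 6)) := by
  obtain ⟨m, rfl | rfl⟩ := Nat.even_or_odd' n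
  · have := hlt (m - 1) (by omega)
    have := hlt (m - 3) (by omega)
    rw [hCeven m (by omega), hB m (by omega),
      show 2 * m - 2 = 2 * (m - 1) by omega, show 2 * m - 6 = 2 * (m - 3) by omega,
      hCeven (m - 1) (by omega), hCeven (m - 3) (by omega),
      show 2 * (m - 1) - 2 * B (m - 1) = 2 * (m - 1 - B (m - 1)) by omega,
      show 2 * (m - 3) - 2 * B (m - 3) = 2 * (m - 3 - B (m - 3)) by omega,
      hCeven _ (by omega), hCeven _ (by omega)]
    ring
  · have h₂ : C (2 * m + 1 - 2) = 0 := hCodd _ ⟨m - 1, by omega⟩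
    have h₆ : C (2 * m + 1 - 6) = 0 := hCodd _ ⟨m - 3, by omega⟩
    rw [hCodd _ ⟨m, rfl⟩, h₂, h₆, Nat.sub_zero, Nat.sub_zero, h₂, h₆]

/-- Weaving the zero sequence with twice the slow sequence `B` (solution of
`B(n) = B(n-1-B(n-1)) + B(n-3-B(n-3))` with `B(1)=B(2)=B(3)=1`, `B(4)=2`)
gives a sequence `C` that satisfies `C(n) = C(n-2-C(n-2)) + C(n-6-C(n-6))` for
all sufficiently large `n`, while `C(n)/n` has lim sup `1/2` and lim inf `0`. -/
theorem weave_no_limit (B C : ℕ → ℕ)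
    (hB1 : B 1 = 1) (hB2 : B 2 = 1) (hB3 : B 3 = 1) (hB4 : B 4 = 2)
    (hBrec : ∀ n, 4 < n → B n = B (n - 1 - B (n - 1)) + B (n - 3 - B (n - 3)))
    (hCodd : ∀ n, Odd n → C n = 0)
    (hCeven : ∀ m, 1 ≤ m → C (2 * m) = 2 * B m) :
    (∃ N, ∀ n, N ≤ n → C n = C (n - 2 - C (n - 2)) + C (n - 6 - C (n - 6))) ∧
    Filter.limsup (fun n => (C n : ℝ) / (n : ℝ)) Filter.atTop = 1 / 2 ∧
    Filter.liminf (fun n => (C n : ℝ) / (n : ℝ)) Filter.atTop = 0 := by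
  have hB : ∀ n, 1 ≤ n → B n = slow n := NestedRec.unique hBrec nestedRec_slow
    (fun _ => slow_lt_self) fun n h₁ h₄ => by
      interval_cases n <;> simp only [hB1, hB2, hB3, hB4] <;>
        exact (slow_eq_of_mem (by decide) (by decide)).symm
  have hlt : ∀ m, 2 ≤ m → B m < m := fun m hm => hB m (by omega) ▸ slow_lt_self hm
  have hratio_even : ∀ m, 1 ≤ m → (C (2 * m) : ℝ) / (2 * m : ℕ) = slow m / m := fun m hm => by
    rw [hCeven m hm, hB m hm]; push_cast; exact mul_div_mul_left _ _ two_ne_zero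
  have hratio_odd : ∀ m, (C (2 * m + 1) : ℝ) / (2 * m + 1 : ℕ) = 0 := fun m => by
    simp [hCodd _ ⟨m, rfl⟩]
  have hle : ∀ᶠ n in atTop, (C n : ℝ) / n ≤ 1 / 2 := by
    filter_upwards [eventually_ge_atTop 4] with n hn
    obtain ⟨m, rfl | rfl⟩ := Nat.even_or_odd' n
    · exact hratio_even m (by omega) ▸ slow_div_le_half (by omega)
    · rw [hratio_odd]; norm_num
  refine ⟨⟨10, fun n => NestedRec.weave hBrec hlt hCodd hCeven⟩, ?_, ?_⟩
  · refine limsup_eq_of_eventually_le_of_tendsto_comp (tendsto_id.const_mul_atTop' two_pos) hle ?_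
    exact tendsto_slow_div.congr' ((eventually_ge_atTop 1).mono fun m hm => (hratio_even m hm).symm)
  · have hodd : Tendsto (fun m : ℕ => 2 * m + 1) atTop atTop :=
      tendsto_atTop_mono (fun m => show m ≤ 2 * m + 1 by omega) tendsto_id
    refine liminf_eq_of_eventually_ge_of_tendsto_comp hodd (.of_forall fun n => by positivity) ?_
    exact tendsto_const_nhds.congr fun m => (hratio_odd m).symm
end

section
/- The Conolly sequence C, defined by C(1)=1, C(2)=2, and C(n) = C(n - C(n-1)) + C(n-1 - C(n-2)) for n > 2, also satisfies the recurrence C(n) = C(n - C(n-2)) + C(n - 3 - C(n-5)) for all n > 5. -/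
namespace ConollyAux

def s2 (n : ℕ) : ℕ := (Nat.digits 2 n).sum

lemma s2_zero : s2 0 = 0 := by simp [s2]

lemma s2_two_mul (n : ℕ) : s2 (2 * n) = s2 n := by
  rcases Nat.eq_zero_or_pos n with h | h
  · simp [h]
  · unfold s2
    rw [Nat.digits_def' (by norm_num : (1:ℕ) < 2) (by omega)]
    have h1 : 2 * n % 2 = 0 := by omega
    have h2 : 2 * n / 2 = n := by omega
    rw [h1, h2]; simp

lemma s2_two_mul_add_one (n : ℕ) : s2 (2 * n + 1) = s2 n + 1 := by
  unfold s2
  rw [Nat.digits_def' (by norm_num : (1:ℕ) < 2) (by omega)]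
  have h1 : (2 * n + 1) % 2 = 1 := by omega
  have h2 : (2 * n + 1) / 2 = n := by omega
  rw [h1, h2]; simp [add_comm]

lemma s2_le (n : ℕ) : s2 n ≤ n := by
  induction n using Nat.strong_induction_on with
  | _ n ih =>
    rcases Nat.even_or_odd n with ⟨k, hk⟩ | ⟨k, hk⟩
    · rcases Nat.eq_zero_or_pos k with h | h
      · simp [hk, h, s2_zero]
      · have e : n = 2 * k := by omega
        rw [e, s2_two_mul]
        have := ih k (by omega)
        omega
    · have e : n = 2 * k + 1 := by omega
      rw [e, s2_two_mul_add_one]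
      have := ih k (by omega)
      omega

lemma s2_pos (n : ℕ) (h : 1 ≤ n) : 1 ≤ s2 n := by
  induction n using Nat.strong_induction_on with
  | _ n ih =>
    rcases Nat.even_or_odd n with ⟨k, hk⟩ | ⟨k, hk⟩
    · have e : n = 2 * k := by omega
      rw [e, s2_two_mul]
      exact ih k (by omega) (by omega)
    · have e : n = 2 * k + 1 := by omega
      rw [e, s2_two_mul_add_one]; omega

def g (n : ℕ) : ℕ := 2 * n - s2 n

lemma g_zero : g 0 = 0 := by simp [g, s2_zero]

lemma g_two_mul (n : ℕ) : g (2 * n) = g n + 2 * n := by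
  unfold g
  rw [s2_two_mul]
  have := s2_le n
  omega

lemma g_two_mul_add_one (n : ℕ) : g (2 * n + 1) = g n + 2 * n + 1 := by
  unfold g
  rw [s2_two_mul_add_one]
  have := s2_le n
  omega

lemma le_g_self (n : ℕ) : n ≤ g n := by
  unfold g; have := s2_le n; omega

lemma g_lt_succ (n : ℕ) : g n < g (n + 1) := by
  induction n using Nat.strong_induction_on with
  | _ n ih =>
    rcases Nat.even_or_odd n with ⟨k, hk⟩ | ⟨k, hk⟩
    · have e : n = 2 * k := by omega
      subst e
      rw [g_two_mul, g_two_mul_add_one]; omega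
    · have e : n = 2 * k + 1 := by omega
      subst e
      have e2 : 2 * k + 1 + 1 = 2 * (k + 1) := by ring
      rw [e2, g_two_mul, g_two_mul_add_one]
      have := ih k (by omega)
      omega

lemma g_mono : Monotone g := (strictMono_nat_of_lt_succ g_lt_succ).monotone

def f (n : ℕ) : ℕ := Nat.find (⟨n, le_g_self n⟩ : ∃ m, n ≤ g m)

lemma f_spec (n : ℕ) : n ≤ g (f n) := by unfold f; exact Nat.find_spec (⟨n, le_g_self n⟩ : ∃ m, n ≤ g m)

lemma f_min {n k : ℕ} (h : k < f n) : g k < n := by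
  have := Nat.find_min (⟨n, le_g_self n⟩ : ∃ m, n ≤ g m) h
  omega

lemma f_le (n : ℕ) : f n ≤ n := Nat.find_le (le_g_self n)

lemma f_mono : Monotone f := by
  intro a b h
  exact Nat.find_min' _ (le_trans h (f_spec b))

lemma f_eq_of {s n : ℕ} (h1 : g s < n) (h2 : n ≤ g (s + 1)) : f n = s + 1 := by
  rw [f, Nat.find_eq_iff]
  refine ⟨h2, fun k hk hc => ?_⟩
  have : g k ≤ g s := g_mono (by omega)
  omega

lemma f_pos {n : ℕ} (h : 1 ≤ n) : 1 ≤ f n := by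
  by_contra hc
  have h0 : f n = 0 := by omega
  have := f_spec n
  rw [h0, g_zero] at this
  omega

lemma g_one : g 1 = 1 := by have := g_two_mul_add_one 0; simpa [g_zero] using this
lemma g_two : g 2 = 3 := by have := g_two_mul 1; norm_num [g_one] at this; omega
lemma g_three : g 3 = 4 := by have := g_two_mul_add_one 1; norm_num [g_one] at this; omega
lemma g_four : g 4 = 7 := by have := g_two_mul 2; norm_num [g_two] at this; omega
lemma g_five : g 5 = 8 := by have := g_two_mul_add_one 2; norm_num [g_two] at this; omega
lemma g_six : g 6 = 10 := by have := g_two_mul 3; norm_num [g_three] at this; omega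

lemma f_one : f 1 = 1 := f_eq_of (by rw [g_zero]; omega) (by norm_num [g_one])
lemma f_two : f 2 = 2 := by
  have := f_eq_of (s := 1) (n := 2) (by norm_num [g_one]) (by norm_num [g_two])
  omega
lemma f_three : f 3 = 2 := by
  have := f_eq_of (s := 1) (n := 3) (by norm_num [g_one]) (by norm_num [g_two])
  omega
lemma f_four : f 4 = 3 := by
  have := f_eq_of (s := 2) (n := 4) (by norm_num [g_two]) (by norm_num [g_three])
  omega
lemma f_five : f 5 = 4 := by
  have := f_eq_of (s := 3) (n := 5) (by norm_num [g_three]) (by norm_num [g_four])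
  omega
lemma f_six : f 6 = 4 := by
  have := f_eq_of (s := 3) (n := 6) (by norm_num [g_three]) (by norm_num [g_four])
  omega
lemma f_seven : f 7 = 4 := by
  have := f_eq_of (s := 3) (n := 7) (by norm_num [g_three]) (by norm_num [g_four])
  omega
lemma f_eight : f 8 = 5 := by
  have := f_eq_of (s := 4) (n := 8) (by norm_num [g_four]) (by norm_num [g_five])
  omega
lemma f_nine : f 9 = 6 := by
  have := f_eq_of (s := 5) (n := 9) (by norm_num [g_five]) (by norm_num [g_six])
  omega



lemma fB : ∀ n, 3 ≤ n → f n = f (n - f (n - 1)) + f (n - 1 - f (n - 2)) := by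
  intro n hn
  rcases lt_or_ge n 6 with h6 | h6
  · interval_cases n
    · norm_num [f_one, f_two, f_three]
    · norm_num [f_one, f_two, f_three, f_four]
    · norm_num [f_two, f_three, f_four, f_five]
  · have hm4 : 4 ≤ f n := by have := f_mono h6; rw [f_six] at this; omega
    set m := f n with hm
    have h1 : g (m - 1) < n := f_min (by omega)
    have h2 : n ≤ g m := f_spec n
    rcases Nat.even_or_odd m with ⟨t, ht⟩ | ⟨t, ht⟩
    · -- m = 2t, t ≥ 2
      have ht2 : 2 ≤ t := by omega
      have e1 : g (2 * (t - 1)) = g (t - 1) + 2 * (t - 1) := g_two_mul (t - 1)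
      have e2 : g (2 * (t - 1) + 1) = g (t - 1) + 2 * (t - 1) + 1 := g_two_mul_add_one (t - 1)
      have e3 : g (2 * t) = g t + 2 * t := g_two_mul t
      have e4 : g (2 * (t - 2) + 1) = g (t - 2) + 2 * (t - 2) + 1 := g_two_mul_add_one (t - 2)
      have e5 : g (2 * (t - 1) + 1 + 1) = g (2 * t) := by
        rw [show 2 * (t - 1) + 1 + 1 = 2 * t by omega]
      have e6 : g (2 * (t - 2) + 1 + 1) = g (2 * (t - 1)) := by
        rw [show 2 * (t - 2) + 1 + 1 = 2 * (t - 1) by omega]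
      have eT1 : g (t - 1 + 1) = g t := by rw [show t - 1 + 1 = t by omega]
      have hAB : g (t - 1) < g t := by
        have := g_lt_succ (t - 1); rwa [show t - 1 + 1 = t by omega] at this
      have hBC : g t < g (t + 1) := g_lt_succ t
      have hA'A : g (t - 2) < g (t - 1) := by
        have := g_lt_succ (t - 2); rwa [show t - 2 + 1 = t - 1 by omega] at this
      rw [show m - 1 = 2 * (t - 1) + 1 by omega] at h1
      rw [show m = 2 * t by omega] at h2
      rcases (by omega : n = g (t - 1) + 2 * t ∨ n = g (t - 1) + 2 * t + 1 ∨
          g (t - 1) + 2 * t + 2 ≤ n) with hc | hc | hc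
      · have hf1 : f (n - 1) = 2 * (t - 1) + 1 := f_eq_of (by omega) (by omega)
        have hf2 : f (n - 2) = 2 * (t - 2) + 1 + 1 := f_eq_of (by omega) (by omega)
        have ha : n - f (n - 1) = g (t - 1) + 1 := by omega
        have hb : n - 1 - f (n - 2) = g (t - 1) + 1 := by omega
        have hfa : f (g (t - 1) + 1) = t - 1 + 1 := f_eq_of (by omega) (by omega)
        rw [ha, hb, hfa]; omega
      · have hf1 : f (n - 1) = 2 * (t - 1) + 1 + 1 := f_eq_of (by omega) (by omega)
        have hf2 : f (n - 2) = 2 * (t - 1) + 1 := f_eq_of (by omega) (by omega)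
        have ha : n - f (n - 1) = g (t - 1) + 1 := by omega
        have hb : n - 1 - f (n - 2) = g (t - 1) + 1 := by omega
        have hfa : f (g (t - 1) + 1) = t - 1 + 1 := f_eq_of (by omega) (by omega)
        rw [ha, hb, hfa]; omega
      · have hf1 : f (n - 1) = 2 * (t - 1) + 1 + 1 := f_eq_of (by omega) (by omega)
        have hf2 : f (n - 2) = 2 * (t - 1) + 1 + 1 := f_eq_of (by omega) (by omega)
        have ha : n - f (n - 1) = n - 2 * t := by omega
        have hb : n - 1 - f (n - 2) = n - 1 - 2 * t := by omega
        have hfa : f (n - 2 * t) = t - 1 + 1 := f_eq_of (by omega) (by omega)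
        have hfb : f (n - 1 - 2 * t) = t - 1 + 1 := f_eq_of (by omega) (by omega)
        rw [ha, hb, hfa, hfb]; omega
    · -- m = 2t+1, t ≥ 2
      have ht2 : 2 ≤ t := by omega
      have e1 : g (2 * (t - 1)) = g (t - 1) + 2 * (t - 1) := g_two_mul (t - 1)
      have e2 : g (2 * (t - 1) + 1) = g (t - 1) + 2 * (t - 1) + 1 := g_two_mul_add_one (t - 1)
      have e3 : g (2 * t) = g t + 2 * t := g_two_mul t
      have e5 : g (2 * (t - 1) + 1 + 1) = g (2 * t) := by
        rw [show 2 * (t - 1) + 1 + 1 = 2 * t by omega]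
      have e7 : g (2 * t + 1) = g t + 2 * t + 1 := g_two_mul_add_one t
      have eT1 : g (t - 1 + 1) = g t := by rw [show t - 1 + 1 = t by omega]
      have hAB : g (t - 1) < g t := by
        have := g_lt_succ (t - 1); rwa [show t - 1 + 1 = t by omega] at this
      have hBC : g t < g (t + 1) := g_lt_succ t
      rw [show m - 1 = 2 * t by omega] at h1
      rw [ht] at h2
      have hn_eq : n = g t + 2 * t + 1 := by omega
      have hf1 : f (n - 1) = 2 * (t - 1) + 1 + 1 := f_eq_of (by omega) (by omega)
      have hf2 : f (n - 2) = 2 * (t - 1) + 1 + 1 := f_eq_of (by omega) (by omega)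
      have ha : n - f (n - 1) = g t + 1 := by omega
      have hb : n - 1 - f (n - 2) = g t := by omega
      have hfa : f (g t + 1) = t + 1 := f_eq_of (by omega) (by omega)
      have hfb : f (g t) = t - 1 + 1 := f_eq_of (by omega) (by omega)
      rw [ha, hb, hfa, hfb]; omega



lemma g_gap_even {t : ℕ} (h2 : 2 ≤ t) (h : Even t) :
    g (t - 1) + 2 ≤ g t ∧ g (t - 1) = g (t - 2) + 1 := by
  obtain ⟨u, hu⟩ := h
  have hu1 : 1 ≤ u := by omega
  have a := g_two_mul u
  have b := g_two_mul (u - 1)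
  have c := g_two_mul_add_one (u - 1)
  have d := g_lt_succ (u - 1)
  rw [show 2 * u = t by omega] at a
  rw [show 2 * (u - 1) = t - 2 by omega] at b
  rw [show 2 * (u - 1) + 1 = t - 1 by omega] at c
  rw [show u - 1 + 1 = u by omega] at d
  omega

lemma g_gap_odd {t : ℕ} (h2 : 3 ≤ t) (h : Odd t) :
    g t = g (t - 1) + 1 ∧ g (t - 2) + 2 ≤ g (t - 1) := by
  obtain ⟨u, hu⟩ := h
  have hu1 : 1 ≤ u := by omega
  have a := g_two_mul u
  have b := g_two_mul_add_one u
  have c := g_two_mul_add_one (u - 1)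
  have d := g_lt_succ (u - 1)
  rw [show 2 * u = t - 1 by omega] at a
  rw [show 2 * u + 1 = t by omega] at b
  rw [show 2 * (u - 1) + 1 = t - 2 by omega] at c
  rw [show u - 1 + 1 = u by omega] at d
  omega

lemma fH : ∀ n, 6 ≤ n → f n = f (n - f (n - 2)) + f (n - 3 - f (n - 5)) := by
  intro n hn
  rcases lt_or_ge n 9 with h9 | h9
  · interval_cases n
    · norm_num [f_one, f_two, f_three, f_four, f_six]
    · norm_num [f_two, f_three, f_five, f_seven]
    · norm_num [f_three, f_four, f_six, f_eight]
  · have hm6 : 6 ≤ f n := by have := f_mono h9; rw [f_nine] at this; omega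
    set m := f n with hm
    have h1 : g (m - 1) < n := f_min (by omega)
    have h2 : n ≤ g m := f_spec n
    rcases Nat.even_or_odd m with ⟨t, ht⟩ | ⟨t, ht⟩
    · -- m = 2t, t ≥ 3
      have ht3 : 3 ≤ t := by omega
      have e1 : g (2 * (t - 1)) = g (t - 1) + 2 * (t - 1) := g_two_mul (t - 1)
      have e2 : g (2 * (t - 1) + 1) = g (t - 1) + 2 * (t - 1) + 1 := g_two_mul_add_one (t - 1)
      have e3 : g (2 * t) = g t + 2 * t := g_two_mul t
      have e4 : g (2 * (t - 2) + 1) = g (t - 2) + 2 * (t - 2) + 1 := g_two_mul_add_one (t - 2)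
      have e4' : g (2 * (t - 2)) = g (t - 2) + 2 * (t - 2) := g_two_mul (t - 2)
      have e5 : g (2 * (t - 1) + 1 + 1) = g (2 * t) := by
        rw [show 2 * (t - 1) + 1 + 1 = 2 * t by omega]
      have e6 : g (2 * (t - 2) + 1 + 1) = g (2 * (t - 1)) := by
        rw [show 2 * (t - 2) + 1 + 1 = 2 * (t - 1) by omega]
      have e6' : g (2 * (t - 3) + 1 + 1) = g (2 * (t - 2)) := by
        rw [show 2 * (t - 3) + 1 + 1 = 2 * (t - 2) by omega]
      have mono57 : g (2 * (t - 3) + 1) < g (2 * (t - 3) + 1 + 1) := g_lt_succ _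
      have eT1 : g (t - 1 + 1) = g t := by rw [show t - 1 + 1 = t by omega]
      have eT2 : g (t - 2 + 1) = g (t - 1) := by rw [show t - 2 + 1 = t - 1 by omega]
      have hAB : g (t - 1) < g t := by
        have := g_lt_succ (t - 1); rwa [show t - 1 + 1 = t by omega] at this
      have hBC : g t < g (t + 1) := g_lt_succ t
      have hA'A : g (t - 2) < g (t - 1) := by
        have := g_lt_succ (t - 2); rwa [show t - 2 + 1 = t - 1 by omega] at this
      rw [show m - 1 = 2 * (t - 1) + 1 by omega] at h1
      rw [show m = 2 * t by omega] at h2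
      rcases (by omega : n = g (t - 1) + 2 * t ∨ n = g (t - 1) + 2 * t + 1 ∨
          n = g (t - 1) + 2 * t + 2 ∨ n = g (t - 1) + 2 * t + 3 ∨
          n = g (t - 1) + 2 * t + 4 ∨ g (t - 1) + 2 * t + 5 ≤ n)
        with hc | hc | hc | hc | hc | hc
      · -- p = 0
        have hf2 : f (n - 2) = 2 * (t - 2) + 1 + 1 := f_eq_of (by omega) (by omega)
        have ha : n - f (n - 2) = g (t - 1) + 2 := by omega
        rcases Nat.even_or_odd t with hpar | hpar
        · obtain ⟨u, hu⟩ := hpar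
          have ht4 : 4 ≤ t := by omega
          have hge := g_gap_even (by omega) ⟨u, hu⟩
          have hfa : f (g (t - 1) + 2) = t - 1 + 1 := f_eq_of (by omega) (by omega)
          have hf5 : f (n - 5) = 2 * (t - 3) + 1 + 1 := f_eq_of (by omega) (by omega)
          have hb : n - 3 - f (n - 5) = g (t - 1) + 1 := by omega
          have hfb : f (g (t - 1) + 1) = t - 1 + 1 := f_eq_of (by omega) (by omega)
          rw [ha, hb, hfa, hfb]; omega
        · have hge := g_gap_odd (by omega) hpar
          have hfa : f (g (t - 1) + 2) = t + 1 := f_eq_of (by omega) (by omega)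
          rcases (by omega : g (t - 2) + 2 = g (t - 1) ∨ g (t - 2) + 3 ≤ g (t - 1))
            with hd | hd
          · have hf5 : f (n - 5) = 2 * (t - 2) + 1 := f_eq_of (by omega) (by omega)
            have hb : n - 3 - f (n - 5) = g (t - 1) := by omega
            have hfb : f (g (t - 1)) = t - 2 + 1 := f_eq_of (by omega) (by omega)
            rw [ha, hb, hfa, hfb]; omega
          · have hf5 : f (n - 5) = 2 * (t - 2) + 1 + 1 := f_eq_of (by omega) (by omega)
            have hb : n - 3 - f (n - 5) = g (t - 1) - 1 := by omega
            have hfb : f (g (t - 1) - 1) = t - 2 + 1 := f_eq_of (by omega) (by omega)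
            rw [ha, hb, hfa, hfb]; omega
      · -- p = 1
        have hf2 : f (n - 2) = 2 * (t - 1) + 1 := f_eq_of (by omega) (by omega)
        have ha : n - f (n - 2) = g (t - 1) + 2 := by omega
        rcases Nat.even_or_odd t with hpar | hpar
        · have hge := g_gap_even (by omega) hpar
          have hfa : f (g (t - 1) + 2) = t - 1 + 1 := f_eq_of (by omega) (by omega)
          have hf5 : f (n - 5) = 2 * (t - 2) + 1 := f_eq_of (by omega) (by omega)
          have hb : n - 3 - f (n - 5) = g (t - 1) + 1 := by omega
          have hfb : f (g (t - 1) + 1) = t - 1 + 1 := f_eq_of (by omega) (by omega)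
          rw [ha, hb, hfa, hfb]; omega
        · have hge := g_gap_odd (by omega) hpar
          have hfa : f (g (t - 1) + 2) = t + 1 := f_eq_of (by omega) (by omega)
          have hf5 : f (n - 5) = 2 * (t - 2) + 1 + 1 := f_eq_of (by omega) (by omega)
          have hb : n - 3 - f (n - 5) = g (t - 1) := by omega
          have hfb : f (g (t - 1)) = t - 2 + 1 := f_eq_of (by omega) (by omega)
          rw [ha, hb, hfa, hfb]; omega
      · -- p = 2
        have hΔ : g (t - 1) + 2 ≤ g t := by omega
        have hf2 : f (n - 2) = 2 * (t - 1) + 1 + 1 := f_eq_of (by omega) (by omega)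
        have ha : n - f (n - 2) = g (t - 1) + 2 := by omega
        have hfa : f (g (t - 1) + 2) = t - 1 + 1 := f_eq_of (by omega) (by omega)
        have hf5 : f (n - 5) = 2 * (t - 2) + 1 + 1 := f_eq_of (by omega) (by omega)
        have hb : n - 3 - f (n - 5) = g (t - 1) + 1 := by omega
        have hfb : f (g (t - 1) + 1) = t - 1 + 1 := f_eq_of (by omega) (by omega)
        rw [ha, hb, hfa, hfb]; omega
      · -- p = 3
        have hΔ : g (t - 1) + 3 ≤ g t := by omega
        have hf2 : f (n - 2) = 2 * (t - 1) + 1 + 1 := f_eq_of (by omega) (by omega)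
        have ha : n - f (n - 2) = g (t - 1) + 3 := by omega
        have hfa : f (g (t - 1) + 3) = t - 1 + 1 := f_eq_of (by omega) (by omega)
        have hf5 : f (n - 5) = 2 * (t - 2) + 1 + 1 := f_eq_of (by omega) (by omega)
        have hb : n - 3 - f (n - 5) = g (t - 1) + 2 := by omega
        have hfb : f (g (t - 1) + 2) = t - 1 + 1 := f_eq_of (by omega) (by omega)
        rw [ha, hb, hfa, hfb]; omega
      · -- p = 4
        have hΔ : g (t - 1) + 4 ≤ g t := by omega
        have hf2 : f (n - 2) = 2 * (t - 1) + 1 + 1 := f_eq_of (by omega) (by omega)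
        have ha : n - f (n - 2) = g (t - 1) + 4 := by omega
        have hfa : f (g (t - 1) + 4) = t - 1 + 1 := f_eq_of (by omega) (by omega)
        have hf5 : f (n - 5) = 2 * (t - 1) + 1 := f_eq_of (by omega) (by omega)
        have hb : n - 3 - f (n - 5) = g (t - 1) + 2 := by omega
        have hfb : f (g (t - 1) + 2) = t - 1 + 1 := f_eq_of (by omega) (by omega)
        rw [ha, hb, hfa, hfb]; omega
      · -- p ≥ 5
        have hf2 : f (n - 2) = 2 * (t - 1) + 1 + 1 := f_eq_of (by omega) (by omega)
        have ha : n - f (n - 2) = n - 2 * t := by omega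
        have hfa : f (n - 2 * t) = t - 1 + 1 := f_eq_of (by omega) (by omega)
        have hf5 : f (n - 5) = 2 * (t - 1) + 1 + 1 := f_eq_of (by omega) (by omega)
        have hb : n - 3 - f (n - 5) = n - 3 - 2 * t := by omega
        have hfb : f (n - 3 - 2 * t) = t - 1 + 1 := f_eq_of (by omega) (by omega)
        rw [ha, hb, hfa, hfb]; omega
    · -- m = 2t+1, t ≥ 3
      have ht3 : 3 ≤ t := by omega
      have e1 : g (2 * (t - 1)) = g (t - 1) + 2 * (t - 1) := g_two_mul (t - 1)
      have e2 : g (2 * (t - 1) + 1) = g (t - 1) + 2 * (t - 1) + 1 := g_two_mul_add_one (t - 1)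
      have e3 : g (2 * t) = g t + 2 * t := g_two_mul t
      have e4 : g (2 * (t - 2) + 1) = g (t - 2) + 2 * (t - 2) + 1 := g_two_mul_add_one (t - 2)
      have e4' : g (2 * (t - 2)) = g (t - 2) + 2 * (t - 2) := g_two_mul (t - 2)
      have e5 : g (2 * (t - 1) + 1 + 1) = g (2 * t) := by
        rw [show 2 * (t - 1) + 1 + 1 = 2 * t by omega]
      have e6 : g (2 * (t - 2) + 1 + 1) = g (2 * (t - 1)) := by
        rw [show 2 * (t - 2) + 1 + 1 = 2 * (t - 1) by omega]
      have e7 : g (2 * t + 1) = g t + 2 * t + 1 := g_two_mul_add_one t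
      have eT1 : g (t - 1 + 1) = g t := by rw [show t - 1 + 1 = t by omega]
      have hAB : g (t - 1) < g t := by
        have := g_lt_succ (t - 1); rwa [show t - 1 + 1 = t by omega] at this
      have hBC : g t < g (t + 1) := g_lt_succ t
      have hA'A : g (t - 2) < g (t - 1) := by
        have := g_lt_succ (t - 2); rwa [show t - 2 + 1 = t - 1 by omega] at this
      rw [show m - 1 = 2 * t by omega] at h1
      rw [ht] at h2
      have hn_eq : n = g t + 2 * t + 1 := by omega
      have hf2 : f (n - 2) = 2 * (t - 1) + 1 + 1 := f_eq_of (by omega) (by omega)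
      have ha : n - f (n - 2) = g t + 1 := by omega
      have hfa : f (g t + 1) = t + 1 := f_eq_of (by omega) (by omega)
      rcases (by omega : g t = g (t - 1) + 1 ∨ g t = g (t - 1) + 2 ∨
          g t = g (t - 1) + 3 ∨ g (t - 1) + 4 ≤ g t) with hd | hd | hd | hd
      · have hf5 : f (n - 5) = 2 * (t - 2) + 1 + 1 := f_eq_of (by omega) (by omega)
        have hb : n - 3 - f (n - 5) = g t := by omega
        have hfb : f (g t) = t - 1 + 1 := f_eq_of (by omega) (by omega)
        rw [ha, hb, hfa, hfb]; omega
      · have hf5 : f (n - 5) = 2 * (t - 2) + 1 + 1 := f_eq_of (by omega) (by omega)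
        have hb : n - 3 - f (n - 5) = g t := by omega
        have hfb : f (g t) = t - 1 + 1 := f_eq_of (by omega) (by omega)
        rw [ha, hb, hfa, hfb]; omega
      · have hf5 : f (n - 5) = 2 * (t - 1) + 1 := f_eq_of (by omega) (by omega)
        have hb : n - 3 - f (n - 5) = g t - 1 := by omega
        have hfb : f (g t - 1) = t - 1 + 1 := f_eq_of (by omega) (by omega)
        rw [ha, hb, hfa, hfb]; omega
      · have hf5 : f (n - 5) = 2 * (t - 1) + 1 + 1 := f_eq_of (by omega) (by omega)
        have hb : n - 3 - f (n - 5) = g t - 2 := by omega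
        have hfb : f (g t - 2) = t - 1 + 1 := f_eq_of (by omega) (by omega)
        rw [ha, hb, hfa, hfb]; omega


lemma C_eq_f (C : ℕ → ℕ) (h1 : C 1 = 1) (h2 : C 2 = 2)
    (hrec : ∀ n, 2 < n → C n = C (n - C (n - 1)) + C (n - 1 - C (n - 2))) :
    ∀ n, 1 ≤ n → C n = f n := by
  intro n
  induction n using Nat.strong_induction_on with
  | _ n ih =>
    intro hn
    rcases (by omega : n = 1 ∨ n = 2 ∨ 3 ≤ n) with h | h | h
    · rw [h, h1, f_one]
    · rw [h, h2, f_two]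
    · have ih1 : C (n - 1) = f (n - 1) := ih (n - 1) (by omega) (by omega)
      have ih2 : C (n - 2) = f (n - 2) := ih (n - 2) (by omega) (by omega)
      have hle1 : f (n - 1) ≤ n - 1 := f_le _
      have hpos1 : 1 ≤ f (n - 1) := f_pos (by omega)
      have hle2 : f (n - 2) ≤ n - 2 := f_le _
      have hpos2 : 1 ≤ f (n - 2) := f_pos (by omega)
      have iha : C (n - f (n - 1)) = f (n - f (n - 1)) := ih _ (by omega) (by omega)
      have ihb : C (n - 1 - f (n - 2)) = f (n - 1 - f (n - 2)) := ih _ (by omega) (by omega)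
      rw [hrec n (by omega), ih1, ih2, iha, ihb]
      exact (fB n (by omega)).symm

end ConollyAux

/-- The Conolly sequence, defined by `C(1)=1`, `C(2)=2`, and
`C(n) = C(n - C(n-1)) + C(n-1 - C(n-2))` for `n > 2`, also satisfies
`C(n) = C(n - C(n-2)) + C(n - 3 - C(n-5))` for all `n > 5`. -/
theorem conolly_satisfies_H (C : ℕ → ℕ)
    (h1 : C 1 = 1) (h2 : C 2 = 2)
    (hrec : ∀ n, 2 < n → C n = C (n - C (n - 1)) + C (n - 1 - C (n - 2))) :
    ∀ n, 5 < n → C n = C (n - C (n - 2)) + C (n - 3 - C (n - 5)) := by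
  intro n hn
  have key := ConollyAux.C_eq_f C h1 h2 hrec
  have c2 : C (n - 2) = ConollyAux.f (n - 2) := key _ (by omega)
  have c5 : C (n - 5) = ConollyAux.f (n - 5) := key _ (by omega)
  have cn : C n = ConollyAux.f n := key _ (by omega)
  have hle2 : ConollyAux.f (n - 2) ≤ n - 2 := ConollyAux.f_le _
  have hle5 : ConollyAux.f (n - 5) ≤ n - 5 := ConollyAux.f_le _
  rw [cn, c2, c5]
  have ca : C (n - ConollyAux.f (n - 2)) = ConollyAux.f (n - ConollyAux.f (n - 2)) :=
    key _ (by omega)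
  have cb : C (n - 3 - ConollyAux.f (n - 5)) = ConollyAux.f (n - 3 - ConollyAux.f (n - 5)) :=
    key _ (by omega)
  rw [ca, cb]
  exact ConollyAux.fH n (by omega)
end

section
/- The Conolly sequence is the unique sequence H satisfying H(1)=1, H(2)=H(3)=2, H(4)=3, H(5)=4, and H(n) = H(n - H(n-2)) + H(n - 3 - H(n-5)) for n > 5; equivalently, this recursion with these initial conditions has a slow solution whose frequency sequence is the ruler function r_m. -/
/-!
Let `L m = r 1 + ⋯ + r m`. The Conolly sequence takes the value `m + 1` exactly on
`(L m, L (m + 1)]`, i.e. `C n = #{m | L m < n}`; this gives slowness and the frequencies at once.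
Since `r (2 ^ k + i) = r i` for `0 < i < 2 ^ k`, we get `L (2 ^ k + s) = L (2 ^ k) + L s`, and from
it the self-similarity `C (2 ^ (k + 1) + j) = 2 ^ k + C (j + 1)` for
`-(k + 1) ≤ j ≤ 2 ^ (k + 1) - 2`, where `C` is extended by `0` to nonpositive integers. Applied
at two consecutive levels, this identity turns the recursion at `2 ^ (k + 1) + j` into the
recursion at `j + 1`, which holds by induction (trivially when `j + 1 ≤ 0`); a finite check covers
`n < 126`. Any solution of the recursion agrees with `C`, because all indices on the right-hand
side are smaller than `n`.
-/

theorem Nat.lt_count_iff_of_antitone {p : ℕ → Prop} [DecidablePred p] (hp : Antitone p)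
    {n m : ℕ} (hn : ∀ k, p k → k < n) : m < Nat.count p n ↔ p m := by
  constructor
  · intro hm
    by_contra hpm
    have hle : Nat.count p n ≤ m := by
      rcases le_or_gt n m with hnm | hmn
      · exact (Nat.count_le p).trans hnm
      obtain ⟨d, rfl⟩ := Nat.exists_eq_add_of_le hmn.le
      rw [Nat.count_add,
        Nat.count_iff_forall_not.2 fun k _ hk => hpm (hp (Nat.le_add_right m k) hk),
        add_zero]
      exact Nat.count_le p
    omega
  · intro hpm
    calc m < m + 1 := m.lt_succ_self
      _ = Nat.count p (m + 1) :=
        (Nat.count_iff_forall.2 fun k hk => hp (Nat.le_of_lt_succ hk) hpm).symm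
      _ ≤ Nat.count p n := Nat.count_monotone p (hn m hpm)

def ruler (m : ℕ) : ℕ := padicValNat 2 m + 1

lemma two_pow_dvd_two_pow_add_iff {k e i : ℕ} (hi₀ : 0 < i) (hi : i < 2 ^ k) :
    2 ^ e ∣ 2 ^ k + i ↔ 2 ^ e ∣ i := by
  rcases le_or_gt e k with hek | hke
  · exact Nat.dvd_add_right (pow_dvd_pow 2 hek)
  have hndvd : ¬ 2 ^ k ∣ i := fun h => absurd (Nat.le_of_dvd hi₀ h) (by omega)
  have hdvd : 2 ^ k ∣ 2 ^ e := pow_dvd_pow 2 hke.le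
  exact iff_of_false (fun h => hndvd ((Nat.dvd_add_right dvd_rfl).1 (hdvd.trans h)))
    (fun h => hndvd (hdvd.trans h))

lemma ruler_two_pow_add {k i : ℕ} (hi₀ : 0 < i) (hi : i < 2 ^ k) :
    ruler (2 ^ k + i) = ruler i := by
  have : Fact (Nat.Prime 2) := ⟨Nat.prime_two⟩
  rw [ruler, ruler, add_left_inj]
  refine eq_of_forall_le_iff fun e => ?_
  rw [← padicValNat_dvd_iff_le (by omega), ← padicValNat_dvd_iff_le (by omega),
    two_pow_dvd_two_pow_add_iff hi₀ hi]

lemma ruler_two_pow (k : ℕ) : ruler (2 ^ k) = k + 1 := by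
  rw [ruler, padicValNat.prime_pow]

/-- The last index at which the Conolly sequence takes the value `m`. -/
def rulerSum : ℕ → ℕ
  | 0 => 0
  | m + 1 => rulerSum m + ruler (m + 1)

lemma rulerSum_succ (m : ℕ) : rulerSum (m + 1) = rulerSum m + ruler (m + 1) := rfl

lemma rulerSum_strictMono : StrictMono rulerSum :=
  strictMono_nat_of_lt_succ fun m => by rw [rulerSum_succ, ruler]; omega

lemma le_rulerSum (m : ℕ) : m ≤ rulerSum m := rulerSum_strictMono.le_apply

lemma rulerSum_two_pow_add {k s : ℕ} (hs : s < 2 ^ k) :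
    rulerSum (2 ^ k + s) = rulerSum (2 ^ k) + rulerSum s := by
  induction s with
  | zero => rfl
  | succ s ih =>
    rw [← add_assoc, rulerSum_succ, ih (by omega), add_assoc, add_assoc,
      ruler_two_pow_add (by omega) hs, rulerSum_succ]

lemma rulerSum_two_pow_sub_one (k : ℕ) : rulerSum (2 ^ k - 1) + (k + 1) = rulerSum (2 ^ k) := by
  have h := rulerSum_succ (2 ^ k - 1)
  rwa [Nat.sub_add_cancel Nat.one_le_two_pow, ruler_two_pow, eq_comm] at h

lemma rulerSum_two_pow (k : ℕ) : rulerSum (2 ^ k) + 1 = 2 ^ (k + 1) := by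
  induction k with
  | zero => simp [rulerSum, ruler]
  | succ k ih =>
    have hsplit : 2 ^ (k + 1) = 2 ^ k + (2 ^ k - 1) + 1 := by
      have := Nat.one_le_two_pow (n := k); rw [pow_succ]; omega
    have h := rulerSum_succ (2 ^ k + (2 ^ k - 1))
    rw [← hsplit, ruler_two_pow, rulerSum_two_pow_add (by omega)] at h
    have := rulerSum_two_pow_sub_one k
    rw [pow_succ 2 (k + 1)]
    omega

lemma rulerSum_lt_two_mul {m : ℕ} (hm : 0 < m) : rulerSum m < 2 * m := by
  induction m using Nat.strong_induction_on with
  | _ m ih =>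
    obtain ⟨k, hk, hk'⟩ : ∃ k, 2 ^ k ≤ m ∧ m < 2 ^ (k + 1) :=
      ⟨Nat.log 2 m, Nat.pow_log_le_self 2 hm.ne', Nat.lt_pow_succ_log_self one_lt_two m⟩
    obtain ⟨s, rfl⟩ := Nat.exists_eq_add_of_le hk
    rw [rulerSum_two_pow_add (by omega)]
    have := rulerSum_two_pow k
    rcases Nat.eq_zero_or_pos s with rfl | hs
    · rw [rulerSum]; omega
    · have := ih s (by omega) hs
      omega

/-- The Conolly sequence, extended by `0` to nonpositive integers; with this extension the
recursion holds on all of `ℤ` and `conolly_two_pow_succ_add` holds across `0`. -/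
def conolly (n : ℤ) : ℕ := Nat.count (fun m => (rulerSum m : ℤ) < n) n.toNat

theorem lt_conolly_iff {m : ℕ} {n : ℤ} : m < conolly n ↔ (rulerSum m : ℤ) < n :=
  Nat.lt_count_iff_of_antitone
    (fun _ _ hab h => lt_of_le_of_lt (by exact_mod_cast rulerSum_strictMono.monotone hab) h)
    (fun k hk => by have := le_rulerSum k; omega)

theorem gc_conolly_rulerSum : GaloisConnection conolly (fun m : ℕ => (rulerSum m : ℤ)) :=
  fun _ _ => by rw [← not_lt, lt_conolly_iff, not_lt]

lemma conolly_le_toNat (n : ℤ) : conolly n ≤ n.toNat :=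
  gc_conolly_rulerSum.l_le (by have := le_rulerSum n.toNat; omega)

lemma conolly_of_nonpos {n : ℤ} (hn : n ≤ 0) : conolly n = 0 := by
  have := conolly_le_toNat n
  omega

lemma lt_two_mul_conolly {n : ℤ} (hn : 0 < n) : n < 2 * conolly n := by
  have h₁ : n ≤ rulerSum (conolly n) := gc_conolly_rulerSum.le_u_l n
  have h₂ := rulerSum_lt_two_mul ((lt_conolly_iff (m := 0)).2 (by simpa [rulerSum] using hn))
  omega

lemma conolly_succ_eq_or (n : ℤ) :
    conolly (n + 1) = conolly n ∨ conolly (n + 1) = conolly n + 1 := by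
  have hmono : conolly n ≤ conolly (n + 1) := gc_conolly_rulerSum.monotone_l (by omega)
  have hle : conolly (n + 1) ≤ conolly n + 1 := by
    refine gc_conolly_rulerSum.l_le ?_
    have h₁ : n ≤ rulerSum (conolly n) := gc_conolly_rulerSum.le_u_l n
    have h₂ := rulerSum_strictMono (conolly n).lt_add_one
    omega
  omega

theorem ncard_conolly_eq (m : ℕ) : {n : ℕ | conolly n = m + 1}.ncard = ruler (m + 1) := by
  have hset : {n : ℕ | conolly n = m + 1} = Set.Ioc (rulerSum m) (rulerSum (m + 1)) := by
    ext n
    rw [Set.mem_ofPred_eq, Set.mem_Ioc, le_antisymm_iff, gc_conolly_rulerSum.le_iff_le,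
      Nat.succ_le_iff, lt_conolly_iff]
    omega
  rw [hset, ← Finset.coe_Ioc, Set.ncard_coe_finset, Nat.card_Ioc, rulerSum_succ]
  omega

theorem conolly_two_pow_succ_add (k : ℕ) {j : ℤ} (hj₁ : -(k + 1 : ℤ) ≤ j)
    (hj₂ : j ≤ 2 ^ (k + 1) - 2) : conolly (2 ^ (k + 1) + j) = 2 ^ k + conolly (j + 1) := by
  have hL := rulerSum_two_pow k
  have hL' := rulerSum_two_pow_sub_one k
  have hLnext := rulerSum_two_pow (k + 1)
  have hcast : ((2 ^ k : ℕ) : ℤ) = 2 ^ k := by norm_cast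
  refine eq_of_forall_lt_iff fun m => ?_
  rw [lt_conolly_iff]
  rcases lt_or_ge m (2 ^ k) with hm | hm
  · have := rulerSum_strictMono.monotone (Nat.le_sub_one_of_lt hm)
    constructor <;> intro <;> omega
  obtain ⟨s, rfl⟩ := Nat.exists_eq_add_of_le hm
  rcases lt_or_ge s (2 ^ k) with hs | hs
  · rw [rulerSum_two_pow_add hs, Nat.add_lt_add_iff_left, lt_conolly_iff]
    omega
  · have hbig := rulerSum_strictMono.monotone (show 2 ^ (k + 1) ≤ 2 ^ k + s by omega)
    have hv : conolly (j + 1) ≤ 2 ^ k := gc_conolly_rulerSum.l_le (by omega)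
    constructor <;> intro <;> omega

theorem conolly_rec_two_pow_add {K : ℕ} (hK : 5 ≤ K) {j : ℤ} (hj₁ : -2 ≤ j)
    (hj₂ : j ≤ 2 ^ (K + 2) - 3)
    (ih : conolly (j + 1) =
      conolly (j + 1 - conolly (j + 1 - 2)) + conolly (j + 1 - 3 - conolly (j + 1 - 5))) :
    conolly (2 ^ (K + 2) + j) = conolly (2 ^ (K + 2) + j - conolly (2 ^ (K + 2) + j - 2)) +
      conolly (2 ^ (K + 2) + j - 3 - conolly (2 ^ (K + 2) + j - 5)) := by
  have h₄ : (2 : ℤ) ^ (K + 2) = 4 * 2 ^ K := by ring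
  have h₃₂ : (2 : ℤ) ^ 5 ≤ 2 ^ K := pow_le_pow_right₀ one_le_two hK
  have outer : ∀ x i : ℤ, x = 2 ^ (K + 2) + i - 1 → -(K + 1 : ℤ) ≤ i →
      i ≤ 2 ^ (K + 2) - 1 →
      conolly x = 2 ^ (K + 1) + conolly i := fun x i hx h₁ h₂ => by
    rw [hx, add_sub_assoc, conolly_two_pow_succ_add (K + 1) (j := i - 1) (by omega) (by omega),
      sub_add_cancel]
  have inner : ∀ x i : ℤ, x = 2 ^ (K + 1) + i - 1 → -(K : ℤ) ≤ i →
      i ≤ 2 ^ (K + 1) - 1 →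
      conolly x = 2 ^ K + conolly i := fun x i hx h₁ h₂ => by
    rw [hx, add_sub_assoc, conolly_two_pow_succ_add K (j := i - 1) (by omega) (by omega),
      sub_add_cancel]
  have hle₂ := conolly_le_toNat (j + 1 - 2)
  have hlt₂ := fun h => lt_two_mul_conolly (n := j + 1 - 2) h
  have hle₅ := conolly_le_toNat (j + 1 - 5)
  have hlt₅ := fun h => lt_two_mul_conolly (n := j + 1 - 5) h
  have e₂ := outer (2 ^ (K + 2) + j - 2) (j + 1 - 2) (by ring) (by omega) (by omega)
  have e₅ := outer (2 ^ (K + 2) + j - 5) (j + 1 - 5) (by ring) (by omega) (by omega)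
  have e₂' := inner (2 ^ (K + 2) + j - conolly (2 ^ (K + 2) + j - 2))
    (j + 1 - conolly (j + 1 - 2)) (by rw [e₂]; push_cast; ring) (by omega) (by omega)
  have e₅' := inner (2 ^ (K + 2) + j - 3 - conolly (2 ^ (K + 2) + j - 5))
    (j + 1 - 3 - conolly (j + 1 - 5)) (by rw [e₅]; push_cast; ring) (by omega) (by omega)
  rw [outer (2 ^ (K + 2) + j) (j + 1) (by ring) (by omega) (by omega), e₂', e₅', ih]
  ring

lemma conolly_rec_of_nonpos {n : ℤ} (hn : n ≤ 0) :
    conolly n = conolly (n - conolly (n - 2)) + conolly (n - 3 - conolly (n - 5)) := by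
  rw [conolly_of_nonpos (n := n - 2) (by omega), conolly_of_nonpos (n := n - 5) (by omega),
    Nat.cast_zero, sub_zero, sub_zero, conolly_of_nonpos hn,
    conolly_of_nonpos (n := n - 3) (by omega)]

-- Below `2 ^ 7 - 2` the range of `conolly_two_pow_succ_add` is too short for
-- `conolly_rec_two_pow_add`.
lemma conolly_rec_of_lt_126 : ∀ n : ℕ, n < 126 →
    conolly n = conolly (n - conolly (n - 2)) + conolly (n - 3 - conolly (n - 5)) := by
  decide +kernel

theorem conolly_rec (n : ℤ) :
    conolly n = conolly (n - conolly (n - 2)) + conolly (n - 3 - conolly (n - 5)) := by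
  induction h : n.toNat using Nat.strong_induction_on generalizing n with
  | _ N ih =>
  rcases le_or_gt n 0 with hn | hn
  · exact conolly_rec_of_nonpos hn
  obtain rfl : n = N := by omega
  rcases lt_or_ge N 126 with hN | hN
  · exact conolly_rec_of_lt_126 N hN
  obtain ⟨k, hk, hk'⟩ : ∃ k, 2 ^ k ≤ N + 2 ∧ N + 2 < 2 ^ (k + 1) :=
    ⟨Nat.log 2 (N + 2), Nat.pow_log_le_self 2 (by omega), Nat.lt_pow_succ_log_self one_lt_two _⟩
  have hk₇ : 7 ≤ k := by
    by_contra! hlt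
    have : 2 ^ (k + 1) ≤ 2 ^ 7 := Nat.pow_le_pow_right two_pos hlt
    omega
  obtain ⟨K, rfl⟩ : ∃ K, k = K + 2 := ⟨k - 2, by omega⟩
  have hk₁ : (2 : ℤ) ^ (K + 2) ≤ N + 2 := by exact_mod_cast hk
  have hk₂ : (N : ℤ) + 2 < 2 ^ (K + 2 + 1) := by exact_mod_cast hk'
  obtain ⟨j, hj⟩ : ∃ j : ℤ, (N : ℤ) = 2 ^ (K + 2) + j := ⟨N - 2 ^ (K + 2), by ring⟩
  rw [hj]
  refine conolly_rec_two_pow_add (by omega) (by omega) (by omega) (ih _ ?_ (j + 1) rfl)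
  omega

theorem eq_conolly_of_rec (H : ℕ → ℕ)
    (h1 : H 1 = 1) (h2 : H 2 = 2) (h3 : H 3 = 2) (h4 : H 4 = 3) (h5 : H 5 = 4)
    (hrec : ∀ n, 5 < n → H n = H (n - H (n - 2)) + H (n - 3 - H (n - 5))) :
    ∀ n, 1 ≤ n → H n = conolly n := by
  intro n
  induction n using Nat.strong_induction_on with
  | _ n ih =>
  intro hn
  by_cases hn5 : n ≤ 5
  · interval_cases n <;> simp only [h1, h2, h3, h4, h5] <;> decide +kernel
  have hle₂ := conolly_le_toNat (n - 2)
  have hlt₂ := lt_two_mul_conolly (n := n - 2) (by omega)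
  have hle₅ := conolly_le_toNat (n - 5)
  have e₂ : H (n - 2) = conolly ((n : ℤ) - 2) := by
    rw [ih (n - 2) (by omega) (by omega)]; congr 1; omega
  have e₅ : H (n - 5) = conolly ((n : ℤ) - 5) := by
    rw [ih (n - 5) (by omega) (by omega)]; congr 1; omega
  have ea : H (n - H (n - 2)) = conolly (n - conolly ((n : ℤ) - 2)) := by
    rw [e₂, ih _ (by omega) (by omega)]; congr 1; omega
  have eb : H (n - 3 - H (n - 5)) = conolly (n - 3 - conolly ((n : ℤ) - 5)) := by
    rw [e₅, ih _ (by omega) (by omega)]; congr 1; omega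
  rw [hrec n (by omega), ea, eb, ← conolly_rec]

/-- The recursion `H(n) = H(n - H(n-2)) + H(n - 3 - H(n-5))` with initial
conditions `H(1)=1, H(2)=H(3)=2, H(4)=3, H(5)=4` has a unique solution (on
positive indices), and this solution is the Conolly sequence: it is slow and
each positive integer `m` occurs exactly `r_m = v₂(m)+1` times. -/
theorem H_recursion_is_conolly (H H' : ℕ → ℕ)
    (h1 : H 1 = 1) (h2 : H 2 = 2) (h3 : H 3 = 2) (h4 : H 4 = 3) (h5 : H 5 = 4)
    (hrec : ∀ n, 5 < n → H n = H (n - H (n - 2)) + H (n - 3 - H (n - 5)))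
    (h1' : H' 1 = 1) (h2' : H' 2 = 2) (h3' : H' 3 = 2) (h4' : H' 4 = 3) (h5' : H' 5 = 4)
    (hrec' : ∀ n, 5 < n → H' n = H' (n - H' (n - 2)) + H' (n - 3 - H' (n - 5))) :
    (∀ n, 1 ≤ n → H n = H' n) ∧
    (∀ n, 1 ≤ n → H (n + 1) = H n ∨ H (n + 1) = H n + 1) ∧
    (∀ m, 1 ≤ m → {n : ℕ | 1 ≤ n ∧ H n = m}.ncard = padicValNat 2 m + 1) := by
  have hH := eq_conolly_of_rec H h1 h2 h3 h4 h5 hrec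
  have hH' := eq_conolly_of_rec H' h1' h2' h3' h4' h5' hrec'
  refine ⟨fun n hn => (hH n hn).trans (hH' n hn).symm, fun n hn => ?_, fun m hm => ?_⟩
  · rw [hH n hn, hH (n + 1) (by omega), Nat.cast_succ]
    exact conolly_succ_eq_or n
  · obtain ⟨m, rfl⟩ := Nat.exists_eq_add_of_le' hm
    have hset : {n : ℕ | 1 ≤ n ∧ H n = m + 1} = {n : ℕ | conolly n = m + 1} := by
      ext n
      simp only [Set.mem_ofPred_eq]
      refine ⟨fun ⟨hn, hHn⟩ => (hH n hn).symm.trans hHn, fun hn => ?_⟩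
      have hpos : 1 ≤ n :=
        Nat.one_le_iff_ne_zero.2 fun h0 => by simp [h0, conolly_of_nonpos] at hn
      exact ⟨hpos, (hH n hpos).trans hn⟩
    rw [hset, ncard_conolly_eq, ruler]
end

section
/- (Order Multiplying Interleaving Theorem) Let B satisfy B(n) = B(n - s - B(n-a)) + B(n - t - B(n-b)) for all n > c with B(n) > 0 for all n ≥ 1, where s,t ≥ 0 and a,b ≥ 1. Fix m > 1 and define A by A(mn - j) = B(n) for all n ≥ 1 and 0 ≤ j < m. Then for all n with mn - j > mc, A(mn-j) = A(mn-j - ms - m·A(mn-j - ma)) + A(mn-j - mt - m·A(mn-j - mb)); that is, the m-interleaving of B satisfies the order-m recurrence with parameters ms, (ma repeated m times), mt, (mb repeated m times). -/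
/-- Order Multiplying Interleaving Theorem: if `B` satisfies the order-1
recurrence `B(n) = B(n-s-B(n-a)) + B(n-t-B(n-b))` for `n > c` with `B > 0`,
and `A` is the `m`-interleaving of `B` (`A(mn-j) = B(n)` for `0 ≤ j < m`),
then `A` satisfies the order-`m` recurrence with parameters
`ms, (ma)^m, mt, (mb)^m`. -/
theorem order_multiplying_interleaving (s t a b c m : ℕ)
    (ha : 1 ≤ a) (hb : 1 ≤ b) (hm : 1 < m)
    (B A : ℕ → ℕ)
    (hBpos : ∀ n, 1 ≤ n → 0 < B n)
    (hargs : ∀ n, c < n → a < n ∧ b < n ∧ s + B (n - a) < n ∧ t + B (n - b) < n)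
    (hBrec : ∀ n, c < n → B n = B (n - s - B (n - a)) + B (n - t - B (n - b)))
    (hA : ∀ n, 1 ≤ n → ∀ j, j < m → A (m * n - j) = B n) :
    ∀ n, 1 ≤ n → ∀ j, j < m → m * c < m * n - j →
      A (m * n - j) =
        A (m * n - j - m * s - m * A (m * n - j - m * a)) +
        A (m * n - j - m * t - m * A (m * n - j - m * b)) := by
  intro n hn j hj hgt
  have hmn : m * c < m * n := lt_of_lt_of_le hgt (Nat.sub_le _ _)
  have hcn : c < n := lt_of_mul_lt_mul_left hmn (Nat.zero_le m)
  obtain ⟨han, hbn, hsn, htn⟩ := hargs n hcn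
  have hma : m * (n - a) = m * n - m * a := Nat.mul_sub m n a
  have hmb : m * (n - b) = m * n - m * b := Nat.mul_sub m n b
  have haLe : m * a ≤ m * n := Nat.mul_le_mul_left m han.le
  have hbLe : m * b ≤ m * n := Nat.mul_le_mul_left m hbn.le
  have e1 : m * n - j - m * a = m * (n - a) - j := by omega
  have e2 : m * n - j - m * b = m * (n - b) - j := by omega
  have hA1 : A (m * n - j - m * a) = B (n - a) := by
    rw [e1]; exact hA (n - a) (by omega) j hj
  have hA2 : A (m * n - j - m * b) = B (n - b) := by
    rw [e2]; exact hA (n - b) (by omega) j hj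
  rw [hA1, hA2]
  have hms : m * (n - s - B (n - a)) = m * n - m * s - m * (B (n - a)) := by
    rw [Nat.mul_sub, Nat.mul_sub]
  have hmt : m * (n - t - B (n - b)) = m * n - m * t - m * (B (n - b)) := by
    rw [Nat.mul_sub, Nat.mul_sub]
  have hsLe : m * s + m * B (n - a) ≤ m * n := by
    calc m * s + m * B (n - a) = m * (s + B (n - a)) := by ring
    _ ≤ m * n := Nat.mul_le_mul_left m hsn.le
  have htLe : m * t + m * B (n - b) ≤ m * n := by
    calc m * t + m * B (n - b) = m * (t + B (n - b)) := by ring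
    _ ≤ m * n := Nat.mul_le_mul_left m htn.le
  have e3 : m * n - j - m * s - m * B (n - a) = m * (n - s - B (n - a)) - j := by omega
  have e4 : m * n - j - m * t - m * B (n - b) = m * (n - t - B (n - b)) - j := by omega
  rw [e3, e4, hA (n - s - B (n - a)) (by omega) j hj,
    hA (n - t - B (n - b)) (by omega) j hj, hA n hn j hj]
  exact hBrec n hcn
end

section
/- For odd positive integers a and b and nonnegative integers s, t with 2(s+t) = a + b, the sequence R(n) = ⌈n/2⌉ satisfies R(n) = R(n - s - R(n-a)) + R(n - t - R(n-b)) for all integers n for which the arguments are positive. -/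
theorem ceil2 (m : ℤ) : ⌈(m:ℚ)/2⌉ = (m+1)/2 := by
  have h : ((m:ℚ)/2) = -(((-m : ℤ) : ℚ)/((2:ℕ):ℚ)) := by push_cast; ring
  rw [h, Int.ceil_neg, Rat.floor_intCast_div_natCast]
  omega

/-- For odd positive integers `a, b` and nonnegative integers `s, t` with
`2(s+t) = a + b`, the sequence `R(n) = ⌈n/2⌉` satisfies
`R(n) = R(n - s - R(n-a)) + R(n - t - R(n-b))` for all integers `n` for which
the arguments are positive. -/
theorem ceiling_half_satisfies (s t a b : ℤ)
    (hs : 0 ≤ s) (ht : 0 ≤ t) (ha1 : 1 ≤ a) (hb1 : 1 ≤ b)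
    (ha : Odd a) (hb : Odd b) (hst : 2 * (s + t) = a + b) :
    ∀ n : ℤ, 0 < n - a → 0 < n - b →
      0 < n - s - ⌈((n - a : ℤ) : ℚ) / 2⌉ →
      0 < n - t - ⌈((n - b : ℤ) : ℚ) / 2⌉ →
      ⌈(n : ℚ) / 2⌉ =
        ⌈((n - s - ⌈((n - a : ℤ) : ℚ) / 2⌉ : ℤ) : ℚ) / 2⌉ +
        ⌈((n - t - ⌈((n - b : ℤ) : ℚ) / 2⌉ : ℤ) : ℚ) / 2⌉ := by
  intro n h1 h2 h3 h4
  obtain ⟨k, hk⟩ := ha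
  obtain ⟨l, hl⟩ := hb
  subst hk hl
  simp only [ceil2] at h3 h4 ⊢
  rcases Int.even_or_odd' n with ⟨m, hm | hm⟩ <;>
    rcases Int.even_or_odd' (m + k - s) with ⟨p, hp | hp⟩ <;>
    omega
end

section
/- Conversely, if the sequence ⌈n/2⌉ formally satisfies ⌈n/2⌉ = ⌈(n - s - ⌈(n-a)/2⌉)/2⌉ + ⌈(n - t - ⌈(n-b)/2⌉)/2⌉ for all integers n, where s,t ≥ 0 and a,b ≥ 1, then a and b are both odd and 2(s+t) = a + b. -/
lemma ceil_half (m : ℤ) : ⌈(m : ℚ) / 2⌉ = (m + 1) / 2 := by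
  have h1 : (m:ℤ) ≤ 2 * ((m + 1) / 2) := by omega
  have h2 : 2 * ((m + 1) / 2) ≤ m + 1 := by omega
  have h1' : ((m:ℤ):ℚ) ≤ ((2 * ((m + 1) / 2) : ℤ) : ℚ) := by exact_mod_cast h1
  have h2' : ((2 * ((m + 1) / 2) : ℤ) : ℚ) ≤ ((m + 1 : ℤ) : ℚ) := by exact_mod_cast h2
  push_cast at h1' h2'
  rw [Int.ceil_eq_iff]
  constructor
  · have : (m:ℚ) / 2 = (m:ℚ) * (1/2) := by ring
    rw [this]; nlinarith
  · have : (m:ℚ) / 2 = (m:ℚ) * (1/2) := by ring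
    rw [this]; nlinarith

/-- Conversely, if `⌈n/2⌉` formally satisfies
`⌈n/2⌉ = ⌈(n - s - ⌈(n-a)/2⌉)/2⌉ + ⌈(n - t - ⌈(n-b)/2⌉)/2⌉` for all integers
`n`, where `s, t ≥ 0` and `a, b ≥ 1`, then `a` and `b` are both odd and
`2(s+t) = a + b`. -/
theorem ceiling_half_necessary (s t a b : ℤ)
    (hs : 0 ≤ s) (ht : 0 ≤ t) (ha1 : 1 ≤ a) (hb1 : 1 ≤ b)
    (hsat : ∀ n : ℤ,
      ⌈(n : ℚ) / 2⌉ =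
        ⌈((n - s - ⌈((n - a : ℤ) : ℚ) / 2⌉ : ℤ) : ℚ) / 2⌉ +
        ⌈((n - t - ⌈((n - b : ℤ) : ℚ) / 2⌉ : ℤ) : ℚ) / 2⌉) :
    Odd a ∧ Odd b ∧ 2 * (s + t) = a + b := by
  simp only [ceil_half] at hsat
  have hab : a % 2 = 1 ∧ b % 2 = 1 := by
    have h0 := hsat 0
    have h1 := hsat 1
    have h2 := hsat 2
    have h3 := hsat 3
    omega
  have hsum : 2 * (s + t) = a + b := by
    have h4 := hsat (2*s - a + 1)
    have h5 := hsat (2*s - a + 3)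
    omega
  exact ⟨⟨(a-1)/2, by omega⟩, ⟨(b-1)/2, by omega⟩, hsum⟩
end

section
/- Let p ≥ 1 and write each integer z as z = 2p·⌊z/(2p)⌋ + (z mod 2p). The identity ⌈n/(2p)⌉ = ⌈(n - s - Σ_{i=1}^p ⌈(n-a_i)/(2p)⌉)/(2p)⌉ + ⌈(n - t - Σ_{i=1}^p ⌈(n-b_i)/(2p)⌉)/(2p)⌉ holds for all integers n if and only if: (1) for each j in {0,...,p-1}, at most j of the residues a_i mod 2p are ≤ j and at most j are ≥ 2p - j; (2) the same condition holds for the residues b_i mod 2p; and (3) there is an integer d such that either -s + Σ⌊a_i/(2p)⌋ = 2pd and -t + Σ⌊b_i/(2p)⌋ = -2pd - p, or -s + Σ⌊a_i/(2p)⌋ = -2pd - p and -t + Σ⌊b_i/(2p)⌋ = 2pd. -/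
namespace CeilChar

/-- integer ceiling division -/
def Cd (q z : ℤ) : ℤ := -((-z) / q)

theorem Cd_le {q : ℤ} (hq : 0 < q) (z k : ℤ) : Cd q z ≤ k ↔ z ≤ q * k := by
  unfold Cd
  rw [neg_le, Int.le_ediv_iff_mul_le hq]
  constructor <;> intro h <;> nlinarith [h]

theorem le_Cd {q : ℤ} (hq : 0 < q) (z k : ℤ) : k ≤ Cd q z ↔ q * (k - 1) < z := by
  have h1 := Cd_le hq z (k - 1)
  constructor
  · intro h
    by_contra hc
    push_neg at hc
    have := h1.2 hc
    omega
  · intro h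
    by_contra hc
    push_neg at hc
    have := h1.1 (by omega)
    omega

theorem Cd_add_mul {q : ℤ} (hq : 0 < q) (z k : ℤ) : Cd q (z + q * k) = Cd q z + k := by
  unfold Cd
  have h : -(z + q * k) = -z + q * (-k) := by ring
  rw [h, Int.add_mul_ediv_left _ _ (ne_of_gt hq)]
  ring

theorem ceil_eq_Cd (p : ℕ) (z : ℤ) : ⌈(z : ℚ) / (2 * (p : ℚ))⌉ = Cd (2 * (p : ℤ)) z := by
  have h : ⌈(z : ℚ) / (2 * (p : ℚ))⌉ = -⌊-((z : ℚ) / (2 * (p : ℚ)))⌋ := by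
    rw [Int.floor_neg]; ring
  rw [h, ← neg_div, ← Int.cast_neg]
  rw [show (2 * (p : ℚ)) = ((2 * p : ℕ) : ℚ) by push_cast; ring]
  rw [Rat.floor_intCast_div_natCast]
  unfold Cd
  norm_num

/-- count of residues below a threshold -/
def cnt (p : ℕ) (x : Fin p → ℤ) (ρ : ℤ) : ℤ :=
  ((Finset.univ.filter fun i : Fin p => (x i) % (2 * (p : ℤ)) < ρ).card : ℤ)

theorem cnt_nonneg (p : ℕ) (x : Fin p → ℤ) (ρ : ℤ) : 0 ≤ cnt p x ρ := by
  unfold cnt; exact Int.natCast_nonneg _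

theorem cnt_le_p (p : ℕ) (x : Fin p → ℤ) (ρ : ℤ) : cnt p x ρ ≤ p := by
  unfold cnt
  have h := Finset.card_filter_le (Finset.univ : Finset (Fin p))
    (fun i => (x i) % (2 * (p : ℤ)) < ρ)
  rw [Finset.card_univ, Fintype.card_fin] at h
  exact_mod_cast h

theorem cnt_of_nonpos (p : ℕ) (hp : 1 ≤ p) (x : Fin p → ℤ) (ρ : ℤ) (hρ : ρ ≤ 0) :
    cnt p x ρ = 0 := by
  have hq : (0 : ℤ) < 2 * (p : ℤ) := by positivity
  unfold cnt
  rw [Finset.filter_eq_empty_iff.mpr, Finset.card_empty]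
  · rfl
  · intro i _
    have := Int.emod_nonneg (x i) (ne_of_gt hq)
    omega

theorem cnt_all (p : ℕ) (hp : 1 ≤ p) (x : Fin p → ℤ) (ρ : ℤ) (hρ : 2 * (p : ℤ) ≤ ρ) :
    cnt p x ρ = p := by
  have hq : (0 : ℤ) < 2 * (p : ℤ) := by positivity
  unfold cnt
  rw [Finset.filter_eq_self.mpr, Finset.card_univ, Fintype.card_fin]
  intro i _
  have := Int.emod_lt_of_pos (x i) hq
  omega

theorem bridge1 (p : ℕ) (x : Fin p → ℤ) (j : ℕ) :
    ((Finset.univ.filter fun i : Fin p => (x i).emod (2 * (p : ℤ)) ≤ (j : ℤ)).card : ℤ)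
      = cnt p x ((j : ℤ) + 1) := by
  unfold cnt
  congr 2
  apply Finset.filter_congr
  intro i _
  have e : (x i).emod (2 * (p : ℤ)) = x i % (2 * (p : ℤ)) := rfl
  constructor
  · intro h; omega
  · intro h; omega

theorem bridge2 (p : ℕ) (hp : 1 ≤ p) (x : Fin p → ℤ) (j : ℕ) :
    ((Finset.univ.filter
        fun i : Fin p => 2 * (p : ℤ) - (j : ℤ) ≤ (x i).emod (2 * (p : ℤ))).card : ℤ)
      = p - cnt p x (2 * (p : ℤ) - (j : ℤ)) := by
  unfold cnt
  have h := Finset.card_filter_add_card_filter_not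
    (s := (Finset.univ : Finset (Fin p)))
    (p := fun i : Fin p => 2 * (p : ℤ) - (j : ℤ) ≤ (x i).emod (2 * (p : ℤ)))
  rw [Finset.card_univ, Fintype.card_fin] at h
  have h2 : (Finset.univ.filter
      fun i : Fin p => ¬(2 * (p : ℤ) - (j : ℤ) ≤ (x i).emod (2 * (p : ℤ))))
      = (Finset.univ.filter fun i : Fin p => (x i) % (2 * (p : ℤ)) < 2 * (p : ℤ) - (j : ℤ)) := by
    apply Finset.filter_congr
    intro i _
    have e : (x i).emod (2 * (p : ℤ)) = x i % (2 * (p : ℤ)) := rfl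
    constructor
    · intro hh; omega
    · intro hh; omega
  rw [h2] at h
  omega

theorem sum_Cd (p : ℕ) (hp : 1 ≤ p) (a : Fin p → ℤ) (n : ℤ) :
    ∑ i, Cd (2 * (p : ℤ)) (n - a i)
      = (p : ℤ) * (n / (2 * (p : ℤ))) - (∑ i, (a i) / (2 * (p : ℤ)))
        + cnt p a (n % (2 * (p : ℤ))) := by
  unfold cnt
  have hp' : (0 : ℤ) < (p : ℤ) := by exact_mod_cast hp
  have hq : (0 : ℤ) < 2 * (p : ℤ) := by linarith
  have key : ∀ i : Fin p, Cd (2 * (p : ℤ)) (n - a i)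
      = n / (2 * (p : ℤ)) - (a i) / (2 * (p : ℤ))
        + (if (a i) % (2 * (p : ℤ)) < n % (2 * (p : ℤ)) then (1 : ℤ) else 0) := by
    intro i
    have hn := Int.mul_ediv_add_emod n (2 * (p : ℤ))
    have ha := Int.mul_ediv_add_emod (a i) (2 * (p : ℤ))
    have h1 : n - a i = (n % (2 * (p : ℤ)) - (a i) % (2 * (p : ℤ)))
        + (2 * (p : ℤ)) * (n / (2 * (p : ℤ)) - (a i) / (2 * (p : ℤ))) := by
      linear_combination ha - hn
    rw [h1, Cd_add_mul hq]
    have hr0 : 0 ≤ (a i) % (2 * (p : ℤ)) := Int.emod_nonneg _ (ne_of_gt hq)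
    have hr1 : (a i) % (2 * (p : ℤ)) < 2 * (p : ℤ) := Int.emod_lt_of_pos _ hq
    have hs0 : 0 ≤ n % (2 * (p : ℤ)) := Int.emod_nonneg _ (ne_of_gt hq)
    have hs1 : n % (2 * (p : ℤ)) < 2 * (p : ℤ) := Int.emod_lt_of_pos _ hq
    have c0 := Cd_le hq (n % (2 * (p : ℤ)) - (a i) % (2 * (p : ℤ))) 0
    have c1 := Cd_le hq (n % (2 * (p : ℤ)) - (a i) % (2 * (p : ℤ))) 1
    have c1' := le_Cd hq (n % (2 * (p : ℤ)) - (a i) % (2 * (p : ℤ))) 1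
    have c0' := le_Cd hq (n % (2 * (p : ℤ)) - (a i) % (2 * (p : ℤ))) 0
    split_ifs with hc <;> omega
  rw [Finset.sum_congr rfl (fun i _ => key i)]
  rw [Finset.sum_add_distrib, Finset.sum_sub_distrib, Finset.sum_const,
    Finset.card_univ, Fintype.card_fin, Finset.sum_boole]
  push_cast
  ring

theorem Cd_self (p : ℕ) (hp : 1 ≤ p) (n : ℤ) :
    Cd (2 * (p : ℤ)) n = n / (2 * (p : ℤ))
      + (if 0 < n % (2 * (p : ℤ)) then (1 : ℤ) else 0) := by
  have hp' : (0 : ℤ) < (p : ℤ) := by exact_mod_cast hp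
  have hq : (0 : ℤ) < 2 * (p : ℤ) := by linarith
  have hn := Int.mul_ediv_add_emod n (2 * (p : ℤ))
  have h1 : n = n % (2 * (p : ℤ)) + (2 * (p : ℤ)) * (n / (2 * (p : ℤ))) := by
    linear_combination -hn
  rw [show Cd (2 * (p : ℤ)) n = Cd (2 * (p : ℤ)) (n % (2 * (p : ℤ))
      + (2 * (p : ℤ)) * (n / (2 * (p : ℤ)))) from by rw [← h1]]
  rw [Cd_add_mul hq]
  have hs0 : 0 ≤ n % (2 * (p : ℤ)) := Int.emod_nonneg _ (ne_of_gt hq)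
  have hs1 : n % (2 * (p : ℤ)) < 2 * (p : ℤ) := Int.emod_lt_of_pos _ hq
  have c0 := Cd_le hq (n % (2 * (p : ℤ))) 0
  have c1 := Cd_le hq (n % (2 * (p : ℤ))) 1
  have c1' := le_Cd hq (n % (2 * (p : ℤ))) 1
  have c0' := le_Cd hq (n % (2 * (p : ℤ))) 0
  split_ifs with hc <;> omega

end CeilChar

set_option linter.all false
set_option maxHeartbeats 1000000 in
open CeilChar in
/-- Ceiling characterization theorem: the identity
`⌈n/2p⌉ = ⌈(n - s - Σᵢ⌈(n-aᵢ)/2p⌉)/2p⌉ + ⌈(n - t - Σᵢ⌈(n-bᵢ)/2p⌉)/2p⌉`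
holds for all integers `n` if and only if the residue conditions (1), (2)
on the `aᵢ mod 2p` and `bᵢ mod 2p` hold, together with the quotient-sum
condition (3). -/
theorem ceiling_characterization (p : ℕ) (hp : 1 ≤ p)
    (s t : ℤ) (a b : Fin p → ℤ) :
    (∀ n : ℤ,
      ⌈(n : ℚ) / (2 * (p : ℚ))⌉ =
        ⌈(((n - s - ∑ i, ⌈(((n - a i) : ℤ) : ℚ) / (2 * (p : ℚ))⌉) : ℤ) : ℚ) / (2 * (p : ℚ))⌉ +
        ⌈(((n - t - ∑ i, ⌈(((n - b i) : ℤ) : ℚ) / (2 * (p : ℚ))⌉) : ℤ) : ℚ) / (2 * (p : ℚ))⌉)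
    ↔
    ((∀ j : ℕ, j < p →
        (Finset.univ.filter fun i : Fin p => (a i).emod (2 * (p : ℤ)) ≤ (j : ℤ)).card ≤ j ∧
        (Finset.univ.filter fun i : Fin p => 2 * (p : ℤ) - (j : ℤ) ≤ (a i).emod (2 * (p : ℤ))).card ≤ j) ∧
     (∀ j : ℕ, j < p →
        (Finset.univ.filter fun i : Fin p => (b i).emod (2 * (p : ℤ)) ≤ (j : ℤ)).card ≤ j ∧
        (Finset.univ.filter fun i : Fin p => 2 * (p : ℤ) - (j : ℤ) ≤ (b i).emod (2 * (p : ℤ))).card ≤ j) ∧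
     (∃ d : ℤ,
        (-s + ∑ i, (a i).ediv (2 * (p : ℤ)) = 2 * (p : ℤ) * d ∧
         -t + ∑ i, (b i).ediv (2 * (p : ℤ)) = -(2 * (p : ℤ) * d) - p) ∨
        (-s + ∑ i, (a i).ediv (2 * (p : ℤ)) = -(2 * (p : ℤ) * d) - p ∧
         -t + ∑ i, (b i).ediv (2 * (p : ℤ)) = 2 * (p : ℤ) * d))) := by
  classical
  have hp' : (0 : ℤ) < (p : ℤ) := by exact_mod_cast hp
  have hq : (0 : ℤ) < 2 * (p : ℤ) := by linarith
  set A : ℤ := -s + ∑ i, (a i).ediv (2 * (p : ℤ)) with hA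
  set B : ℤ := -t + ∑ i, (b i).ediv (2 * (p : ℤ)) with hB
  have hA' : A = -s + ∑ i, (a i) / (2 * (p : ℤ)) := hA
  have hB' : B = -t + ∑ i, (b i) / (2 * (p : ℤ)) := hB
  clear_value A B
  -- the threshold package
  have pack : ∀ z : ℤ,
      (Cd (2 * (p : ℤ)) z ≤ 0 ↔ z ≤ 2 * (p : ℤ) * 0) ∧
      (Cd (2 * (p : ℤ)) z ≤ 1 ↔ z ≤ 2 * (p : ℤ) * 1) ∧
      (Cd (2 * (p : ℤ)) z ≤ 2 ↔ z ≤ 2 * (p : ℤ) * 2) ∧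
      (0 ≤ Cd (2 * (p : ℤ)) z ↔ 2 * (p : ℤ) * (0 - 1) < z) ∧
      (1 ≤ Cd (2 * (p : ℤ)) z ↔ 2 * (p : ℤ) * (1 - 1) < z) ∧
      (2 ≤ Cd (2 * (p : ℤ)) z ↔ 2 * (p : ℤ) * (2 - 1) < z) :=
    fun z => ⟨Cd_le hq z 0, Cd_le hq z 1, Cd_le hq z 2, le_Cd hq z 0, le_Cd hq z 1, le_Cd hq z 2⟩
  -- main transform
  have harg : ∀ n : ℤ, n - s - ∑ i, Cd (2 * (p : ℤ)) (n - a i)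
      = (p : ℤ) * (n / (2 * (p : ℤ)))
        + (n % (2 * (p : ℤ)) - cnt p a (n % (2 * (p : ℤ)))) + A := by
    intro n
    rw [hA', sum_Cd p hp a n]
    linear_combination -Int.mul_ediv_add_emod n (2 * (p : ℤ))
  have hargb : ∀ n : ℤ, n - t - ∑ i, Cd (2 * (p : ℤ)) (n - b i)
      = (p : ℤ) * (n / (2 * (p : ℤ)))
        + (n % (2 * (p : ℤ)) - cnt p b (n % (2 * (p : ℤ)))) + B := by
    intro n
    rw [hB', sum_Cd p hp b n]
    linear_combination -Int.mul_ediv_add_emod n (2 * (p : ℤ))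
  constructor
  · -- hard direction
    intro hid
    have hred : ∀ n : ℤ,
        n / (2 * (p : ℤ)) + (if 0 < n % (2 * (p : ℤ)) then (1 : ℤ) else 0)
          = Cd (2 * (p : ℤ)) ((p : ℤ) * (n / (2 * (p : ℤ)))
              + (n % (2 * (p : ℤ)) - cnt p a (n % (2 * (p : ℤ)))) + A)
          + Cd (2 * (p : ℤ)) ((p : ℤ) * (n / (2 * (p : ℤ)))
              + (n % (2 * (p : ℤ)) - cnt p b (n % (2 * (p : ℤ)))) + B) := by
      intro n
      have h := hid n
      simp only [ceil_eq_Cd] at h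
      rw [harg n, hargb n, Cd_self p hp n] at h
      exact h
    -- decompose A and B
    obtain ⟨α, u, hAd, hu0, huq⟩ :
        ∃ α u : ℤ, 2 * (p : ℤ) * α + u = A ∧ 0 ≤ u ∧ u < 2 * (p : ℤ) :=
      ⟨A / (2 * (p : ℤ)), A % (2 * (p : ℤ)), Int.mul_ediv_add_emod A _,
        Int.emod_nonneg _ (ne_of_gt hq), Int.emod_lt_of_pos _ hq⟩
    obtain ⟨β, v, hBd, hv0, hvq⟩ :
        ∃ β v : ℤ, 2 * (p : ℤ) * β + v = B ∧ 0 ≤ v ∧ v < 2 * (p : ℤ) :=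
      ⟨B / (2 * (p : ℤ)), B % (2 * (p : ℤ)), Int.mul_ediv_add_emod B _,
        Int.emod_nonneg _ (ne_of_gt hq), Int.emod_lt_of_pos _ hq⟩
    have sA : ∀ x : ℤ, Cd (2 * (p : ℤ)) (x + A) = Cd (2 * (p : ℤ)) (x + u) + α := by
      intro x
      rw [show x + A = (x + u) + 2 * (p : ℤ) * α by linear_combination -hAd, Cd_add_mul hq]
    have sB : ∀ x : ℤ, Cd (2 * (p : ℤ)) (x + B) = Cd (2 * (p : ℤ)) (x + v) + β := by
      intro x
      rw [show x + B = (x + v) + 2 * (p : ℤ) * β by linear_combination -hBd, Cd_add_mul hq]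
    -- the four equation families
    have hE0 : Cd (2 * (p : ℤ)) (0 + u) + α + (Cd (2 * (p : ℤ)) (0 + v) + β) = 0 := by
      have h := hred 0
      rw [Int.zero_ediv, Int.zero_emod] at h
      rw [cnt_of_nonpos p hp a 0 le_rfl, cnt_of_nonpos p hp b 0 le_rfl] at h
      rw [show (p : ℤ) * 0 + ((0 : ℤ) - 0) + A = 0 + A by ring,
          show (p : ℤ) * 0 + ((0 : ℤ) - 0) + B = 0 + B by ring, sA, sB] at h
      simp only [if_neg (lt_irrefl (0 : ℤ))] at h
      omega
    have hO0 : Cd (2 * (p : ℤ)) ((p : ℤ) + u) + α + (Cd (2 * (p : ℤ)) ((p : ℤ) + v) + β) = 1 := by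
      have h := hred (2 * (p : ℤ))
      have e1 : (2 * (p : ℤ)) / (2 * (p : ℤ)) = 1 := Int.ediv_self (ne_of_gt hq)
      have e2 : (2 * (p : ℤ)) % (2 * (p : ℤ)) = 0 := Int.emod_self
      rw [e1, e2] at h
      rw [cnt_of_nonpos p hp a 0 le_rfl, cnt_of_nonpos p hp b 0 le_rfl] at h
      rw [show (p : ℤ) * 1 + ((0 : ℤ) - 0) + A = (p : ℤ) + A by ring,
          show (p : ℤ) * 1 + ((0 : ℤ) - 0) + B = (p : ℤ) + B by ring, sA, sB] at h
      simp only [if_neg (lt_irrefl (0 : ℤ))] at h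
      omega
    have hEpos : ∀ ρ : ℤ, 0 < ρ → ρ < 2 * (p : ℤ) →
        Cd (2 * (p : ℤ)) (ρ - cnt p a ρ + u) + α
          + (Cd (2 * (p : ℤ)) (ρ - cnt p b ρ + v) + β) = 1 := by
      intro ρ h0 h1
      have h := hred ρ
      rw [Int.ediv_eq_zero_of_lt (le_of_lt h0) h1, Int.emod_eq_of_lt (le_of_lt h0) h1] at h
      rw [show (p : ℤ) * 0 + (ρ - cnt p a ρ) + A = (ρ - cnt p a ρ) + A by ring,
          show (p : ℤ) * 0 + (ρ - cnt p b ρ) + B = (ρ - cnt p b ρ) + B by ring, sA, sB] at h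
      rw [if_pos h0] at h
      omega
    have hOpos : ∀ ρ : ℤ, 0 < ρ → ρ < 2 * (p : ℤ) →
        Cd (2 * (p : ℤ)) (ρ - cnt p a ρ + (p : ℤ) + u) + α
          + (Cd (2 * (p : ℤ)) (ρ - cnt p b ρ + (p : ℤ) + v) + β) = 2 := by
      intro ρ h0 h1
      have h := hred (2 * (p : ℤ) + ρ)
      have e1 : (2 * (p : ℤ) + ρ) / (2 * (p : ℤ)) = 1 := by
        rw [show 2 * (p : ℤ) + ρ = ρ + 2 * (p : ℤ) * 1 by ring,
          Int.add_mul_ediv_left _ _ (ne_of_gt hq), Int.ediv_eq_zero_of_lt (le_of_lt h0) h1]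
        norm_num
      have e2 : (2 * (p : ℤ) + ρ) % (2 * (p : ℤ)) = ρ := by
        rw [show 2 * (p : ℤ) + ρ = ρ + 2 * (p : ℤ) * 1 by ring,
          Int.add_mul_emod_self_left, Int.emod_eq_of_lt (le_of_lt h0) h1]
      rw [e1, e2] at h
      rw [show (p : ℤ) * 1 + (ρ - cnt p a ρ) + A = (ρ - cnt p a ρ + (p : ℤ)) + A by ring,
          show (p : ℤ) * 1 + (ρ - cnt p b ρ) + B = (ρ - cnt p b ρ + (p : ℤ)) + B by ring,
          sA, sB] at h
      rw [if_pos h0] at h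
      omega
    -- pin down u, v
    have E1 := hEpos 1 one_pos (by omega)
    have O1 := hOpos 1 one_pos (by omega)
    have pE0a := pack ((0 : ℤ) + u)
    have pE0b := pack ((0 : ℤ) + v)
    have pO0a := pack ((p : ℤ) + u)
    have pO0b := pack ((p : ℤ) + v)
    have pE1a := pack ((1 : ℤ) - cnt p a 1 + u)
    have pE1b := pack ((1 : ℤ) - cnt p b 1 + v)
    have pO1a := pack ((1 : ℤ) - cnt p a 1 + (p : ℤ) + u)
    have pO1b := pack ((1 : ℤ) - cnt p b 1 + (p : ℤ) + v)
    have ca1 := cnt_nonneg p a 1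
    have cb1 := cnt_nonneg p b 1
    have ca1' := cnt_le_p p a 1
    have cb1' := cnt_le_p p b 1
    have KF : (u = 0 ∧ v = (p : ℤ) ∧ α + β = -1) ∨ (u = (p : ℤ) ∧ v = 0 ∧ α + β = -1) := by
      omega
    -- the key bounds
    have KEY : ∀ ρ : ℤ, 0 < ρ → ρ < 2 * (p : ℤ) →
        (1 ≤ ρ - cnt p a ρ ∧ ρ - cnt p a ρ ≤ p ∧ 1 ≤ ρ - cnt p b ρ ∧ ρ - cnt p b ρ ≤ p) := by
      intro ρ h0 h1
      have E := hEpos ρ h0 h1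
      have O := hOpos ρ h0 h1
      clear hred hid hEpos hOpos hE0 hO0 sA sB
      have p1 := pack (ρ - cnt p a ρ + u)
      have p2 := pack (ρ - cnt p b ρ + v)
      have p3 := pack (ρ - cnt p a ρ + (p : ℤ) + u)
      have p4 := pack (ρ - cnt p b ρ + (p : ℤ) + v)
      have c1 := cnt_nonneg p a ρ
      have c2 := cnt_nonneg p b ρ
      have c3 := cnt_le_p p a ρ
      have c4 := cnt_le_p p b ρ
      omega
    refine ⟨?_, ?_, ?_⟩
    · intro j hj
      constructor
      · have hb := bridge1 p a j
        have hk := KEY ((j : ℤ) + 1) (by omega) (by omega)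
        have c1 := cnt_nonneg p a ((j : ℤ) + 1)
        omega
      · have hb := bridge2 p hp a j
        by_cases hj0 : j = 0
        · subst hj0
          have hall := cnt_all p hp a (2 * (p : ℤ) - (0 : ℕ)) (by norm_num)
          omega
        · have hk := KEY (2 * (p : ℤ) - (j : ℤ)) (by omega) (by omega)
          have c3 := cnt_le_p p a (2 * (p : ℤ) - (j : ℤ))
          omega
    · intro j hj
      constructor
      · have hb := bridge1 p b j
        have hk := KEY ((j : ℤ) + 1) (by omega) (by omega)
        have c1 := cnt_nonneg p b ((j : ℤ) + 1)
        omega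
      · have hb := bridge2 p hp b j
        by_cases hj0 : j = 0
        · subst hj0
          have hall := cnt_all p hp b (2 * (p : ℤ) - (0 : ℕ)) (by norm_num)
          omega
        · have hk := KEY (2 * (p : ℤ) - (j : ℤ)) (by omega) (by omega)
          have c3 := cnt_le_p p b (2 * (p : ℤ) - (j : ℤ))
          omega
    · rcases KF with ⟨hu, hv, hσ⟩ | ⟨hu, hv, hσ⟩
      · refine ⟨α, Or.inl ⟨by linarith [hAd], ?_⟩⟩
        linear_combination -hBd + hv + 2 * (p : ℤ) * hσ
      · refine ⟨β, Or.inr ⟨?_, by linarith [hBd]⟩⟩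
        linear_combination -hAd + hu + 2 * (p : ℤ) * hσ
  · -- easy direction
    rintro ⟨h1, h2, d, hd⟩ n
    -- bounds from the residue conditions
    have KEYF : ∀ x : Fin p → ℤ,
        (∀ j : ℕ, j < p →
          (Finset.univ.filter fun i : Fin p => (x i).emod (2 * (p : ℤ)) ≤ (j : ℤ)).card ≤ j ∧
          (Finset.univ.filter fun i : Fin p =>
            2 * (p : ℤ) - (j : ℤ) ≤ (x i).emod (2 * (p : ℤ))).card ≤ j) →
        ∀ ρ : ℤ, 0 < ρ → ρ < 2 * (p : ℤ) →
          (1 ≤ ρ - cnt p x ρ ∧ ρ - cnt p x ρ ≤ p) := by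
      intro x hx ρ h0 h1'
      by_cases hle : ρ ≤ (p : ℤ)
      · set j : ℕ := (ρ - 1).toNat with hj
        have hj' : ((j : ℤ)) = ρ - 1 := Int.toNat_of_nonneg (by omega)
        have hcard := (hx j (by omega)).1
        have hb := bridge1 p x j
        have e2 : cnt p x ((j : ℤ) + 1) = cnt p x ρ := by
          rw [show ((j : ℤ) + 1) = ρ by omega]
        have c1 := cnt_nonneg p x ρ
        omega
      · set j : ℕ := (2 * (p : ℤ) - ρ).toNat with hj
        have hj' : ((j : ℤ)) = 2 * (p : ℤ) - ρ := Int.toNat_of_nonneg (by omega)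
        have hcard := (hx j (by omega)).2
        have hb := bridge2 p hp x j
        have e2 : cnt p x (2 * (p : ℤ) - (j : ℤ)) = cnt p x ρ := by
          rw [show (2 * (p : ℤ) - (j : ℤ)) = ρ by omega]
        have c3 := cnt_le_p p x ρ
        omega
    have Ka := KEYF a h1
    have Kb := KEYF b h2
    simp only [ceil_eq_Cd]
    rw [harg n, hargb n, Cd_self p hp n]
    have hm0 : 0 ≤ n % (2 * (p : ℤ)) := Int.emod_nonneg _ (ne_of_gt hq)
    have hm1 : n % (2 * (p : ℤ)) < 2 * (p : ℤ) := Int.emod_lt_of_pos _ hq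
    have hKa : 0 < n % (2 * (p : ℤ)) →
        (1 ≤ n % (2 * (p : ℤ)) - cnt p a (n % (2 * (p : ℤ))) ∧
         n % (2 * (p : ℤ)) - cnt p a (n % (2 * (p : ℤ))) ≤ p) :=
      fun h => Ka _ h hm1
    have hKb : 0 < n % (2 * (p : ℤ)) →
        (1 ≤ n % (2 * (p : ℤ)) - cnt p b (n % (2 * (p : ℤ))) ∧
         n % (2 * (p : ℤ)) - cnt p b (n % (2 * (p : ℤ))) ≤ p) :=
      fun h => Kb _ h hm1
    have hc0a : n % (2 * (p : ℤ)) ≤ 0 → cnt p a (n % (2 * (p : ℤ))) = 0 :=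
      fun h => cnt_of_nonpos p hp a _ h
    have hc0b : n % (2 * (p : ℤ)) ≤ 0 → cnt p b (n % (2 * (p : ℤ))) = 0 :=
      fun h => cnt_of_nonpos p hp b _ h
    rcases Int.even_or_odd (n / (2 * (p : ℤ))) with ⟨k, hk⟩ | ⟨k, hk⟩ <;>
      rcases hd with ⟨hdA, hdB⟩ | ⟨hdA, hdB⟩
    · -- even, branch 1 : A = 2p d, B = -2p d - p
      rw [show (p : ℤ) * (n / (2 * (p : ℤ)))
            + (n % (2 * (p : ℤ)) - cnt p a (n % (2 * (p : ℤ)))) + A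
          = (n % (2 * (p : ℤ)) - cnt p a (n % (2 * (p : ℤ)))) + 2 * (p : ℤ) * (k + d) from by
        rw [hk, hdA]; ring, Cd_add_mul hq]
      rw [show (p : ℤ) * (n / (2 * (p : ℤ)))
            + (n % (2 * (p : ℤ)) - cnt p b (n % (2 * (p : ℤ)))) + B
          = (n % (2 * (p : ℤ)) - cnt p b (n % (2 * (p : ℤ))) - (p : ℤ))
              + 2 * (p : ℤ) * (k - d) from by
        rw [hk, hdB]; ring, Cd_add_mul hq]
      have pA := pack (n % (2 * (p : ℤ)) - cnt p a (n % (2 * (p : ℤ))))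
      have pB := pack (n % (2 * (p : ℤ)) - cnt p b (n % (2 * (p : ℤ))) - (p : ℤ))
      split_ifs with h0 <;> omega
    · -- even, branch 2 : A = -2p d - p, B = 2p d
      rw [show (p : ℤ) * (n / (2 * (p : ℤ)))
            + (n % (2 * (p : ℤ)) - cnt p a (n % (2 * (p : ℤ)))) + A
          = (n % (2 * (p : ℤ)) - cnt p a (n % (2 * (p : ℤ))) - (p : ℤ))
              + 2 * (p : ℤ) * (k - d) from by
        rw [hk, hdA]; ring, Cd_add_mul hq]
      rw [show (p : ℤ) * (n / (2 * (p : ℤ)))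
            + (n % (2 * (p : ℤ)) - cnt p b (n % (2 * (p : ℤ)))) + B
          = (n % (2 * (p : ℤ)) - cnt p b (n % (2 * (p : ℤ)))) + 2 * (p : ℤ) * (k + d) from by
        rw [hk, hdB]; ring, Cd_add_mul hq]
      have pA := pack (n % (2 * (p : ℤ)) - cnt p a (n % (2 * (p : ℤ))) - (p : ℤ))
      have pB := pack (n % (2 * (p : ℤ)) - cnt p b (n % (2 * (p : ℤ))))
      split_ifs with h0 <;> omega
    · -- odd, branch 1
      rw [show (p : ℤ) * (n / (2 * (p : ℤ)))
            + (n % (2 * (p : ℤ)) - cnt p a (n % (2 * (p : ℤ)))) + A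
          = (n % (2 * (p : ℤ)) - cnt p a (n % (2 * (p : ℤ))) + (p : ℤ))
              + 2 * (p : ℤ) * (k + d) from by
        rw [hk, hdA]; ring, Cd_add_mul hq]
      rw [show (p : ℤ) * (n / (2 * (p : ℤ)))
            + (n % (2 * (p : ℤ)) - cnt p b (n % (2 * (p : ℤ)))) + B
          = (n % (2 * (p : ℤ)) - cnt p b (n % (2 * (p : ℤ)))) + 2 * (p : ℤ) * (k - d) from by
        rw [hk, hdB]; ring, Cd_add_mul hq]
      have pA := pack (n % (2 * (p : ℤ)) - cnt p a (n % (2 * (p : ℤ))) + (p : ℤ))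
      have pB := pack (n % (2 * (p : ℤ)) - cnt p b (n % (2 * (p : ℤ))))
      split_ifs with h0 <;> omega
    · -- odd, branch 2
      rw [show (p : ℤ) * (n / (2 * (p : ℤ)))
            + (n % (2 * (p : ℤ)) - cnt p a (n % (2 * (p : ℤ)))) + A
          = (n % (2 * (p : ℤ)) - cnt p a (n % (2 * (p : ℤ)))) + 2 * (p : ℤ) * (k - d) from by
        rw [hk, hdA]; ring, Cd_add_mul hq]
      rw [show (p : ℤ) * (n / (2 * (p : ℤ)))
            + (n % (2 * (p : ℤ)) - cnt p b (n % (2 * (p : ℤ)))) + B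
          = (n % (2 * (p : ℤ)) - cnt p b (n % (2 * (p : ℤ))) + (p : ℤ))
              + 2 * (p : ℤ) * (k + d) from by
        rw [hk, hdB]; ring, Cd_add_mul hq]
      have pA := pack (n % (2 * (p : ℤ)) - cnt p a (n % (2 * (p : ℤ))))
      have pB := pack (n % (2 * (p : ℤ)) - cnt p b (n % (2 * (p : ℤ))) + (p : ℤ))
      split_ifs with h0 <;> omega
end

section
/- Suppose integers p ≥ 1, s, t ≥ 0, and a_i, b_i ≥ 1 satisfy conditions (1)-(3) of the ceiling characterization (residue conditions on a_i mod 2p and b_i mod 2p, and the quotient-sum condition with integer d). Let c = max{2p+2s, 2p+2t, a_1,...,a_p, b_1,...,b_p} and define H(v) = ⌈v/(2p)⌉ for 1 ≤ v ≤ c. Then the recursion H(n) = H(n - s - Σ_{i=1}^p H(n-a_i)) + H(n - t - Σ_{i=1}^p H(n-b_i)) is well-defined for all n > c (all arguments lie in [1, n-1]) and its unique solution is H(n) = ⌈n/(2p)⌉ for all n ≥ 1. -/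
private lemma Gcomp (p : ℕ) (hp : 0 < p) (x : ℕ) (hx1 : 1 ≤ x) (w : ℤ) (f : ℕ)
    (hf : f ≤ 2*p) (hxw : (x:ℤ) = 2*p*w + f) :
    ∃ g : ℕ, (x + 2*p - 1)/(2*p) = g ∧ (g:ℤ) = w + (if f = 0 then 0 else 1) := by
  have hq : 0 < 2*p := by omega
  have hx1z : (1:ℤ) ≤ (x:ℤ) := by exact_mod_cast hx1
  have hfz : (f:ℤ) ≤ 2*(p:ℤ) := by exact_mod_cast hf
  have hw : 0 ≤ w := by
    by_contra hcon
    push_neg at hcon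
    have h1 : w ≤ -1 := by omega
    have h2 : 2*(p:ℤ)*w ≤ 2*(p:ℤ)*(-1) := by
      apply mul_le_mul_of_nonneg_left h1 (by positivity)
    linarith
  set m := w.toNat with hmdef
  have hm : (m:ℤ) = w := Int.toNat_of_nonneg hw
  have hxm : x = 2*p*m + f := by
    rw [← hm] at hxw; exact_mod_cast hxw
  by_cases hf0 : f = 0
  · subst hf0
    have hm1 : 1 ≤ m := by
      rcases Nat.eq_zero_or_pos m with h | h
      · rw [h] at hxm; simp at hxm; omega
      · exact h
    refine ⟨m, ?_, by simp [hm]⟩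
    rw [hxm, Nat.add_zero, Nat.add_sub_assoc (by omega), Nat.mul_add_div hq,
      Nat.div_eq_of_lt (by omega), Nat.add_zero]
  · refine ⟨m + 1, ?_, by simp [hf0, hm]⟩
    have h1 : 1 ≤ f := Nat.one_le_iff_ne_zero.mpr hf0
    rw [hxm, Nat.add_sub_assoc (by omega), Nat.add_assoc, Nat.mul_add_div hq]
    congr 1
    apply Nat.div_eq_of_lt_le (by omega) (by omega)

private lemma PT (p : ℕ) (hp : 0 < p) (u a : ℕ) (hu : 1 ≤ u) :
    (u + 2*p - 1)/(2*p) + a/(2*p)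
      = (u + a)/(2*p) + (if a % (2*p) < (u + a) % (2*p) then 1 else 0) := by
  have hq : 0 < 2*p := by omega
  obtain ⟨U, β, hu', hβ⟩ : ∃ U β, 2*p*U + β = u ∧ β < 2*p :=
    ⟨u / (2*p), u % (2*p), Nat.div_add_mod u (2*p), Nat.mod_lt _ hq⟩
  obtain ⟨A, α, ha', hα⟩ : ∃ A α, 2*p*A + α = a ∧ α < 2*p :=
    ⟨a / (2*p), a % (2*p), Nat.div_add_mod a (2*p), Nat.mod_lt _ hq⟩
  have hadiv : a / (2*p) = A := by
    rw [← ha', Nat.mul_add_div hq, Nat.div_eq_of_lt hα, Nat.add_zero]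
  have hamod : a % (2*p) = α := by rw [← ha', Nat.mul_add_mod, Nat.mod_eq_of_lt hα]
  obtain ⟨g, hg, hgz⟩ := Gcomp p hp u hu (U : ℤ) β (by omega)
    (by rw [← hu']; push_cast; ring)
  rw [hg, hadiv, hamod]
  by_cases hcase : β + α < 2*p
  · have h1 : u + a = 2*p*(U+A) + (β+α) := by rw [← hu', ← ha']; ring
    have hdiv : (u + a)/(2*p) = U + A := by
      rw [h1, Nat.mul_add_div hq, Nat.div_eq_of_lt hcase, Nat.add_zero]
    have hmod : (u + a) % (2*p) = β + α := by
      rw [h1, Nat.mul_add_mod, Nat.mod_eq_of_lt hcase]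
    rw [hdiv, hmod]
    by_cases hβ0 : β = 0
    · rw [if_pos hβ0] at hgz
      rw [if_neg (by omega : ¬ α < β + α)]
      omega
    · rw [if_neg hβ0] at hgz
      rw [if_pos (by omega : α < β + α)]
      omega
  · push_neg at hcase
    obtain ⟨γ, hγ⟩ : ∃ γ, β + α = γ + 2*p := ⟨β + α - 2*p, by omega⟩
    have h1 : u + a = 2*p*(U+A+1) + γ := by
      have hz : ((u + a : ℕ) : ℤ) = ((2*p*(U+A+1) + γ : ℕ) : ℤ) := by
        have h2 : 2*(p:ℤ)*U + β = (u:ℤ) := by exact_mod_cast hu'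
        have h3 : 2*(p:ℤ)*A + α = (a:ℤ) := by exact_mod_cast ha'
        have h4 : (β:ℤ) + α = γ + 2*p := by exact_mod_cast hγ
        push_cast
        linarith
      exact_mod_cast hz
    have hγlt : γ < 2*p := by omega
    have hdiv : (u + a)/(2*p) = U + A + 1 := by
      rw [h1, Nat.mul_add_div hq, Nat.div_eq_of_lt hγlt, Nat.add_zero]
    have hmod : (u + a) % (2*p) = γ := by
      rw [h1, Nat.mul_add_mod, Nat.mod_eq_of_lt hγlt]
    rw [hdiv, hmod]
    have hβ1 : ¬ β = 0 := by omega
    rw [if_neg hβ1] at hgz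
    rw [if_neg (by omega : ¬ α < γ)]
    omega

private lemma side (p : ℕ) (hp : 1 ≤ p) (a : Fin p → ℕ)
    (hcond : ∀ j : ℕ, j < p →
      (Finset.univ.filter fun i : Fin p => a i % (2 * p) ≤ j).card ≤ j ∧
      (Finset.univ.filter fun i : Fin p => 2 * p - j ≤ a i % (2 * p)).card ≤ j)
    (n : ℕ) (hn : ∀ i, a i < n) :
    ∃ K : ℕ,
      (n % (2*p) = 0 → K = 0) ∧
      (1 ≤ n % (2*p) → K + 1 ≤ n % (2*p) ∧ n % (2*p) ≤ K + p) ∧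
      (∑ i, (n - a i + 2*p - 1)/(2*p)) + (∑ i, a i / (2*p))
        = p * (n / (2*p)) + K := by
  classical
  have hq : 0 < 2*p := by omega
  have hrlt : n % (2*p) < 2*p := Nat.mod_lt _ hq
  refine ⟨(Finset.univ.filter fun i : Fin p => a i % (2*p) < n % (2*p)).card, ?_, ?_, ?_⟩
  · intro h0
    rw [h0]
    simp
  · intro h1
    have hcard : (Finset.univ.filter fun i : Fin p => a i % (2*p) < n % (2*p)).card ≤ p := by
      refine le_trans (Finset.card_filter_le _ _) ?_
      simp
    constructor
    · by_cases hrp : n % (2*p) ≤ p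
      · have h := (hcond (n % (2*p) - 1) (by omega)).1
        have heq : (Finset.univ.filter fun i : Fin p => a i % (2*p) < n % (2*p))
            = (Finset.univ.filter fun i : Fin p => a i % (2 * p) ≤ n % (2*p) - 1) :=
          Finset.filter_congr (fun i _ => by omega)
        rw [heq]
        omega
      · omega
    · by_cases hrp : n % (2*p) ≤ p
      · omega
      · have hj := (hcond (2*p - n % (2*p)) (by omega)).2
        have heq2 : 2*p - (2*p - n % (2*p)) = n % (2*p) := by omega
        rw [heq2] at hj
        have hsplit := Finset.card_filter_add_card_filter_not
          (s := (Finset.univ : Finset (Fin p))) (fun i => a i % (2*p) < n % (2*p))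
        have heq3 : (Finset.univ.filter fun i : Fin p => ¬ a i % (2*p) < n % (2*p))
            = (Finset.univ.filter fun i : Fin p => n % (2*p) ≤ a i % (2 * p)) :=
          Finset.filter_congr (fun i _ => by omega)
        rw [heq3] at hsplit
        have hcardp : (Finset.univ : Finset (Fin p)).card = p := by simp
        omega
  · have hpt : ∀ i : Fin p, (n - a i + 2*p - 1)/(2*p) + a i/(2*p)
        = n/(2*p) + (if a i % (2*p) < n % (2*p) then 1 else 0) := by
      intro i
      have h := PT p (by omega) (n - a i) (a i) (by have := hn i; omega)
      rwa [Nat.sub_add_cancel (hn i).le] at h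
    have hsum : (∑ i, (n - a i + 2*p - 1)/(2*p)) + (∑ i, a i / (2*p))
        = ∑ i : Fin p, ((n - a i + 2*p - 1)/(2*p) + a i/(2*p)) :=
      Finset.sum_add_distrib.symm
    rw [hsum, Finset.sum_congr rfl (fun i _ => hpt i), Finset.sum_add_distrib]
    congr 1
    · simp [Finset.sum_const, Finset.card_univ, mul_comm]
    · exact_mod_cast Finset.sum_boole (fun i : Fin p => a i % (2*p) < n % (2*p)) Finset.univ

private lemma final (p : ℕ) (hp : 0 < p) (d : ℤ) (N r : ℕ) (hr : r < 2*p)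
    (hn1 : 1 ≤ 2*p*N + r) (x y fa fb : ℕ) (hx1 : 1 ≤ x) (hy1 : 1 ≤ y)
    (hfa0 : r = 0 → fa = 0) (hfa1 : 1 ≤ r → 1 ≤ fa ∧ fa ≤ p)
    (hfb0 : r = 0 → fb = 0) (hfb1 : 1 ≤ r → 1 ≤ fb ∧ fb ≤ p)
    (hx : (x:ℤ) = p*N + 2*p*d + fa) (hy : (y:ℤ) = p*N - 2*p*d - p + fb) :
    (x + 2*p - 1)/(2*p) + (y + 2*p - 1)/(2*p) = (2*p*N + r + 2*p - 1)/(2*p) := by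
  obtain ⟨gn, hgn, hgnz⟩ := Gcomp p hp (2*p*N + r) hn1 (N : ℤ) r (by omega)
    (by push_cast; ring)
  rw [hgn]
  rcases Nat.even_or_odd N with ⟨M, hM⟩ | ⟨M, hM⟩
  · -- N = M + M
    by_cases hr0 : r = 0
    · have hfa := hfa0 hr0
      have hfb := hfb0 hr0
      rw [if_pos hr0] at hgnz
      obtain ⟨gx, hgx, hgxz⟩ := Gcomp p hp x hx1 ((M:ℤ) + d) 0 (by omega)
        (by rw [hM] at hx; push_cast at hx ⊢; linarith [hx])
      obtain ⟨gy, hgy, hgyz⟩ := Gcomp p hp y hy1 ((M:ℤ) - d - 1) p (by omega)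
        (by rw [hM] at hy; push_cast at hy ⊢; linarith [hy])
      rw [hgx, hgy]
      rw [if_pos rfl] at hgxz
      rw [if_neg (by omega)] at hgyz
      omega
    · have hfa := hfa1 (by omega)
      have hfb := hfb1 (by omega)
      rw [if_neg hr0] at hgnz
      obtain ⟨gx, hgx, hgxz⟩ := Gcomp p hp x hx1 ((M:ℤ) + d) fa (by omega)
        (by rw [hM] at hx; push_cast at hx ⊢; linarith [hx])
      obtain ⟨gy, hgy, hgyz⟩ := Gcomp p hp y hy1 ((M:ℤ) - d - 1) (p + fb) (by omega)
        (by rw [hM] at hy; push_cast at hy ⊢; linarith [hy])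
      rw [hgx, hgy]
      rw [if_neg (by omega)] at hgxz
      rw [if_neg (by omega)] at hgyz
      omega
  · -- N = 2*M + 1
    by_cases hr0 : r = 0
    · have hfa := hfa0 hr0
      have hfb := hfb0 hr0
      rw [if_pos hr0] at hgnz
      obtain ⟨gx, hgx, hgxz⟩ := Gcomp p hp x hx1 ((M:ℤ) + d) p (by omega)
        (by rw [hM] at hx; push_cast at hx ⊢; linarith [hx])
      obtain ⟨gy, hgy, hgyz⟩ := Gcomp p hp y hy1 ((M:ℤ) - d) 0 (by omega)
        (by rw [hM] at hy; push_cast at hy ⊢; linarith [hy])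
      rw [hgx, hgy]
      rw [if_neg (by omega)] at hgxz
      rw [if_pos rfl] at hgyz
      omega
    · have hfa := hfa1 (by omega)
      have hfb := hfb1 (by omega)
      rw [if_neg hr0] at hgnz
      obtain ⟨gx, hgx, hgxz⟩ := Gcomp p hp x hx1 ((M:ℤ) + d) (p + fa) (by omega)
        (by rw [hM] at hx; push_cast at hx ⊢; linarith [hx])
      obtain ⟨gy, hgy, hgyz⟩ := Gcomp p hp y hy1 ((M:ℤ) - d) fb (by omega)
        (by rw [hM] at hy; push_cast at hy ⊢; linarith [hy])
      rw [hgx, hgy]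
      rw [if_neg (by omega)] at hgxz
      rw [if_neg (by omega)] at hgyz
      omega

private lemma assemble (p : ℕ) (hp : 1 ≤ p) (n N r Q : ℕ) (hrlt : r < 2*p)
    (hn2 : n = 2*Q + r) (hQ : p*N = Q) (hn1 : 1 ≤ n) (d : ℤ)
    (s Ea SA Ka : ℕ) (t Eb SB Kb : ℕ)
    (hSa : Ea + SA = Q + Ka) (hSb : Eb + SB = Q + Kb)
    (hKa0 : r = 0 → Ka = 0) (hKa1 : 1 ≤ r → Ka + 1 ≤ r ∧ r ≤ Ka + p)
    (hKb0 : r = 0 → Kb = 0) (hKb1 : 1 ≤ r → Kb + 1 ≤ r ∧ r ≤ Kb + p)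
    (hda : -(s:ℤ) + SA = 2*p*d) (hdb : -(t:ℤ) + SB = -(2*(p:ℤ)*d) - p)
    (hxpos : s + Ea + 1 ≤ n) (hypos : t + Eb + 1 ≤ n) :
    ((n - s - Ea) + 2*p - 1)/(2*p) + ((n - t - Eb) + 2*p - 1)/(2*p)
      = (n + 2*p - 1)/(2*p) := by
  have hKar : Ka ≤ r := by
    rcases Nat.eq_zero_or_pos r with h | h
    · have := hKa0 h; omega
    · have := hKa1 h; omega
  have hKbr : Kb ≤ r := by
    rcases Nat.eq_zero_or_pos r with h | h
    · have := hKb0 h; omega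
    · have := hKb1 h; omega
  set x := n - s - Ea with hxdef
  set y := n - t - Eb with hydef
  have hxc : (x:ℤ) = (n:ℤ) - s - Ea := by rw [hxdef]; omega
  have hyc : (y:ℤ) = (n:ℤ) - t - Eb := by rw [hydef]; omega
  have hn2z : (n:ℤ) = 2*Q + r := by exact_mod_cast hn2
  have hQz : (p:ℤ)*N = Q := by exact_mod_cast hQ
  have hSaz : (Ea:ℤ) + SA = Q + Ka := by exact_mod_cast hSa
  have hSbz : (Eb:ℤ) + SB = Q + Kb := by exact_mod_cast hSb
  have hfaz : ((r - Ka : ℕ):ℤ) = (r:ℤ) - Ka := by omega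
  have hfbz : ((r - Kb : ℕ):ℤ) = (r:ℤ) - Kb := by omega
  have hxz : (x:ℤ) = p*N + 2*p*d + ((r - Ka : ℕ):ℤ) := by
    rw [hfaz, hQz]; linarith [hxc, hn2z, hSaz, hda]
  have hyz : (y:ℤ) = p*N - 2*p*d - p + ((r - Kb : ℕ):ℤ) := by
    rw [hfbz, hQz]; linarith [hyc, hn2z, hSbz, hdb]
  have hnN : 2*p*N + r = n := by rw [hn2, ← hQ]; ring
  have hres := final p (by omega) d N r hrlt (by omega) x y (r - Ka) (r - Kb)
    (by omega) (by omega)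
    (fun h => by have := hKa0 h; omega)
    (fun h => by have h2 := hKa1 h; omega)
    (fun h => by have := hKb0 h; omega)
    (fun h => by have h2 := hKb1 h; omega)
    hxz hyz
  rw [hnN] at hres
  exact hres

private lemma key (p : ℕ) (hp : 1 ≤ p) (s t : ℕ) (a b : Fin p → ℕ)
    (hcond1 : ∀ j : ℕ, j < p →
      (Finset.univ.filter fun i : Fin p => a i % (2 * p) ≤ j).card ≤ j ∧
      (Finset.univ.filter fun i : Fin p => 2 * p - j ≤ a i % (2 * p)).card ≤ j)
    (hcond2 : ∀ j : ℕ, j < p →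
      (Finset.univ.filter fun i : Fin p => b i % (2 * p) ≤ j).card ≤ j ∧
      (Finset.univ.filter fun i : Fin p => 2 * p - j ≤ b i % (2 * p)).card ≤ j)
    (hcond3 : ∃ d : ℤ,
      (-(s : ℤ) + ∑ i, ((a i / (2 * p) : ℕ) : ℤ) = 2 * (p : ℤ) * d ∧
       -(t : ℤ) + ∑ i, ((b i / (2 * p) : ℕ) : ℤ) = -(2 * (p : ℤ) * d) - p) ∨
      (-(s : ℤ) + ∑ i, ((a i / (2 * p) : ℕ) : ℤ) = -(2 * (p : ℤ) * d) - p ∧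
       -(t : ℤ) + ∑ i, ((b i / (2 * p) : ℕ) : ℤ) = 2 * (p : ℤ) * d))
    (n : ℕ) (hna : ∀ i, a i < n) (hnb : ∀ i, b i < n)
    (hs : 2*p + 2*s < n) (ht : 2*p + 2*t < n) :
    s + (∑ i, (n - a i + 2*p - 1)/(2*p)) + 1 ≤ n ∧
    p ≤ (∑ i, (n - a i + 2*p - 1)/(2*p)) ∧
    t + (∑ i, (n - b i + 2*p - 1)/(2*p)) + 1 ≤ n ∧
    p ≤ (∑ i, (n - b i + 2*p - 1)/(2*p)) ∧
    ((n - s - ∑ i, (n - a i + 2*p - 1)/(2*p)) + 2*p - 1)/(2*p)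
      + ((n - t - ∑ i, (n - b i + 2*p - 1)/(2*p)) + 2*p - 1)/(2*p)
      = (n + 2*p - 1)/(2*p) := by
  have hq : 0 < 2*p := by omega
  obtain ⟨Ka, hKa0, hKa1, hSa⟩ := side p hp a hcond1 n hna
  obtain ⟨Kb, hKb0, hKb1, hSb⟩ := side p hp b hcond2 n hnb
  have hrlt : n % (2*p) < 2*p := Nat.mod_lt _ hq
  obtain ⟨Q, hQ⟩ : ∃ Q, p * (n / (2*p)) = Q := ⟨_, rfl⟩
  have hn2 : n = 2*Q + n % (2*p) := by
    rw [← hQ]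
    have := Nat.div_add_mod n (2*p)
    have h2 : 2*p*(n/(2*p)) = 2*(p*(n/(2*p))) := by ring
    omega
  rw [hQ] at hSa hSb
  -- lower bounds on sums
  have hEa1 : p ≤ ∑ i, (n - a i + 2*p - 1)/(2*p) := by
    have h1 : ∀ i : Fin p, 1 ≤ (n - a i + 2*p - 1)/(2*p) := by
      intro i
      have hi := hna i
      have : 2*p ≤ n - a i + 2*p - 1 := by omega
      exact (Nat.one_le_div_iff hq).mpr this
    calc p = ∑ _i : Fin p, 1 := by simp
    _ ≤ _ := Finset.sum_le_sum (fun i _ => h1 i)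
  have hEb1 : p ≤ ∑ i, (n - b i + 2*p - 1)/(2*p) := by
    have h1 : ∀ i : Fin p, 1 ≤ (n - b i + 2*p - 1)/(2*p) := by
      intro i
      have hi := hnb i
      have : 2*p ≤ n - b i + 2*p - 1 := by omega
      exact (Nat.one_le_div_iff hq).mpr this
    calc p = ∑ _i : Fin p, 1 := by simp
    _ ≤ _ := Finset.sum_le_sum (fun i _ => h1 i)
  -- positivity
  have hxpos : s + (∑ i, (n - a i + 2*p - 1)/(2*p)) + 1 ≤ n := by
    rcases Nat.eq_zero_or_pos (n % (2*p)) with h | h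
    · have := hKa0 h; omega
    · have := hKa1 h; omega
  have hypos : t + (∑ i, (n - b i + 2*p - 1)/(2*p)) + 1 ≤ n := by
    rcases Nat.eq_zero_or_pos (n % (2*p)) with h | h
    · have := hKb0 h; omega
    · have := hKb1 h; omega
  refine ⟨hxpos, hEa1, hypos, hEb1, ?_⟩
  -- condition 3
  have hSAz : (∑ i, ((a i / (2 * p) : ℕ) : ℤ)) = ((∑ i, a i / (2*p) : ℕ) : ℤ) := by
    push_cast; rfl
  have hSBz : (∑ i, ((b i / (2 * p) : ℕ) : ℤ)) = ((∑ i, b i / (2*p) : ℕ) : ℤ) := by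
    push_cast; rfl
  obtain ⟨d, hd | hd⟩ := hcond3
  · rw [hSAz] at hd
    rw [hSBz] at hd
    exact assemble p hp n (n/(2*p)) (n % (2*p)) Q hrlt hn2 hQ (by omega) d
      s _ _ Ka t _ _ Kb hSa hSb hKa0 hKa1 hKb0 hKb1 hd.1 hd.2 hxpos hypos
  · rw [hSAz] at hd
    rw [hSBz] at hd
    have hres := assemble p hp n (n/(2*p)) (n % (2*p)) Q hrlt hn2 hQ (by omega) d
      t _ _ Kb s _ _ Ka hSb hSa hKb0 hKb1 hKa0 hKa1 hd.2 hd.1 hypos hxpos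
    exact (Nat.add_comm _ _).trans hres

/-- If the parameters of the 2-ary, order-`p` recurrence satisfy the residue
conditions (1)–(2) and the quotient-sum condition (3), and `H` is computed by
the recursion from initial conditions `H(v) = ⌈v/(2p)⌉` for
`1 ≤ v ≤ c = max{2p+2s, 2p+2t, aᵢ, bᵢ}`, then the recursion is well defined
for all `n > c` (all arguments lie in `[1, n-1]`) and its unique solution is
`H(n) = ⌈n/(2p)⌉` for all `n ≥ 1`. -/
theorem ceiling_is_generated_solution (p : ℕ) (hp : 1 ≤ p)
    (s t : ℕ) (a b : Fin p → ℕ) (ha : ∀ i, 1 ≤ a i) (hb : ∀ i, 1 ≤ b i)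
    (hcond1 : ∀ j : ℕ, j < p →
      (Finset.univ.filter fun i : Fin p => a i % (2 * p) ≤ j).card ≤ j ∧
      (Finset.univ.filter fun i : Fin p => 2 * p - j ≤ a i % (2 * p)).card ≤ j)
    (hcond2 : ∀ j : ℕ, j < p →
      (Finset.univ.filter fun i : Fin p => b i % (2 * p) ≤ j).card ≤ j ∧
      (Finset.univ.filter fun i : Fin p => 2 * p - j ≤ b i % (2 * p)).card ≤ j)
    (hcond3 : ∃ d : ℤ,
      (-(s : ℤ) + ∑ i, ((a i / (2 * p) : ℕ) : ℤ) = 2 * (p : ℤ) * d ∧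
       -(t : ℤ) + ∑ i, ((b i / (2 * p) : ℕ) : ℤ) = -(2 * (p : ℤ) * d) - p) ∨
      (-(s : ℤ) + ∑ i, ((a i / (2 * p) : ℕ) : ℤ) = -(2 * (p : ℤ) * d) - p ∧
       -(t : ℤ) + ∑ i, ((b i / (2 * p) : ℕ) : ℤ) = 2 * (p : ℤ) * d))
    (c : ℕ)
    (hc : c = max (max (2 * p + 2 * s) (2 * p + 2 * t))
                  (Finset.univ.sup fun i : Fin p => max (a i) (b i)))
    (H : ℕ → ℕ)
    (hinit : ∀ v, 1 ≤ v → v ≤ c → H v = (v + 2 * p - 1) / (2 * p))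
    (hrec : ∀ n, c < n →
      H n = H (n - s - ∑ i, H (n - a i)) + H (n - t - ∑ i, H (n - b i))) :
    (∀ n, c < n →
      (∀ i : Fin p, a i < n ∧ b i < n) ∧
      (1 ≤ n - s - ∑ i, H (n - a i) ∧ n - s - ∑ i, H (n - a i) ≤ n - 1) ∧
      (1 ≤ n - t - ∑ i, H (n - b i) ∧ n - t - ∑ i, H (n - b i) ≤ n - 1)) ∧
    (∀ n, 1 ≤ n → H n = (n + 2 * p - 1) / (2 * p)) := by
  have hca : ∀ i, a i ≤ c := by
    intro i
    rw [hc]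
    have h1 : a i ≤ (Finset.univ.sup fun i : Fin p => max (a i) (b i)) :=
      le_trans (le_max_left _ _)
        (Finset.le_sup (f := fun i : Fin p => max (a i) (b i)) (Finset.mem_univ i))
    exact le_trans h1 (le_max_right _ _)
  have hcb : ∀ i, b i ≤ c := by
    intro i
    rw [hc]
    have h1 : b i ≤ (Finset.univ.sup fun i : Fin p => max (a i) (b i)) :=
      le_trans (le_max_right _ _)
        (Finset.le_sup (f := fun i : Fin p => max (a i) (b i)) (Finset.mem_univ i))
    exact le_trans h1 (le_max_right _ _)
  have hcs : 2*p + 2*s ≤ c := by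
    rw [hc]; exact le_trans (le_max_left _ _) (le_max_left _ _)
  have hct : 2*p + 2*t ≤ c := by
    rw [hc]; exact le_trans (le_max_right _ _) (le_max_left _ _)
  have main : ∀ n, 1 ≤ n → H n = (n + 2 * p - 1) / (2 * p) := by
    intro n
    induction n using Nat.strong_induction_on with
    | _ n IH =>
      intro hn1
      by_cases hcn : n ≤ c
      · exact hinit n hn1 hcn
      · push_neg at hcn
        have hna : ∀ i, a i < n := fun i => lt_of_le_of_lt (hca i) hcn
        have hnb : ∀ i, b i < n := fun i => lt_of_le_of_lt (hcb i) hcn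
        have hsa : ∑ i, H (n - a i) = ∑ i, (n - a i + 2*p - 1)/(2*p) :=
          Finset.sum_congr rfl fun i _ =>
            IH (n - a i) (by have := ha i; have := hna i; omega)
              (by have := hna i; omega)
        have hsb : ∑ i, H (n - b i) = ∑ i, (n - b i + 2*p - 1)/(2*p) :=
          Finset.sum_congr rfl fun i _ =>
            IH (n - b i) (by have := hb i; have := hnb i; omega)
              (by have := hnb i; omega)
        obtain ⟨h1, h2, h3, h4, h5⟩ :=
          key p hp s t a b hcond1 hcond2 hcond3 n hna hnb (by omega) (by omega)
        rw [hrec n hcn, hsa, hsb,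
          IH (n - s - ∑ i, (n - a i + 2*p - 1)/(2*p)) (by omega) (by omega),
          IH (n - t - ∑ i, (n - b i + 2*p - 1)/(2*p)) (by omega) (by omega)]
        exact h5
  refine ⟨?_, main⟩
  intro n hcn
  have hna : ∀ i, a i < n := fun i => lt_of_le_of_lt (hca i) hcn
  have hnb : ∀ i, b i < n := fun i => lt_of_le_of_lt (hcb i) hcn
  have hsa : ∑ i, H (n - a i) = ∑ i, (n - a i + 2*p - 1)/(2*p) :=
    Finset.sum_congr rfl fun i _ => main (n - a i) (by have := hna i; omega)
  have hsb : ∑ i, H (n - b i) = ∑ i, (n - b i + 2*p - 1)/(2*p) :=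
    Finset.sum_congr rfl fun i _ => main (n - b i) (by have := hnb i; omega)
  obtain ⟨h1, h2, h3, h4, h5⟩ :=
    key p hp s t a b hcond1 hcond2 hcond3 n hna hnb (by omega) (by omega)
  refine ⟨fun i => ⟨hna i, hnb i⟩, ⟨?_, ?_⟩, ⟨?_, ?_⟩⟩
  · rw [hsa]; omega
  · rw [hsa]; omega
  · rw [hsb]; omega
  · rw [hsb]; omega
end

section
/- Let H(n) = H(n - s - H(n-a) - H(n-b)) + H(n - t - H(n-c) - H(n-d)) be an order-2 nested recurrence with integer parameters. The sequence ⌈n/4⌉ formally satisfies this recurrence for all integers n if and only if there exists an odd integer κ such that a + b ∈ {4(s+κ)-1, 4(s+κ), 4(s+κ)+1}, c + d ∈ {4(t-κ)-1, 4(t-κ), 4(t-κ)+1}, and none of a, b, c, d is divisible by 4. -/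
private lemma ceil4 (m : ℤ) : ⌈(m:ℚ)/4⌉ = (m+3)/4 := by
  rw [show ((m:ℚ)/4) = -(((-m:ℤ):ℚ)/((4:ℕ):ℚ)) by push_cast; ring, Int.ceil_neg,
    Rat.floor_intCast_div_natCast]
  omega

set_option maxHeartbeats 8000000 in
private lemma fkey (ra rb rc rd P Q : ℤ)
    (hra1 : 1 ≤ ra) (hra2 : ra ≤ 3) (hrb1 : 1 ≤ rb) (hrb2 : rb ≤ 3)
    (hrc1 : 1 ≤ rc) (hrc2 : rc ≤ 3) (hrd1 : 1 ≤ rd) (hrd2 : rd ≤ 3)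
    (h0 : (P + 0 - ((0-ra+3)/4) - ((0-rb+3)/4) + 3)/4 + (Q + 0 - ((0-rc+3)/4) - ((0-rd+3)/4) + 3)/4 = 0)
    (h1 : (P + 1 - ((1-ra+3)/4) - ((1-rb+3)/4) + 3)/4 + (Q + 1 - ((1-rc+3)/4) - ((1-rd+3)/4) + 3)/4 = 1)
    (h2 : (P + 2 - ((2-ra+3)/4) - ((2-rb+3)/4) + 3)/4 + (Q + 2 - ((2-rc+3)/4) - ((2-rd+3)/4) + 3)/4 = 1)
    (h3 : (P + 3 - ((3-ra+3)/4) - ((3-rb+3)/4) + 3)/4 + (Q + 3 - ((3-rc+3)/4) - ((3-rd+3)/4) + 3)/4 = 1)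
    (h4 : (P + 4 - ((4-ra+3)/4) - ((4-rb+3)/4) + 3)/4 + (Q + 4 - ((4-rc+3)/4) - ((4-rd+3)/4) + 3)/4 = 1)
    (h5 : (P + 5 - ((5-ra+3)/4) - ((5-rb+3)/4) + 3)/4 + (Q + 5 - ((5-rc+3)/4) - ((5-rd+3)/4) + 3)/4 = 2)
    (h6 : (P + 6 - ((6-ra+3)/4) - ((6-rb+3)/4) + 3)/4 + (Q + 6 - ((6-rc+3)/4) - ((6-rd+3)/4) + 3)/4 = 2)
    (h7 : (P + 7 - ((7-ra+3)/4) - ((7-rb+3)/4) + 3)/4 + (Q + 7 - ((7-rc+3)/4) - ((7-rd+3)/4) + 3)/4 = 2)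
    :
    ((ra+rb+4*P) % 8 = 3 ∨ (ra+rb+4*P) % 8 = 4 ∨ (ra+rb+4*P) % 8 = 5) ∧
    ((rc+rd+4*Q) % 8 = 3 ∨ (rc+rd+4*Q) % 8 = 4 ∨ (rc+rd+4*Q) % 8 = 5) ∧
    (-2 ≤ ra+rb+rc+rd+4*P+4*Q ∧ ra+rb+rc+rd+4*P+4*Q ≤ 2) := by
  interval_cases ra <;> interval_cases rb <;> interval_cases rc <;> interval_cases rd <;> omega

set_option maxHeartbeats 8000000 in
private lemma bkey (ra rb rc rd P Q r : ℤ)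
    (hra1 : 1 ≤ ra) (hra2 : ra ≤ 3) (hrb1 : 1 ≤ rb) (hrb2 : rb ≤ 3)
    (hrc1 : 1 ≤ rc) (hrc2 : rc ≤ 3) (hrd1 : 1 ≤ rd) (hrd2 : rd ≤ 3)
    (hr1 : 0 ≤ r) (hr2 : r < 8)
    (hu : (ra+rb+4*P) % 8 = 3 ∨ (ra+rb+4*P) % 8 = 4 ∨ (ra+rb+4*P) % 8 = 5)
    (hv : (rc+rd+4*Q) % 8 = 3 ∨ (rc+rd+4*Q) % 8 = 4 ∨ (rc+rd+4*Q) % 8 = 5)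
    (hs1 : -2 ≤ ra+rb+rc+rd+4*P+4*Q) (hs2 : ra+rb+rc+rd+4*P+4*Q ≤ 2) :
    (P + r - ((r-ra+3)/4) - ((r-rb+3)/4) + 3)/4 + (Q + r - ((r-rc+3)/4) - ((r-rd+3)/4) + 3)/4 = (r+3)/4 := by
  interval_cases r <;> interval_cases ra <;> interval_cases rb <;> interval_cases rc <;> interval_cases rd <;> omega

/-- Order-2 specialization of the ceiling characterization: `⌈n/4⌉` formally
satisfies `H(n) = H(n-s-H(n-a)-H(n-b)) + H(n-t-H(n-c)-H(n-d))` for all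
integers `n` if and only if there is an odd integer `κ` with
`a+b ∈ {4(s+κ)-1, 4(s+κ), 4(s+κ)+1}`, `c+d ∈ {4(t-κ)-1, 4(t-κ), 4(t-κ)+1}`,
and none of `a, b, c, d` divisible by 4. -/
theorem ceiling_quarter_characterization (s t a b c d : ℤ) :
    (∀ n : ℤ,
      ⌈(n : ℚ) / 4⌉ =
        ⌈((n - s - ⌈((n - a : ℤ) : ℚ) / 4⌉ - ⌈((n - b : ℤ) : ℚ) / 4⌉ : ℤ) : ℚ) / 4⌉ +
        ⌈((n - t - ⌈((n - c : ℤ) : ℚ) / 4⌉ - ⌈((n - d : ℤ) : ℚ) / 4⌉ : ℤ) : ℚ) / 4⌉)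
    ↔
    (∃ κ : ℤ, Odd κ ∧
      (a + b = 4 * (s + κ) - 1 ∨ a + b = 4 * (s + κ) ∨ a + b = 4 * (s + κ) + 1) ∧
      (c + d = 4 * (t - κ) - 1 ∨ c + d = 4 * (t - κ) ∨ c + d = 4 * (t - κ) + 1) ∧
      ¬ (4 ∣ a) ∧ ¬ (4 ∣ b) ∧ ¬ (4 ∣ c) ∧ ¬ (4 ∣ d)) := by
  simp only [ceil4]
  constructor
  · intro h
    have hnd : ¬(4 ∣ a) ∧ ¬(4 ∣ b) ∧ ¬(4 ∣ c) ∧ ¬(4 ∣ d) := by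
      have e0 := h 0; have e1 := h 1; have e4 := h 4; have e5 := h 5
      clear h
      omega
    obtain ⟨ha, hb, hc, hd⟩ := hnd
    obtain ⟨ra, hra1, hra2, sa, rfl⟩ : ∃ r, 1 ≤ r ∧ r ≤ 3 ∧ ∃ q, a = r - 4*q :=
      ⟨a % 4, by omega, by omega, (a % 4 - a)/4, by omega⟩
    obtain ⟨rb, hrb1, hrb2, sb, rfl⟩ : ∃ r, 1 ≤ r ∧ r ≤ 3 ∧ ∃ q, b = r - 4*q :=
      ⟨b % 4, by omega, by omega, (b % 4 - b)/4, by omega⟩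
    obtain ⟨rc, hrc1, hrc2, sc, rfl⟩ : ∃ r, 1 ≤ r ∧ r ≤ 3 ∧ ∃ q, c = r - 4*q :=
      ⟨c % 4, by omega, by omega, (c % 4 - c)/4, by omega⟩
    obtain ⟨rd, hrd1, hrd2, sd, rfl⟩ : ∃ r, 1 ≤ r ∧ r ≤ 3 ∧ ∃ q, d = r - 4*q :=
      ⟨d % 4, by omega, by omega, (d % 4 - d)/4, by omega⟩
    obtain ⟨hu, hv, hs1, hs2⟩ :=
      fkey ra rb rc rd (-s-sa-sb) (-t-sc-sd) hra1 hra2 hrb1 hrb2 hrc1 hrc2 hrd1 hrd2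
        (by have := h 0; clear h; omega)
        (by have := h 1; clear h; omega)
        (by have := h 2; clear h; omega)
        (by have := h 3; clear h; omega)
        (by have := h 4; clear h; omega)
        (by have := h 5; clear h; omega)
        (by have := h 6; clear h; omega)
        (by have := h 7; clear h; omega)
    clear h ha hb hc hd
    refine ⟨(ra + rb + 4*(-s-sa-sb) + 1)/4,
      ⟨(ra + rb + 4*(-s-sa-sb) - 3)/8, by omega⟩, by omega, by omega,
      by omega, by omega, by omega, by omega⟩
  · rintro ⟨κ, ⟨m, rfl⟩, hab, hcd, ha, hb, hc, hd⟩ n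
    obtain ⟨ra, hra1, hra2, sa, rfl⟩ : ∃ r, 1 ≤ r ∧ r ≤ 3 ∧ ∃ q, a = r - 4*q :=
      ⟨a % 4, by omega, by omega, (a % 4 - a)/4, by omega⟩
    obtain ⟨rb, hrb1, hrb2, sb, rfl⟩ : ∃ r, 1 ≤ r ∧ r ≤ 3 ∧ ∃ q, b = r - 4*q :=
      ⟨b % 4, by omega, by omega, (b % 4 - b)/4, by omega⟩
    obtain ⟨rc, hrc1, hrc2, sc, rfl⟩ : ∃ r, 1 ≤ r ∧ r ≤ 3 ∧ ∃ q, c = r - 4*q :=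
      ⟨c % 4, by omega, by omega, (c % 4 - c)/4, by omega⟩
    obtain ⟨rd, hrd1, hrd2, sd, rfl⟩ : ∃ r, 1 ≤ r ∧ r ≤ 3 ∧ ∃ q, d = r - 4*q :=
      ⟨d % 4, by omega, by omega, (d % 4 - d)/4, by omega⟩
    have hk := bkey ra rb rc rd (-s-sa-sb) (-t-sc-sd) (n % 8)
      hra1 hra2 hrb1 hrb2 hrc1 hrc2 hrd1 hrd2 (by omega) (by omega)
      (by omega) (by omega) (by omega) (by omega)
    omega
end
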